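/- arXiv:2503.06022 — 11 statements merged into one kernel-verified Lean document; each statement's English description precedes it below -/
import Mathlib

section
/- If f, g : ℝ → ℝ are nonconstant polynomial functions and φ : ℝ → ℝ is a homeomorphism with g ∘ φ = f, then φ is semialgebraic. -/
/-! The graph of `φ` lies on the algebraic curve `q(y) = p(t)`. If `(t, y)` is a point of that
curve with `y ≠ φ t`, then `q y = q (φ t)`, so by Rolle's theorem a critical point `c` of `q`
lies strictly between `y` and `φ t`. Hence the graph is cut out of the curve by the finitely
many conditions "`y` and `φ t` lie on the same side of `c`". As `φ` is monotone,
`{t | c ≤ φ t}` is a closed half-line, so each of these conditions is semialgebraic. -/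

/-- Semialgebraic subsets of ℝⁿ: the smallest collection containing zero sets and
positivity sets of polynomials and closed under union, intersection, complement. -/
inductive IsSemialgebraicSet {n : ℕ} : Set (Fin n → ℝ) → Prop
  | zero_set (p : MvPolynomial (Fin n) ℝ) :
      IsSemialgebraicSet {x | MvPolynomial.eval x p = 0}
  | pos_set (p : MvPolynomial (Fin n) ℝ) :
      IsSemialgebraicSet {x | 0 < MvPolynomial.eval x p}
  | union {s t : Set (Fin n → ℝ)} :
      IsSemialgebraicSet s → IsSemialgebraicSet t → IsSemialgebraicSet (s ∪ t)
  | inter {s t : Set (Fin n → ℝ)} :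
      IsSemialgebraicSet s → IsSemialgebraicSet t → IsSemialgebraicSet (s ∩ t)
  | compl {s : Set (Fin n → ℝ)} :
      IsSemialgebraicSet s → IsSemialgebraicSet sᶜ

open Polynomial

theorem Polynomial.eval_aeval_X {n : ℕ} (r : ℝ[X]) (i : Fin n) (x : Fin n → ℝ) :
    MvPolynomial.eval x (aeval (MvPolynomial.X i) r) = r.eval (x i) := by
  change MvPolynomial.aeval x (aeval (MvPolynomial.X i) r) = _
  rw [← aeval_algHom_apply]
  simp

theorem Polynomial.eq_of_eval_eq_of_forall_mem_roots_derivative {q : ℝ[X]}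
    (hq : derivative q ≠ 0) {y z : ℝ} (h : q.eval y = q.eval z)
    (hside : ∀ c ∈ (derivative q).roots, c ≤ y ↔ c ≤ z) : y = z := by
  wlog hyz : y < z generalizing y z
  · rcases (not_lt.1 hyz).eq_or_lt with rfl | hzy
    · rfl
    · exact (this h.symm (fun c hc => (hside c hc).symm) hzy).symm
  obtain ⟨c, hc, hc'⟩ := exists_deriv_eq_zero hyz q.continuousOn h
  have hroot : c ∈ (derivative q).roots := by
    rwa [mem_roots hq, IsRoot, ← Polynomial.deriv]
  exact absurd ((hside c hroot).2 hc.2.le) (not_le.2 hc.1)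

namespace IsSemialgebraicSet

variable {n : ℕ}

theorem univ : IsSemialgebraicSet (Set.univ : Set (Fin n → ℝ)) := by
  simpa using zero_set (0 : MvPolynomial (Fin n) ℝ)

theorem biInter {ι : Type*} (s : Finset ι) {f : ι → Set (Fin n → ℝ)}
    (hf : ∀ i ∈ s, IsSemialgebraicSet (f i)) : IsSemialgebraicSet (⋂ i ∈ s, f i) := by
  classical
  induction s using Finset.induction_on with
  | empty => simpa using univ
  | insert i s _ ih =>
    rw [Finset.set_biInter_insert]
    exact (hf i (s.mem_insert_self i)).inter (ih fun j hj => hf j (Finset.mem_insert_of_mem hj))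

theorem setOf_iff {P Q : (Fin n → ℝ) → Prop} (hP : IsSemialgebraicSet {x | P x})
    (hQ : IsSemialgebraicSet {x | Q x}) : IsSemialgebraicSet {x | P x ↔ Q x} := by
  convert (hP.inter hQ).union (hP.compl.inter hQ.compl) using 1
  ext x
  simp only [Set.mem_ofPred_eq, Set.mem_union, Set.mem_inter_iff, Set.mem_compl_iff]
  tauto

theorem setOf_eval_eq (p q : MvPolynomial (Fin n) ℝ) :
    IsSemialgebraicSet {x | MvPolynomial.eval x p = MvPolynomial.eval x q} := by
  simpa [sub_eq_zero] using zero_set (p - q)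

theorem setOf_eval_le (p q : MvPolynomial (Fin n) ℝ) :
    IsSemialgebraicSet {x | MvPolynomial.eval x p ≤ MvPolynomial.eval x q} := by
  convert (zero_set (q - p)).union (pos_set (q - p)) using 1
  ext x
  rw [Set.mem_union, Set.mem_ofPred_eq, Set.mem_ofPred_eq, Set.mem_ofPred_eq, map_sub, sub_eq_zero,
    sub_pos, le_iff_eq_or_lt, eq_comm]

theorem setOf_le_apply (c : ℝ) (i : Fin n) : IsSemialgebraicSet {x : Fin n → ℝ | c ≤ x i} := by
  simpa using setOf_eval_le (MvPolynomial.C c) (MvPolynomial.X i)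

theorem setOf_apply_le (c : ℝ) (i : Fin n) : IsSemialgebraicSet {x : Fin n → ℝ | x i ≤ c} := by
  simpa using setOf_eval_le (MvPolynomial.X i) (MvPolynomial.C c)

theorem setOf_le_homeomorph_apply (φ : ℝ ≃ₜ ℝ) (c : ℝ) (i : Fin n) :
    IsSemialgebraicSet {x : Fin n → ℝ | c ≤ φ (x i)} := by
  rcases φ.continuous.strictMono_of_inj φ.injective with hφ | hφ
  · convert setOf_le_apply (φ.symm c) i using 3
    rw [← hφ.le_iff_le (a := φ.symm c), φ.apply_symm_apply]
  · convert setOf_apply_le (φ.symm c) i using 3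
    rw [← hφ.le_iff_ge (a := φ.symm c), φ.apply_symm_apply]

theorem setOf_eval_apply_eq (p q : ℝ[X]) (i j : Fin n) :
    IsSemialgebraicSet {x : Fin n → ℝ | q.eval (x i) = p.eval (x j)} := by
  simpa only [eval_aeval_X] using
    setOf_eval_eq (aeval (MvPolynomial.X i) q) (aeval (MvPolynomial.X j) p)

end IsSemialgebraicSet

theorem setOf_eq_apply_eq_of_eval_comp {p q : ℝ[X]} (hq : derivative q ≠ 0) {φ : ℝ → ℝ}
    (h : ∀ t, q.eval (φ t) = p.eval t) :
    {x : Fin 2 → ℝ | x 1 = φ (x 0)} = {x | q.eval (x 1) = p.eval (x 0)} ∩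
      ⋂ c ∈ (derivative q).roots.toFinset, {x | c ≤ x 1 ↔ c ≤ φ (x 0)} := by
  ext x
  simp only [Set.mem_ofPred_eq, Set.mem_inter_iff, Set.mem_iInter, Multiset.mem_toFinset]
  constructor
  · intro hx
    exact ⟨by rw [hx, h], fun c _ => by rw [hx]⟩
  · rintro ⟨hcurve, hside⟩
    exact eq_of_eval_eq_of_forall_mem_roots_derivative hq (hcurve.trans (h _).symm) hside

theorem stmt0_general (p q : Polynomial ℝ) (hq : 0 < q.natDegree)
    (φ : ℝ ≃ₜ ℝ) (h : ∀ t : ℝ, q.eval (φ t) = p.eval t) :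
    IsSemialgebraicSet {x : Fin 2 → ℝ | x 1 = φ (x 0)} := by
  have hq' : derivative q ≠ 0 := mt derivative_eq_zero.1 hq.ne'
  rw [setOf_eq_apply_eq_of_eval_comp hq' h]
  exact (IsSemialgebraicSet.setOf_eval_apply_eq p q 1 0).inter <|
    IsSemialgebraicSet.biInter _ fun c _ =>
      (IsSemialgebraicSet.setOf_le_apply c 1).setOf_iff
        (IsSemialgebraicSet.setOf_le_homeomorph_apply φ c 0)

/-- If f, g are nonconstant polynomial functions and φ is a homeomorphism of ℝ with
g ∘ φ = f, then φ is semialgebraic (its graph is a semialgebraic subset of ℝ²). -/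
theorem stmt0 (p q : Polynomial ℝ) (hp : 0 < p.natDegree) (hq : 0 < q.natDegree)
    (φ : ℝ ≃ₜ ℝ) (h : ∀ t : ℝ, q.eval (φ t) = p.eval t) :
    IsSemialgebraicSet {x : Fin 2 → ℝ | x 1 = φ (x 0)} :=
  stmt0_general p q hq φ h
end

section
/- If f, g : ℝ → ℝ are nonconstant polynomial functions and there exist a bi-Lipschitz homeomorphism φ : ℝ → ℝ and a constant c > 0 with g ∘ φ = c·f, then deg f = deg g. -/
/-!
A nonzero polynomial `P` grows like `|x| ^ deg P` at infinity, and a bi-Lipschitz map satisfies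
`|φ t| ≍ |t|` there. Hence both sides of `q ∘ φ = c • p` are `Θ(|t| ^ deg q)` and `Θ(|t| ^ deg p)`
at infinity, which forces the degrees to agree.
-/

/-- A bi-Lipschitz homeomorphism of ℝ: a bijection with two-sided Lipschitz bounds. -/
def BiLipschitz (φ : ℝ → ℝ) : Prop :=
  Function.Bijective φ ∧ ∃ A B : ℝ, 0 < A ∧ 0 < B ∧
    ∀ s t : ℝ, A * |s - t| ≤ |φ s - φ t| ∧ |φ s - φ t| ≤ B * |s - t|

open Asymptotics Bornology Filter Polynomial

section LipschitzGrowth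

variable {E F : Type*} [NormedAddCommGroup E] [NormedAddCommGroup F] {K : NNReal} {f : E → F}

theorem LipschitzWith.isBigO_id_cobounded (hf : LipschitzWith K f) : f =O[cobounded E] id := by
  have hsub : (fun x => f x - f 0) =O[cobounded E] id :=
    isBigO_of_le' _ fun x => by simpa using hf.norm_sub_le x 0
  simpa using hsub.add (isLittleO_const_id_cobounded (f 0)).isBigO

theorem AntilipschitzWith.isBigO_id_cobounded (hf : AntilipschitzWith K f) :
    id =O[cobounded E] f := by
  have hsub : id =O[cobounded E] fun x => f x - f 0 :=
    isBigO_of_le' _ fun x => by simpa [neg_add_eq_sub] using hf.le_mul_norm_sub 0 x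
  exact hsub.trans <| (isBigO_refl f _).sub
    ((isLittleO_const_id_cobounded (f 0)).comp_tendsto hf.tendsto_cobounded).isBigO

end LipschitzGrowth

theorem Asymptotics.IsTheta.comp_tendsto {α β E F : Type*} [Norm E] [Norm F] {f : α → E}
    {g : α → F} {l : Filter α} (h : f =Θ[l] g) {k : β → α} {l' : Filter β}
    (hk : Tendsto k l' l) : (f ∘ k) =Θ[l'] (g ∘ k) :=
  ⟨h.1.comp_tendsto hk, h.2.comp_tendsto hk⟩

namespace BiLipschitz

variable {φ : ℝ → ℝ}

theorem lipschitzWith (hφ : BiLipschitz φ) : ∃ K, LipschitzWith K φ := by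
  obtain ⟨-, A, B, -, hB, hAB⟩ := hφ
  exact ⟨⟨B, hB.le⟩, .of_dist_le_mul fun s t => (hAB s t).2⟩

theorem antilipschitzWith (hφ : BiLipschitz φ) : ∃ K, AntilipschitzWith K φ := by
  obtain ⟨-, A, B, hA, -, hAB⟩ := hφ
  refine ⟨⟨A⁻¹, by positivity⟩, .of_le_mul_dist fun s t => ?_⟩
  change dist s t ≤ A⁻¹ * dist (φ s) (φ t)
  rw [Real.dist_eq, Real.dist_eq, ← div_eq_inv_mul, le_div_iff₀' hA]
  exact (hAB s t).1

end BiLipschitz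

section PolynomialGrowth

variable {𝕜 : Type*} [NontriviallyNormedField 𝕜]

theorem Polynomial.isTheta_cobounded_pow_natDegree {P : 𝕜[X]} (hP : P ≠ 0) :
    P.eval =Θ[cobounded 𝕜] (· ^ P.natDegree) :=
  isEquivalent_cobounded_leading_monomial.isTheta.trans
    ((isTheta_const_mul_left (leadingCoeff_ne_zero.mpr hP)).mpr (isTheta_refl _ _))

theorem Asymptotics.isTheta_pow_pow_cobounded_iff {m n : ℕ} :
    (· ^ m) =Θ[cobounded 𝕜] (· ^ n) ↔ m = n := by
  refine ⟨fun h => ?_, fun h => h ▸ isTheta_refl _ _⟩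
  have hne (k : ℕ) : ∃ᶠ x in cobounded 𝕜, x ^ k ≠ 0 :=
    ((eventually_ne_cobounded 0).mono fun _ hx => pow_ne_zero k hx).frequently
  rcases lt_trichotomy m n with hmn | hmn | hmn
  · exact absurd h.2 ((isLittleO_pow_pow_cobounded_of_lt hmn).not_isBigO (hne m))
  · exact hmn
  · exact absurd h.1 ((isLittleO_pow_pow_cobounded_of_lt hmn).not_isBigO (hne n))

end PolynomialGrowth

/-- If f, g are nonconstant polynomial functions and g ∘ φ = c·f for some bi-Lipschitz
homeomorphism φ and constant c > 0, then deg f = deg g. -/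
theorem stmt1 (p q : Polynomial ℝ) (hp : 0 < p.natDegree) (hq : 0 < q.natDegree)
    (φ : ℝ → ℝ) (hφ : BiLipschitz φ) (c : ℝ) (hc : 0 < c)
    (h : ∀ t : ℝ, q.eval (φ t) = c * p.eval t) :
    p.natDegree = q.natDegree := by
  obtain ⟨K, hK⟩ := hφ.lipschitzWith
  obtain ⟨K', hK'⟩ := hφ.antilipschitzWith
  have hφ_id : φ =Θ[cobounded ℝ] id := ⟨hK.isBigO_id_cobounded, hK'.isBigO_id_cobounded⟩
  have hq_eval := isTheta_cobounded_pow_natDegree (ne_zero_of_natDegree_gt hq)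
  have hqφ : (fun t => q.eval (φ t)) =Θ[cobounded ℝ] (· ^ q.natDegree) :=
    (hq_eval.comp_tendsto hK'.tendsto_cobounded).trans (hφ_id.pow _)
  have hcp : (fun t => q.eval (φ t)) =Θ[cobounded ℝ] (· ^ p.natDegree) := by
    simpa only [h] using (isTheta_const_mul_left hc.ne').mpr
      (isTheta_cobounded_pow_natDegree (ne_zero_of_natDegree_gt hp))
  exact isTheta_pow_pow_cobounded_iff.mp (hcp.symm.trans hqφ)
end

section
/- Let f, g : ℝ → ℝ be polynomial functions of the same degree d ≥ 1, and φ : ℝ → ℝ a bijection with g ∘ φ = c·f for some constant c > 0. If φ is bi-Lipschitz, then for every t ∈ ℝ the multiplicity of f at t equals the multiplicity of g at φ(t). -/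
/-- The multiplicity of a polynomial function at a point: the smallest k ≥ 1 such
that the k-th derivative does not vanish there. -/
noncomputable def polyMult (p : Polynomial ℝ) (t : ℝ) : ℕ :=
  sInf {k : ℕ | 1 ≤ k ∧ (Polynomial.derivative^[k] p).eval t ≠ 0}

open Polynomial Filter Topology Asymptotics

theorem Polynomial.iterate_derivative_sub_C {R : Type*} [Ring R] (p : R[X]) (a : R) {k : ℕ}
    (hk : 0 < k) : derivative^[k] (p - C a) = derivative^[k] p := by
  rw [iterate_derivative_sub, iterate_derivative_C hk, sub_zero]

theorem Polynomial.sub_C_ne_zero_of_natDegree_pos {R : Type*} [Ring R] {p : R[X]}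
    (hp : 0 < p.natDegree) (a : R) : p - C a ≠ 0 :=
  ne_zero_of_natDegree_gt (n := 0) (by rwa [natDegree_sub_C])

theorem polyMult_eq_rootMultiplicity_sub_C {p : ℝ[X]} (hp : 0 < p.natDegree) (t : ℝ) :
    polyMult p t = (p - C (p.eval t)).rootMultiplicity t := by
  set p₀ := p - C (p.eval t)
  have hp₀ : p₀ ≠ 0 := sub_C_ne_zero_of_natDegree_pos hp _
  set m := p₀.rootMultiplicity t
  have hm : 0 < m := (rootMultiplicity_pos hp₀).2 (by simp [p₀])
  refine IsLeast.csInf_eq ⟨⟨hm, ?_⟩, fun k ⟨hk, hk_ne⟩ => ?_⟩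
  · rw [← iterate_derivative_sub_C p (p.eval t) hm, eval_iterate_derivative_rootMultiplicity]
    exact smul_ne_zero (Nat.cast_ne_zero.2 m.factorial_ne_zero)
      (eval_divByMonic_pow_rootMultiplicity_ne_zero t hp₀)
  · by_contra! hkm
    rw [← iterate_derivative_sub_C p (p.eval t) hk] at hk_ne
    exact hk_ne (isRoot_iterate_derivative_of_lt_rootMultiplicity hkm)

theorem Polynomial.isTheta_eval_pow_rootMultiplicity {𝕜 : Type*} [NormedField 𝕜] {p : 𝕜[X]}
    (hp : p ≠ 0) (t : 𝕜) :
    (fun s => p.eval s) =Θ[𝓝 t] fun s => (s - t) ^ p.rootMultiplicity t := by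
  obtain ⟨r, hpr, hr⟩ := p.exists_eq_pow_rootMultiplicity_mul_and_not_dvd hp t
  have hrt : r.eval t ≠ 0 := mt dvd_iff_isRoot.2 hr
  have hr_const : (fun s => r.eval s) =Θ[𝓝 t] fun _ => (1 : 𝕜) :=
    isTheta_of_div_tendsto_nhds_ne_zero (c := (r.eval t)⁻¹)
      (by simpa using (r.continuous.tendsto t).inv₀ hrt) (inv_ne_zero hrt)
  conv_lhs => rw [hpr]
  simpa using (isTheta_refl (fun s => (s - t) ^ p.rootMultiplicity t) _).mul hr_const

theorem eq_of_isTheta_pow_sub {𝕜 : Type*} [NontriviallyNormedField 𝕜] {t : 𝕜} {m n : ℕ}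
    (h : (fun s => (s - t) ^ m) =Θ[𝓝 t] fun s => (s - t) ^ n) : m = n := by
  wlog hmn : m < n generalizing m n
  · rcases (not_lt.1 hmn).eq_or_lt with hnm | hnm
    · exact hnm.symm
    · exact (this h.symm hnm).symm
  have hsmall : (fun s => (s - t) ^ n) =o[𝓝 t] fun s => (s - t) ^ m :=
    (isLittleO_pow_pow hmn).comp_tendsto (tendsto_sub_nhds_zero_iff.2 tendsto_id)
  have hne : ∃ᶠ s in 𝓝 t, (s - t) ^ n ≠ 0 :=
    ((eventually_mem_nhdsWithin (s := {t}ᶜ)).frequently.filter_mono nhdsWithin_le_nhds).mono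
      fun s (hs : s ≠ t) => pow_ne_zero n (sub_ne_zero.2 hs)
  exact (hsmall.not_isBigO hne h.isBigO).elim

namespace BiLipschitz

variable {φ : ℝ → ℝ}

theorem isTheta_sub (hφ : BiLipschitz φ) (t : ℝ) (l : Filter ℝ) :
    (fun s => φ s - φ t) =Θ[l] fun s => s - t := by
  obtain ⟨-, A, B, hA, -, hAB⟩ := hφ
  refine ⟨.of_bound B (.of_forall fun s => (hAB s t).2), .of_bound A⁻¹ (.of_forall fun s => ?_)⟩
  exact (le_inv_mul_iff₀ hA).2 (hAB s t).1

theorem tendsto (hφ : BiLipschitz φ) (t : ℝ) : Tendsto φ (𝓝 t) (𝓝 (φ t)) :=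
  tendsto_sub_nhds_zero_iff.1 <|
    (hφ.isTheta_sub t _).isBigO.trans_tendsto (tendsto_sub_nhds_zero_iff.2 tendsto_id)

end BiLipschitz

theorem stmt2_general (d : ℕ) (hd : 1 ≤ d) (p q : Polynomial ℝ)
    (hpd : p.natDegree = d) (hqd : q.natDegree = d)
    (φ : ℝ → ℝ) (c : ℝ) (hc : 0 < c)
    (h : ∀ t : ℝ, q.eval (φ t) = c * p.eval t)
    (hφ : BiLipschitz φ) :
    ∀ t : ℝ, polyMult p t = polyMult q (φ t) := by
  intro t
  rw [polyMult_eq_rootMultiplicity_sub_C (hpd ▸ hd), polyMult_eq_rootMultiplicity_sub_C (hqd ▸ hd)]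
  set p₀ := p - C (p.eval t)
  set q₀ := q - C (q.eval (φ t))
  have hp₀ : p₀ ≠ 0 := sub_C_ne_zero_of_natDegree_pos (hpd ▸ hd) _
  have hq₀ : q₀ ≠ 0 := sub_C_ne_zero_of_natDegree_pos (hqd ▸ hd) _
  have hpq : ∀ s, q₀.eval (φ s) = c * p₀.eval s := fun s => by
    simp only [p₀, q₀, eval_sub, eval_C, h]
    ring
  apply eq_of_isTheta_pow_sub (t := t)
  calc (fun s => (s - t) ^ p₀.rootMultiplicity t)
      =Θ[𝓝 t] fun s => p₀.eval s := (isTheta_eval_pow_rootMultiplicity hp₀ t).symm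
    _ =Θ[𝓝 t] fun s => q₀.eval (φ s) := by
      simpa only [hpq] using (isTheta_const_mul_right hc.ne').2 (isTheta_refl _ _)
    _ =Θ[𝓝 t] fun s => (φ s - φ t) ^ q₀.rootMultiplicity (φ t) :=
      let hq := isTheta_eval_pow_rootMultiplicity hq₀ (φ t)
      ⟨hq.1.comp_tendsto (hφ.tendsto t), hq.2.comp_tendsto (hφ.tendsto t)⟩
    _ =Θ[𝓝 t] fun s => (s - t) ^ q₀.rootMultiplicity (φ t) := (hφ.isTheta_sub t _).pow _

/-- If f, g are polynomial functions of the same degree d ≥ 1, φ is a bijection with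
g ∘ φ = c·f (c > 0), and φ is bi-Lipschitz, then the multiplicity of f at t equals
the multiplicity of g at φ(t) for every t. -/
theorem stmt2 (d : ℕ) (hd : 1 ≤ d) (p q : Polynomial ℝ)
    (hpd : p.natDegree = d) (hqd : q.natDegree = d)
    (φ : ℝ → ℝ) (hbij : Function.Bijective φ) (c : ℝ) (hc : 0 < c)
    (h : ∀ t : ℝ, q.eval (φ t) = c * p.eval t)
    (hφ : BiLipschitz φ) :
    ∀ t : ℝ, polyMult p t = polyMult q (φ t) :=
  stmt2_general d hd p q hpd hqd φ c hc h hφ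
end

section
/- Let f, g : ℝ → ℝ be polynomial functions of the same degree d ≥ 1, and φ : ℝ → ℝ a bijection with g ∘ φ = c·f for some constant c > 0. If φ is an analytic diffeomorphism (φ and φ⁻¹ analytic), then φ is bi-Lipschitz. -/
/-!
Because `q (φ t) = c p(t)` with `deg p = deg q = d`, near infinity
`|t|^d ≲ |p t| ≍ |q (φ t)| ≲ |φ t|^d` (a homeomorphism of `ℝ` sends neighbourhoods of infinity to
neighbourhoods of infinity), so `|t| ≲ |φ t|`. Differentiating, `q'(φ t) φ'(t) = c p'(t)`, hence
`|φ'(t)| ≲ |t|^(d-1) / |φ t|^(d-1)` is bounded near infinity; being continuous, `φ'` is bounded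
everywhere and `φ` is Lipschitz. The inverse `ψ` satisfies `p (ψ u) = c⁻¹ q(u)`, so it is Lipschitz
as well, which is the lower bound for `φ`.
-/

open Filter Asymptotics Polynomial Bornology Set

theorem Continuous.exists_norm_le_of_isBoundedUnder_cocompact {X E : Type*} [TopologicalSpace X]
    [SeminormedAddGroup E] {f : X → E} (hf : Continuous f)
    (hbdd : IsBoundedUnder (· ≤ ·) (cocompact X) fun x => ‖f x‖) : ∃ C, ∀ x, ‖f x‖ ≤ C := by
  obtain ⟨C, hC⟩ := hbdd
  obtain ⟨K, hK, hKC⟩ := mem_cocompact.1 hC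
  obtain ⟨C', hC'⟩ := hK.exists_bound_of_continuousOn hf.continuousOn
  refine ⟨max C C', fun x => ?_⟩
  by_cases hx : x ∈ K
  · exact (hC' x hx).trans (le_max_right _ _)
  · exact (hKC hx).trans (le_max_left _ _)

namespace Polynomial

variable {R : Type*} [NormedRing R] [NormMulClass R] [Nontrivial R]

theorem eval_isBigO_pow_natDegree_cobounded (p : R[X]) :
    p.eval =O[cobounded R] (· ^ p.natDegree) := by
  simpa only [eval_X_pow] using isBigO_cobounded_of_degree_le (P := p)
    (Q := X ^ p.natDegree) (by rw [degree_X_pow]; exact degree_le_natDegree)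

theorem pow_natDegree_isBigO_eval_cobounded {p : R[X]} (hp : p ≠ 0) :
    (· ^ p.natDegree) =O[cobounded R] p.eval := by
  simpa only [eval_X_pow] using isBigO_cobounded_of_degree_le (P := X ^ p.natDegree) (Q := p)
    (by rw [degree_X_pow, degree_eq_natDegree hp])

end Polynomial

theorem deriv_mul_eq_of_eval_comp_eq {p q : ℝ[X]} {c : ℝ} {φ : ℝ → ℝ} (hφ : Differentiable ℝ φ)
    (h : ∀ t, q.eval (φ t) = c * p.eval t) (t : ℝ) :
    q.derivative.eval (φ t) * deriv φ t = c * p.derivative.eval t := by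
  have hcomp : HasDerivAt (fun s => q.eval (φ s)) (q.derivative.eval (φ t) * deriv φ t) t :=
    (q.hasDerivAt (φ t)).comp t (hφ t).hasDerivAt
  refine hcomp.unique ?_
  simpa only [h] using (p.hasDerivAt t).const_mul c

theorem isBoundedUnder_norm_deriv_cobounded_of_eval_comp_eq {d : ℕ} (hd : d ≠ 0) {p q : ℝ[X]}
    (hpd : p.natDegree = d) (hqd : q.natDegree = d) {c : ℝ} (hc : c ≠ 0) {φ : ℝ → ℝ}
    (hφ : Differentiable ℝ φ) (hφ_tendsto : Tendsto φ (cobounded ℝ) (cobounded ℝ))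
    (h : ∀ t, q.eval (φ t) = c * p.eval t) :
    IsBoundedUnder (· ≤ ·) (cobounded ℝ) fun t => ‖deriv φ t‖ := by
  have hp : p ≠ 0 := by rintro rfl; simp_all
  have hq' : q.derivative ≠ 0 := by rw [derivative_ne_zero, hqd]; exact hd
  have hlinear : (fun t => t) =O[cobounded ℝ] φ := by
    refine IsBigO.of_pow hd ?_
    calc (fun t : ℝ => t) ^ d = fun t => t ^ d := rfl
      _ =O[cobounded ℝ] p.eval := hpd ▸ pow_natDegree_isBigO_eval_cobounded hp
      _ =O[cobounded ℝ] fun t => c * p.eval t := isBigO_self_const_mul hc _ _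
      _ = fun t => q.eval (φ t) := by simp only [h]
      _ =O[cobounded ℝ] fun t => φ t ^ d :=
          hqd ▸ (eval_isBigO_pow_natDegree_cobounded q).comp_tendsto hφ_tendsto
      _ = φ ^ d := rfl
  have hderiv : (fun t => c * p.derivative.eval t) =O[cobounded ℝ]
      fun t => q.derivative.eval (φ t) :=
    calc (fun t => c * p.derivative.eval t) =O[cobounded ℝ] p.derivative.eval :=
          isBigO_const_mul_self _ _ _
      _ =O[cobounded ℝ] fun t => t ^ (d - 1) := by
          simpa only [natDegree_derivative, hpd] using
            eval_isBigO_pow_natDegree_cobounded p.derivative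
      _ =O[cobounded ℝ] fun t => φ t ^ (d - 1) := hlinear.pow _
      _ =O[cobounded ℝ] fun t => q.derivative.eval (φ t) := by
          simpa only [natDegree_derivative, hqd, Function.comp_def] using
            (pow_natDegree_isBigO_eval_cobounded hq').comp_tendsto hφ_tendsto
  have hchain := deriv_mul_eq_of_eval_comp_eq hφ h
  have hbdd := (isBigO_iff_div_isBoundedUnder (Eventually.of_forall fun t ht => by
    rw [← hchain t, ht, zero_mul])).1 hderiv
  refine hbdd.mono_le ?_
  filter_upwards [hφ_tendsto.eventually ((le_cofinite ℝ) (eventually_cofinite_not_isRoot hq'))]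
    with t ht
  rw [← hchain t, mul_div_cancel_left₀ _ ht]

theorem exists_abs_sub_le_of_eval_comp_eq {d : ℕ} (hd : d ≠ 0) {p q : ℝ[X]}
    (hpd : p.natDegree = d) (hqd : q.natDegree = d) {c : ℝ} (hc : c ≠ 0) {φ : ℝ → ℝ}
    (hφ : ContDiff ℝ 1 φ) (hφ_tendsto : Tendsto φ (cocompact ℝ) (cocompact ℝ))
    (h : ∀ t, q.eval (φ t) = c * p.eval t) :
    ∃ B, 0 < B ∧ ∀ s t, |φ s - φ t| ≤ B * |s - t| := by
  have hφd : Differentiable ℝ φ := hφ.differentiable one_ne_zero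
  rw [← Metric.cobounded_eq_cocompact] at hφ_tendsto
  have hbdd := isBoundedUnder_norm_deriv_cobounded_of_eval_comp_eq hd hpd hqd hc hφd hφ_tendsto h
  rw [Metric.cobounded_eq_cocompact] at hbdd
  obtain ⟨C, hC⟩ := (hφ.continuous_deriv le_rfl).exists_norm_le_of_isBoundedUnder_cocompact hbdd
  refine ⟨max C 1, by positivity, fun s t => ?_⟩
  simpa only [Real.norm_eq_abs] using convex_univ.norm_image_sub_le_of_norm_deriv_le
    (fun x _ => hφd x) (fun x _ => (hC x).trans (le_max_left _ _)) (mem_univ t) (mem_univ s)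

theorem stmt4_general (d : ℕ) (hd : 1 ≤ d) (p q : Polynomial ℝ)
    (hpd : p.natDegree = d) (hqd : q.natDegree = d)
    (φ : ℝ → ℝ) (c : ℝ) (hc : 0 < c)
    (h : ∀ t : ℝ, q.eval (φ t) = c * p.eval t)
    (hφ : ∀ x : ℝ, AnalyticAt ℝ φ x)
    (ψ : ℝ → ℝ) (hlinv : Function.LeftInverse ψ φ) (hrinv : Function.RightInverse ψ φ)
    (hψ : ∀ x : ℝ, AnalyticAt ℝ ψ x) :
    ∃ A B : ℝ, 0 < A ∧ 0 < B ∧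
      ∀ s t : ℝ, A * |s - t| ≤ |φ s - φ t| ∧ |φ s - φ t| ≤ B * |s - t| := by
  have hd' : d ≠ 0 := Nat.one_le_iff_ne_zero.mp hd
  have hφ' : ContDiff ℝ 1 φ := contDiff_iff_contDiffAt.2 fun x => (hφ x).contDiffAt
  have hψ' : ContDiff ℝ 1 ψ := contDiff_iff_contDiffAt.2 fun x => (hψ x).contDiffAt
  let e : ℝ ≃ₜ ℝ := ⟨⟨φ, ψ, hlinv, hrinv⟩, hφ'.continuous, hψ'.continuous⟩
  have hψ_rel : ∀ u, p.eval (ψ u) = c⁻¹ * q.eval u := fun u => by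
    rw [eq_inv_mul_iff_mul_eq₀ hc.ne', ← h, hrinv u]
  obtain ⟨B, hB, hφB⟩ :=
    exists_abs_sub_le_of_eval_comp_eq hd' hpd hqd hc.ne' hφ' e.map_cocompact.le h
  obtain ⟨B', hB', hψB'⟩ := exists_abs_sub_le_of_eval_comp_eq hd' hqd hpd (inv_ne_zero hc.ne')
    hψ' e.symm.map_cocompact.le hψ_rel
  refine ⟨B'⁻¹, B, inv_pos.2 hB', hB, fun s t => ⟨?_, hφB s t⟩⟩
  calc B'⁻¹ * |s - t| = B'⁻¹ * |ψ (φ s) - ψ (φ t)| := by rw [hlinv s, hlinv t]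
    _ ≤ B'⁻¹ * (B' * |φ s - φ t|) := by gcongr; exact hψB' _ _
    _ = |φ s - φ t| := inv_mul_cancel_left₀ hB'.ne' _

/-- If f, g are polynomial functions of the same degree d ≥ 1, φ is a bijection with
g ∘ φ = c·f (c > 0), and φ is an analytic diffeomorphism (φ and φ⁻¹ analytic),
then φ is bi-Lipschitz. -/
theorem stmt4 (d : ℕ) (hd : 1 ≤ d) (p q : Polynomial ℝ)
    (hpd : p.natDegree = d) (hqd : q.natDegree = d)
    (φ : ℝ → ℝ) (hbij : Function.Bijective φ) (c : ℝ) (hc : 0 < c)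
    (h : ∀ t : ℝ, q.eval (φ t) = c * p.eval t)
    (hφ : ∀ x : ℝ, AnalyticAt ℝ φ x)
    (ψ : ℝ → ℝ) (hlinv : Function.LeftInverse ψ φ) (hrinv : Function.RightInverse ψ φ)
    (hψ : ∀ x : ℝ, AnalyticAt ℝ ψ x) :
    ∃ A B : ℝ, 0 < A ∧ 0 < B ∧
      ∀ s t : ℝ, A * |s - t| ≤ |φ s - φ t| ∧ |φ s - φ t| ≤ B * |s - t| :=
  stmt4_general d hd p q hpd hqd φ c hc h hφ ψ hlinv hrinv hψ
end

section
/- If f, g : ℝ → ℝ are polynomial functions of the same degree d ≥ 1 and neither f nor g has any critical point, then f and g are Lipschitz equivalent. -/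
/-- Two polynomial functions are Lipschitz equivalent if g ∘ φ = c·f for some
bi-Lipschitz homeomorphism φ of ℝ and some constant c > 0. -/
def LipEquivPoly (p q : Polynomial ℝ) : Prop :=
  ∃ φ : ℝ → ℝ, BiLipschitz φ ∧ ∃ c : ℝ, 0 < c ∧ ∀ t : ℝ, q.eval (φ t) = c * p.eval t

/-! A polynomial without critical points is a homeomorphism of ℝ (injective by Rolle, open by
the inverse function theorem, closed because it is proper), and `φ = q⁻¹ ∘ p` works with `c = 1`.
Its derivative `p'(t) / q'(φ t)` is continuous, and bounded at infinity: `|q (φ t)| = |p t|` forces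
`|φ t| ≍ |t|`, whence `|p' t| ≍ |t| ^ (d - 1) ≍ |q' (φ t)|`. The same bound for `φ⁻¹ = p⁻¹ ∘ q`
gives the lower Lipschitz bound. -/

open Polynomial Filter Asymptotics Bornology Set
open scoped NNReal

theorem lipschitzWith_of_hasDerivAt_of_isBounded_range {𝕜 G : Type*} [RCLike 𝕜]
    [NormedAddCommGroup G] [NormedSpace 𝕜 G] {f f' : 𝕜 → G}
    (hf : ∀ x, HasDerivAt f (f' x) x) (hf' : IsBounded (range f')) :
    ∃ K, LipschitzWith K f := by
  obtain ⟨C, hC⟩ := hf'.exists_norm_le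
  refine ⟨C.toNNReal, lipschitzWith_of_nnnorm_deriv_le (fun x => (hf x).differentiableAt)
    fun x => ?_⟩
  rw [(hf x).deriv, ← NNReal.coe_le_coe, coe_nnnorm]
  exact (hC _ (mem_range_self x)).trans (Real.le_coe_toNNReal C)

theorem biLipschitz_of_lipschitzWith (e : ℝ ≃ ℝ) {K K' : ℝ≥0} (he : LipschitzWith K e)
    (he' : LipschitzWith K' e.symm) : BiLipschitz e := by
  refine ⟨e.bijective, (K' + 1 : ℝ)⁻¹, K + 1, by positivity, by positivity, fun s t => ⟨?_, ?_⟩⟩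
  · rw [inv_mul_le_iff₀ (by positivity)]
    calc |s - t| = dist (e.symm (e s)) (e.symm (e t)) := by simp [Real.dist_eq]
      _ ≤ K' * |e s - e t| := he'.dist_le_mul _ _
      _ ≤ (K' + 1) * |e s - e t| := by gcongr; linarith
  · calc |e s - e t| ≤ K * |s - t| := he.dist_le_mul s t
      _ ≤ (K + 1) * |s - t| := by gcongr; linarith

namespace Polynomial

theorem isTheta_cocompact (r : ℝ[X]) (hr : r ≠ 0) :
    (fun x => r.eval x) =Θ[cocompact ℝ] (· ^ r.natDegree) := by
  have hlead : (fun x : ℝ => r.leadingCoeff * x ^ r.natDegree) =Θ[⊤] (· ^ r.natDegree) :=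
    (isTheta_const_mul_left (leadingCoeff_ne_zero.mpr hr)).2 (isTheta_refl _ _)
  rw [cocompact_eq_atBot_atTop, isTheta_sup]
  exact ⟨r.isEquivalent_atBot_lead.isTheta.trans (hlead.mono le_top),
    r.isEquivalent_atTop_lead.isTheta.trans (hlead.mono le_top)⟩

theorem natDegree_ne_zero_of_eval_derivative_ne_zero {p : ℝ[X]}
    (hp : ∀ t, (derivative p).eval t ≠ 0) : p.natDegree ≠ 0 := fun h =>
  hp 0 (by rw [derivative_of_natDegree_zero h, eval_zero])

theorem injective_eval_of_eval_derivative_ne_zero {p : ℝ[X]}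
    (hp : ∀ t, (derivative p).eval t ≠ 0) : Function.Injective fun x => p.eval x := by
  refine .of_lt_imp_ne fun a b hab heQ => ?_
  obtain ⟨c, -, hc⟩ := exists_hasDerivAt_eq_zero hab p.continuous.continuousOn heQ
    fun x _ => p.hasDerivAt x
  exact hp c hc

theorem isOpenMap_eval_of_eval_derivative_ne_zero {p : ℝ[X]}
    (hp : ∀ t, (derivative p).eval t ≠ 0) : IsOpenMap fun x => p.eval x :=
  isOpenMap_of_hasStrictDerivAt (fun x => p.hasStrictDerivAt x) hp

theorem surjective_eval_of_eval_derivative_ne_zero {p : ℝ[X]}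
    (hp : ∀ t, (derivative p).eval t ≠ 0) : Function.Surjective fun x => p.eval x :=
  range_eq_univ.mp <| IsClopen.eq_univ ⟨p.isClosedMap_eval.isClosed_range,
    (isOpenMap_eval_of_eval_derivative_ne_zero hp).isOpen_range⟩ (range_nonempty _)

theorem exists_homeomorph_eval {p : ℝ[X]} (hp : ∀ t, (derivative p).eval t ≠ 0) :
    ∃ e : ℝ ≃ₜ ℝ, ∀ x, e x = p.eval x :=
  ⟨(Equiv.ofBijective _ ⟨injective_eval_of_eval_derivative_ne_zero hp,
    surjective_eval_of_eval_derivative_ne_zero hp⟩).toHomeomorphOfContinuousOpen p.continuous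
    (isOpenMap_eval_of_eval_derivative_ne_zero hp), fun _ => rfl⟩

theorem tendsto_eval_cocompact {p : ℝ[X]} (hp : p.natDegree ≠ 0) :
    Tendsto (fun x => p.eval x) (cocompact ℝ) (cocompact ℝ) :=
  (isProperMap_iff_tendsto_cocompact.mp
    (p.isProperMap_eval (natDegree_pos_iff_degree_pos.mp (Nat.pos_of_ne_zero hp)))).2

theorem isBigO_cocompact_of_eval_comp_eq {p q : ℝ[X]} (hdeg : p.natDegree = q.natDegree)
    (hp : p.natDegree ≠ 0) {φ : ℝ → ℝ} (hφ : Tendsto φ (cocompact ℝ) (cocompact ℝ))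
    (h : ∀ t, q.eval (φ t) = p.eval t) : (fun t => t) =O[cocompact ℝ] φ := by
  have hpow : (fun t => t ^ p.natDegree) =O[cocompact ℝ] (fun t => φ t ^ p.natDegree) := by
    have hp' := (p.isTheta_cocompact fun h => hp (by simp [h])).symm.isBigO
    have hq' := ((q.isTheta_cocompact fun h => hp (by simp [hdeg, h])).isBigO.comp_tendsto hφ)
    simp only [Function.comp_def, h, ← hdeg] at hq'
    exact hp'.trans hq'
  exact IsBigO.of_pow hp hpow

theorem lipschitzWith_symm_comp_eval {p q : ℝ[X]} (hdeg : p.natDegree = q.natDegree)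
    (hp : ∀ t, (derivative p).eval t ≠ 0) (hq : ∀ t, (derivative q).eval t ≠ 0)
    (e : ℝ ≃ₜ ℝ) (he : ∀ x, e x = q.eval x) : ∃ K, LipschitzWith K fun t => e.symm (p.eval t) := by
  set φ := fun t => e.symm (p.eval t)
  have hp₀ : derivative p ≠ 0 := fun h => hp 0 (by simp [h])
  have hq₀ : derivative q ≠ 0 := fun h => hq 0 (by simp [h])
  have hqφ : ∀ t, q.eval (φ t) = p.eval t := fun t => by rw [← he, e.apply_symm_apply]
  have hφ : Tendsto φ (cocompact ℝ) (cocompact ℝ) :=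
    (e.symm.map_cocompact ▸ tendsto_map).comp
      (tendsto_eval_cocompact (natDegree_ne_zero_of_eval_derivative_ne_zero hp))
  have hderiv : ∀ t, HasDerivAt φ (((derivative q).eval (φ t))⁻¹ * (derivative p).eval t) t :=
    fun t => (HasDerivAt.of_local_left_inverse e.symm.continuous.continuousAt
      (q.hasDerivAt _) (hq _) (.of_forall fun y => by rw [← he, e.apply_symm_apply])).comp t
      (p.hasDerivAt t)
  have hdeg' : (derivative p).natDegree = (derivative q).natDegree := by
    rw [natDegree_derivative, natDegree_derivative, hdeg]
  have hO : (fun t => (derivative p).eval t) =O[cocompact ℝ] fun t => (derivative q).eval (φ t) :=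
    calc (fun t => (derivative p).eval t)
        =O[cocompact ℝ] fun t => t ^ (derivative p).natDegree :=
          ((derivative p).isTheta_cocompact hp₀).isBigO
      _ =O[cocompact ℝ] fun t => φ t ^ (derivative q).natDegree := by
          rw [hdeg']
          exact (isBigO_cocompact_of_eval_comp_eq hdeg
            (natDegree_ne_zero_of_eval_derivative_ne_zero hp) hφ hqφ).pow _
      _ =O[cocompact ℝ] fun t => (derivative q).eval (φ t) :=
          ((derivative q).isTheta_cocompact hq₀).symm.isBigO.comp_tendsto hφ
  have hbounded : (fun t => ((derivative q).eval (φ t))⁻¹ * (derivative p).eval t) =O[cocompact ℝ]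
      (1 : ℝ → ℝ) :=
    ((isBigO_refl _ _).mul hO).congr_right fun t => inv_mul_cancel₀ (hq _)
  have hcont : Continuous fun t => ((derivative q).eval (φ t))⁻¹ * (derivative p).eval t :=
    (((derivative q).continuous.comp (e.symm.continuous.comp p.continuous)).inv₀
      fun t => hq _).mul (derivative p).continuous
  exact lipschitzWith_of_hasDerivAt_of_isBounded_range hderiv
    (hcont.isBounded_range_iff_isBigO.mpr hbounded)

end Polynomial

theorem stmt6_general (d : ℕ) (p q : Polynomial ℝ)
    (hpd : p.natDegree = d) (hqd : q.natDegree = d)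
    (hp : ∀ t : ℝ, (Polynomial.derivative p).eval t ≠ 0)
    (hq : ∀ t : ℝ, (Polynomial.derivative q).eval t ≠ 0) :
    LipEquivPoly p q := by
  obtain ⟨eP, heP⟩ := exists_homeomorph_eval hp
  obtain ⟨eQ, heQ⟩ := exists_homeomorph_eval hq
  obtain ⟨K, hK⟩ := lipschitzWith_symm_comp_eval (hpd.trans hqd.symm) hp hq eQ heQ
  obtain ⟨K', hK'⟩ := lipschitzWith_symm_comp_eval (hqd.trans hpd.symm) hq hp eP heP
  have hφ : ⇑(eP.trans eQ.symm) = fun t => eQ.symm (p.eval t) := funext fun t => by simp [heP]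
  have hψ : ⇑(eP.trans eQ.symm).symm = fun t => eP.symm (q.eval t) := funext fun t => by simp [heQ]
  refine ⟨eP.trans eQ.symm, biLipschitz_of_lipschitzWith (eP.trans eQ.symm).toEquiv
    (hφ ▸ hK) (hψ ▸ hK'), 1, one_pos, fun t => ?_⟩
  simp [← heQ, heP]

/-- Polynomial functions of the same degree d ≥ 1 having no critical points are
Lipschitz equivalent. -/
theorem stmt6 (d : ℕ) (hd : 1 ≤ d) (p q : Polynomial ℝ)
    (hpd : p.natDegree = d) (hqd : q.natDegree = d)
    (hp : ∀ t : ℝ, (Polynomial.derivative p).eval t ≠ 0)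
    (hq : ∀ t : ℝ, (Polynomial.derivative q).eval t ≠ 0) :
    LipEquivPoly p q :=
  stmt6_general d p q hpd hqd hp hq
end

section
/- Let f, g : ℝ → ℝ be polynomial functions of the same even degree d ≥ 2, each with exactly one critical point (t₀ for f, s₀ for g) of the same multiplicity k, and with f(t₀), g(s₀) of the same sign. Then f and g are Lipschitz equivalent if and only if t₀ and s₀ are either both absolute minimum points or both absolute maximum points of f and g respectively. -/
/-!
Even degree and a single critical point force that point to be a global minimum (positive
leading coefficient) or a global maximum. As `φ` is onto, `q ∘ φ = c • p` makes `p` and `q`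
bounded above together, which rules out a minimum paired with a maximum.

Conversely, replacing `p, q` by `-p, -q` if necessary, both graphs are V-shaped and `φ` is the
increasing bijection matching their branches. Write `p t - p t₀ = (t - t₀) ^ k * U t` and
`p' t = (t - t₀) ^ (k - 1) * W t` with `U, W > 0` of degree `d - k`, and likewise for `q`. Since
`U ≍ ((t - t₀) ^ 2 + 1) ^ ((d - k) / 2)`, the relation `q ∘ φ = c • p` forces
`|φ t - s₀| ≍ |t - t₀|`, so that
`φ' = c p' / q' ∘ φ = (φ t - s₀) / (t - t₀) * (U_q / W_q) (φ t) * (W_p / U_p) t`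
is bounded above and below away from `t₀`; the mean value theorem makes `φ` bi-Lipschitz.
-/

open Polynomial Filter Set Topology Asymptotics

lemma forall_pos_of_forall_ne_zero {X : Type*} [TopologicalSpace X] [PreconnectedSpace X]
    {f : X → ℝ} (hf : Continuous f) (h0 : ∀ x, f x ≠ 0) {a : X} (ha : 0 < f a) (x : X) :
    0 < f x := by
  by_contra! hx
  obtain ⟨y, hy⟩ := intermediate_value_univ x a hf ⟨hx, ha.le⟩
  exact h0 y hy

lemma Continuous.bddAbove_range_of_tendsto_cocompact {X : Type*} [TopologicalSpace X]
    {f : X → ℝ} (hf : Continuous f) {L : ℝ} (h : Tendsto f (cocompact X) (𝓝 L)) :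
    BddAbove (range f) := by
  rcases isEmpty_or_nonempty X with hX | ⟨⟨x₀⟩⟩
  · simp [range_eq_empty]
  -- `max f (L + 1)` is eventually constant, so it attains its supremum
  have hg : Continuous fun x => max (f x) (L + 1) := hf.max continuous_const
  obtain ⟨x₁, hx₁⟩ := hg.exists_forall_ge' x₀
    ((h.eventually (eventually_le_nhds (lt_add_one L))).mono fun x hx => by
      rw [max_eq_right hx]; exact le_max_right _ _)
  exact ⟨max (f x₁) (L + 1), forall_mem_range.2 fun x => (le_max_left _ _).trans (hx₁ x)⟩

lemma tendsto_atTop_of_tendsto_abs {α : Type*} {l : Filter α} {f : α → ℝ} {m : ℝ}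
    (h : Tendsto (fun x => |f x|) l atTop) (hm : ∀ x, m ≤ f x) : Tendsto f l atTop :=
  tendsto_atTop_mono (fun x => by cases abs_cases (f x) <;> cases abs_cases m <;> linarith [hm x])
    (tendsto_atTop_add_const_right l (-2 * |m|) h)

lemma le_max_one_mul_of_pow_mul_le {k : ℕ} (hk : k ≠ 0) {w : ℝ → ℝ}
    (hw : MonotoneOn w (Ici 0)) (hw₀ : ∀ x, 0 ≤ x → 0 < w x) {K a b : ℝ} (ha : 0 ≤ a)
    (hb : 0 ≤ b) (h : b ^ k * w b ≤ K * (a ^ k * w a)) : b ≤ max 1 K * a := by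
  rcases le_or_gt b a with hba | hab
  · exact hba.trans (le_mul_of_one_le_left ha (le_max_left _ _))
  have hwa := hw₀ a ha
  have hbk : b ^ k ≤ K * a ^ k := by
    refine le_of_mul_le_mul_right ?_ hwa
    calc b ^ k * w a ≤ b ^ k * w b := by gcongr; exact hw ha hb hab.le
      _ ≤ K * (a ^ k * w a) := h
      _ = K * a ^ k * w a := by ring
  have hK : K ≤ max 1 K ^ k :=
    (le_max_right 1 K).trans (le_self_pow₀ (le_max_left 1 K) hk)
  refine (pow_le_pow_iff_left₀ hb (by positivity) hk).1 ?_
  calc b ^ k ≤ K * a ^ k := hbk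
    _ ≤ max 1 K ^ k * a ^ k := by gcongr
    _ = (max 1 K * a) ^ k := (mul_pow _ _ _).symm

lemma abs_le_mul_abs_of_pow_mul_eq {k e : ℕ} (hk : k ≠ 0) (hke : Even k) {c Cu Cv x y u v : ℝ}
    (hc : 0 ≤ c) (hCv : 0 ≤ Cv) (hu : u ≤ Cu * (x ^ 2 + 1) ^ e)
    (hv : (y ^ 2 + 1) ^ e ≤ Cv * v) (h : y ^ k * v = c * (x ^ k * u)) :
    |y| ≤ max 1 (Cv * c * Cu) * |x| := by
  refine le_max_one_mul_of_pow_mul_le hk (w := fun r => (r ^ 2 + 1) ^ e)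
    (fun r hr s _ hrs => by dsimp only; gcongr) (fun r _ => by positivity)
    (abs_nonneg x) (abs_nonneg y) ?_
  simp only [hke.pow_abs, sq_abs]
  calc y ^ k * (y ^ 2 + 1) ^ e ≤ y ^ k * (Cv * v) := by gcongr; exact hke.pow_nonneg y
    _ = Cv * (c * (x ^ k * u)) := by rw [← h]; ring
    _ ≤ Cv * (c * (x ^ k * (Cu * (x ^ 2 + 1) ^ e))) := by
        have := hke.pow_nonneg x
        gcongr
    _ = Cv * c * Cu * (x ^ k * (x ^ 2 + 1) ^ e) := by ring

lemma mul_div_eq_of_pow_mul_eq {k : ℕ} (hk : k ≠ 0) {c x y u v w₁ w₂ : ℝ} (hx : x ≠ 0)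
    (hy : y ≠ 0) (hu : u ≠ 0) (hw₂ : w₂ ≠ 0) (h : y ^ k * v = c * (x ^ k * u)) :
    c * (x ^ (k - 1) * w₁) / (y ^ (k - 1) * w₂) = y / x * (v / w₂) * (w₁ / u) := by
  obtain ⟨j, rfl⟩ := Nat.exists_eq_succ_of_ne_zero hk
  rw [Nat.succ_sub_one]
  rw [pow_succ, pow_succ] at h
  field_simp
  linear_combination (-w₁) * h

lemma div_mem_Icc_of_le_mul {P Q C₁ C₂ : ℝ} (hQ : 0 < Q) (hC₂ : 0 < C₂) (h₁ : P ≤ C₁ * Q)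
    (h₂ : Q ≤ C₂ * P) : P / Q ∈ Icc C₂⁻¹ C₁ :=
  ⟨by rwa [le_div_iff₀ hQ, inv_mul_le_iff₀ hC₂], by rwa [div_le_iff₀ hQ]⟩

lemma mul_mem_Icc_mul {a b c d x y : ℝ} (ha : 0 ≤ a) (hc : 0 ≤ c) (hx : x ∈ Icc a b)
    (hy : y ∈ Icc c d) : x * y ∈ Icc (a * c) (b * d) :=
  ⟨mul_le_mul hx.1 hy.1 hc (ha.trans hx.1),
    mul_le_mul hx.2 hy.2 (hc.trans hy.1) ((ha.trans hx.1).trans hx.2)⟩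

lemma exists_strictMono_surjective_comp_eq {α β γ : Type*} [LinearOrder α] [LinearOrder β]
    [LinearOrder γ] {f : α → β} {g : γ → β} {a : α} {b : γ}
    (hf₁ : StrictAntiOn f (Iic a)) (hf₂ : StrictMonoOn f (Ici a))
    (hg₁ : StrictAntiOn g (Iic b)) (hg₂ : StrictMonoOn g (Ici b))
    (h₁ : f '' Iic a = g '' Iic b) (h₂ : f '' Ici a = g '' Ici b) :
    ∃ φ : α → γ, StrictMono φ ∧ Function.Surjective φ ∧ φ a = b ∧ ∀ t, g (φ t) = f t := by
  have : Nonempty γ := ⟨b⟩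
  have hab : f a = g b := by
    obtain ⟨s, hs, hgs⟩ : f a ∈ g '' Ici b := h₂ ▸ mem_image_of_mem f self_mem_Ici
    obtain ⟨t, ht, hft⟩ : g b ∈ f '' Ici a := h₂ ▸ mem_image_of_mem g self_mem_Ici
    exact le_antisymm (hft ▸ hf₂.monotoneOn self_mem_Ici ht ht)
      (hgs ▸ hg₂.monotoneOn self_mem_Ici hs hs)
  let φ : α → γ := fun t =>
    if a ≤ t then Function.invFunOn g (Ici b) (f t) else Function.invFunOn g (Iic b) (f t)
  have hspec : ∀ t, g (φ t) = f t ∧ (a ≤ t → b ≤ φ t) ∧ (t ≤ a → φ t ≤ b) := by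
    intro t
    by_cases ht : a ≤ t
    · have hex : f t ∈ g '' Ici b := h₂ ▸ mem_image_of_mem f ht
      simp only [φ, if_pos ht]
      refine ⟨Function.invFunOn_eq hex, fun _ => Function.invFunOn_mem hex, fun hta => ?_⟩
      refine le_of_eq (hg₂.injOn (Function.invFunOn_mem hex) self_mem_Ici ?_)
      rw [Function.invFunOn_eq hex, le_antisymm hta ht, hab]
    · have hex : f t ∈ g '' Iic b := h₁ ▸ mem_image_of_mem f (le_of_not_ge ht)
      simp only [φ, if_neg ht]
      exact ⟨Function.invFunOn_eq hex, fun h => absurd h ht, fun _ => Function.invFunOn_mem hex⟩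
  have hgφ : ∀ t, g (φ t) = f t := fun t => (hspec t).1
  have hge : ∀ {t}, a ≤ t → b ≤ φ t := fun ht => (hspec _).2.1 ht
  have hle : ∀ {t}, t ≤ a → φ t ≤ b := fun ht => (hspec _).2.2 ht
  refine ⟨φ, fun t₁ t₂ h => ?_, fun s => ?_, le_antisymm (hle le_rfl) (hge le_rfl), hgφ⟩
  · rcases le_or_gt a t₁ with h₁ | h₁
    · have h₂ := h₁.trans h.le
      rw [← hg₂.lt_iff_lt (hge h₁) (hge h₂), hgφ, hgφ]
      exact hf₂ h₁ h₂ h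
    rcases le_or_gt t₂ a with h₂ | h₂
    · rw [← hg₁.lt_iff_gt (hle h₂) (hle (h.le.trans h₂)), hgφ, hgφ]
      exact hf₁ (h.le.trans h₂) h₂ h
    · refine lt_of_lt_of_le (lt_of_le_of_ne (hle h₁.le) fun he => ?_) (hge h₂.le)
      have := hgφ t₁
      rw [he, ← hab] at this
      exact h₁.ne (hf₁.injOn h₁.le self_mem_Iic this.symm)
  · rcases le_total b s with hs | hs
    · obtain ⟨t, ht, hts⟩ : g s ∈ f '' Ici a := h₂ ▸ mem_image_of_mem g hs
      exact ⟨t, hg₂.injOn (hge ht) hs ((hgφ t).trans hts)⟩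
    · obtain ⟨t, ht, hts⟩ : g s ∈ f '' Iic a := h₁ ▸ mem_image_of_mem g hs
      exact ⟨t, hg₁.injOn (hle ht) hs ((hgφ t).trans hts)⟩

lemma hasDerivAt_of_comp_eq {𝕜 : Type*} [NontriviallyNormedField 𝕜] [CompleteSpace 𝕜]
    {φ f g : 𝕜 → 𝕜} {t f' g' : 𝕜} (hφ : ContinuousAt φ t) (hf : HasDerivAt f f' t)
    (hg : HasStrictDerivAt g g' (φ t)) (hg' : g' ≠ 0) (h : ∀ y, g (φ y) = f y) :
    HasDerivAt φ (f' / g') t := by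
  have hL := hg.to_localInverse hg'
  rw [h t] at hL
  rw [div_eq_inv_mul]
  refine (hL.hasDerivAt.comp t hf).congr_of_eventuallyEq ?_
  filter_upwards [hφ.eventually (hg.eventually_left_inverse hg')] with y hy
  rw [Function.comp_apply, ← h y, hy]

lemma mul_sub_le_sub_of_le_deriv_of_ne {f f' : ℝ → ℝ} {a C : ℝ} (hf : Continuous f)
    (hd : ∀ x ≠ a, HasDerivAt f (f' x) x) (hC : ∀ x ≠ a, C ≤ f' x) {x y : ℝ} (hxy : x ≤ y) :
    C * (y - x) ≤ f y - f x := by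
  have half : ∀ D : Set ℝ, Convex ℝ D → a ∉ interior D →
      ∀ x ∈ D, ∀ y ∈ D, x ≤ y → C * (y - x) ≤ f y - f x := fun D hD ha =>
    hD.mul_sub_le_image_sub_of_le_deriv hf.continuousOn
      (fun z hz => (hd z (ne_of_mem_of_not_mem hz ha)).differentiableAt.differentiableWithinAt)
      fun z hz => (hd z (ne_of_mem_of_not_mem hz ha)).deriv ▸ hC z (ne_of_mem_of_not_mem hz ha)
  have hIic := half (Iic a) (convex_Iic a) (by simp)
  have hIci := half (Ici a) (convex_Ici a) (by simp)
  rcases le_total y a with hya | hay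
  · exact hIic x (hxy.trans hya) y hya hxy
  rcases le_total a x with hax | hxa
  · exact hIci x hax y (hax.trans hxy) hxy
  · linarith [hIic x hxa a self_mem_Iic hxa, hIci a self_mem_Ici y hay hay]

lemma biLipschitz_of_hasDerivAt {φ D : ℝ → ℝ} {a A B : ℝ} (hA : 0 < A)
    (hφ : Function.Bijective φ) (hcont : Continuous φ) (hd : ∀ x ≠ a, HasDerivAt φ (D x) x)
    (hD : ∀ x ≠ a, A ≤ D x ∧ D x ≤ B) : BiLipschitz φ := by
  have hB : 0 < B := hA.trans_le ((hD (a + 1) (by linarith)).1.trans (hD (a + 1) (by linarith)).2)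
  have key : ∀ s t, s ≤ t → A * |s - t| ≤ |φ s - φ t| ∧ |φ s - φ t| ≤ B * |s - t| := by
    intro s t hst
    have hlo := mul_sub_le_sub_of_le_deriv_of_ne hcont hd (fun x hx => (hD x hx).1) hst
    have hhi := mul_sub_le_sub_of_le_deriv_of_ne hcont.neg (fun x hx => (hd x hx).neg)
      (fun x hx => neg_le_neg (hD x hx).2) hst
    simp only [Pi.neg_apply] at hhi
    rw [abs_sub_comm s, abs_sub_comm (φ s), abs_of_nonneg (sub_nonneg.2 hst),
      abs_of_nonneg ((mul_nonneg hA.le (sub_nonneg.2 hst)).trans hlo)]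
    constructor <;> linarith
  refine ⟨hφ, A, B, hA, hB, fun s t => ?_⟩
  rcases le_total s t with hst | hts
  · exact key s t hst
  · rw [abs_sub_comm s, abs_sub_comm (φ s)]
    exact key t s hts

namespace Polynomial

lemma tendsto_eval_div_eval_cocompact {P Q : ℝ[X]} (h : P.natDegree = Q.natDegree) :
    Tendsto (fun x => P.eval x / Q.eval x) (cocompact ℝ)
      (𝓝 (P.leadingCoeff / Q.leadingCoeff)) := by
  have key : ∀ l : Filter ℝ, (fun x => P.eval x) ~[l] (P.leadingCoeff * · ^ P.natDegree) →
      (fun x => Q.eval x) ~[l] (Q.leadingCoeff * · ^ Q.natDegree) → (∀ᶠ x in l, x ≠ 0) →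
      Tendsto (fun x => P.eval x / Q.eval x) l (𝓝 (P.leadingCoeff / Q.leadingCoeff)) := by
    intro l hP hQl hl
    refine ((hP.div hQl).symm.tendsto_nhds (tendsto_const_nhds.congr' ?_))
    filter_upwards [hl] with x hx
    rw [h, Pi.div_apply, mul_div_mul_right _ _ (pow_ne_zero _ hx)]
  rw [cocompact_eq_atBot_atTop]
  exact tendsto_sup.2 ⟨key _ P.isEquivalent_atBot_lead Q.isEquivalent_atBot_lead
      (eventually_lt_atBot 0 |>.mono fun x hx => hx.ne),
    key _ P.isEquivalent_atTop_lead Q.isEquivalent_atTop_lead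
      (eventually_gt_atTop 0 |>.mono fun x hx => hx.ne')⟩

lemma exists_eval_le_mul_eval {P Q : ℝ[X]} (hQ : ∀ x, 0 < Q.eval x)
    (h : P.natDegree = Q.natDegree) : ∃ C, 0 < C ∧ ∀ x, P.eval x ≤ C * Q.eval x := by
  obtain ⟨C, hC⟩ := (P.continuous.div Q.continuous fun x => (hQ x).ne')
    |>.bddAbove_range_of_tendsto_cocompact (tendsto_eval_div_eval_cocompact h)
  refine ⟨max C 1, by positivity, fun x => ?_⟩
  rw [← div_le_iff₀ (hQ x)]
  exact (hC (mem_range_self x)).trans (le_max_left _ _)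

lemma exists_comparable {P Q : ℝ[X]} (hP : ∀ x, 0 < P.eval x) (hQ : ∀ x, 0 < Q.eval x)
    (h : P.natDegree = Q.natDegree) :
    ∃ C, 0 < C ∧ ∀ x, P.eval x ≤ C * Q.eval x ∧ Q.eval x ≤ C * P.eval x := by
  obtain ⟨C₁, hC₁, h₁⟩ := exists_eval_le_mul_eval hQ h
  obtain ⟨C₂, hC₂, h₂⟩ := exists_eval_le_mul_eval hP h.symm
  refine ⟨max C₁ C₂, by positivity, fun x => ⟨(h₁ x).trans ?_, (h₂ x).trans ?_⟩⟩
  · exact mul_le_mul_of_nonneg_right (le_max_left _ _) (hQ x).le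
  · exact mul_le_mul_of_nonneg_right (le_max_right _ _) (hP x).le

lemma exists_comparable_sq_add_one_pow {P : ℝ[X]} {e : ℕ} (hP : ∀ x, 0 < P.eval x)
    (h : P.natDegree = 2 * e) (a : ℝ) :
    ∃ C, 0 < C ∧ ∀ x, P.eval x ≤ C * ((x - a) ^ 2 + 1) ^ e ∧
      ((x - a) ^ 2 + 1) ^ e ≤ C * P.eval x := by
  have hM : ∀ x, (((X - C a) ^ 2 + 1) ^ e : ℝ[X]).eval x = ((x - a) ^ 2 + 1) ^ e := by simp
  have hMdeg : (((X - C a) ^ 2 + 1) ^ e : ℝ[X]).natDegree = 2 * e := by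
    rw [natDegree_pow, ← C_1, natDegree_add_C, natDegree_pow, natDegree_X_sub_C, mul_comm]
  simpa only [hM] using exists_comparable hP (fun x => by rw [hM]; positivity) (h.trans hMdeg.symm)

lemma exists_eval_eq_pow_rootMultiplicity_mul {R : Type*} [CommRing R] [Nontrivial R]
    {r : R[X]} (hr : r ≠ 0) (a : R) :
    ∃ U : R[X], (∀ x, r.eval x = (x - a) ^ r.rootMultiplicity a * U.eval x) ∧ U.eval a ≠ 0 ∧
      U.natDegree = r.natDegree - r.rootMultiplicity a := by
  refine ⟨r /ₘ (X - C a) ^ r.rootMultiplicity a, fun x => ?_,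
    eval_divByMonic_pow_rootMultiplicity_ne_zero a hr, ?_⟩
  · conv_lhs => rw [← pow_mul_divByMonic_rootMultiplicity_eq r a]
    simp
  · rw [natDegree_divByMonic _ ((monic_X_sub_C a).pow _), (monic_X_sub_C a).natDegree_pow,
      natDegree_X_sub_C, mul_one]

lemma sub_C_ne_zero {R : Type*} [Ring R] {p : R[X]} (hp : p.natDegree ≠ 0) (a : R) :
    p - C a ≠ 0 :=
  fun h => hp (by rw [← natDegree_sub_C (a := a), h, natDegree_zero])

lemma polyMult_eq_rootMultiplicity {p : ℝ[X]} (hp : p.natDegree ≠ 0) (t : ℝ) :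
    polyMult p t = (p - C (p.eval t)).rootMultiplicity t := by
  set r := p - C (p.eval t)
  have hr : r ≠ 0 := sub_C_ne_zero hp _
  have hroot : r.IsRoot t := by simp [r]
  have hiter : ∀ j, 1 ≤ j → derivative^[j] r = derivative^[j] p := by
    intro j hj
    obtain ⟨i, rfl⟩ := Nat.exists_eq_add_of_le' hj
    simp [Function.iterate_succ_apply, r]
  set m := r.rootMultiplicity t
  have hm : 1 ≤ m := (rootMultiplicity_pos hr).2 hroot
  have hmem : m ∈ {k : ℕ | 1 ≤ k ∧ (derivative^[k] p).eval t ≠ 0} := by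
    refine ⟨hm, fun h => lt_irrefl m ((lt_rootMultiplicity_iff_isRoot_iterate_derivative hr).2
      fun j hj => hj.lt_or_eq.elim isRoot_iterate_derivative_of_lt_rootMultiplicity
        fun hjm => ?_)⟩
    rw [hjm, IsRoot, hiter m hm]
    exact h
  exact le_antisymm (Nat.sInf_le hmem) (le_csInf ⟨m, hmem⟩ fun j ⟨hj, hne⟩ => le_of_not_gt
    fun hjm => hne (hiter j hj ▸ isRoot_iterate_derivative_of_lt_rootMultiplicity hjm))

lemma polyMult_pos {p : ℝ[X]} (hp : p.natDegree ≠ 0) (t : ℝ) : 0 < polyMult p t := by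
  rw [polyMult_eq_rootMultiplicity hp]
  exact (rootMultiplicity_pos (sub_C_ne_zero hp _)).2 (by simp)

lemma polyMult_neg (p : ℝ[X]) (t : ℝ) : polyMult (-p) t = polyMult p t := by
  simp [polyMult]

lemma tendsto_atBot_atTop_of_even {P : ℝ[X]} (hdeg : 0 < P.degree) (heven : Even P.natDegree)
    (hlc : 0 ≤ P.leadingCoeff) : Tendsto (fun x => P.eval x) atBot atTop := by
  have h := ((P.comp (-X)).tendsto_atTop_of_leadingCoeff_nonneg (by simpa using hdeg)
    (by simpa [heven.neg_one_pow] using hlc)).comp tendsto_neg_atBot_atTop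
  simpa [Function.comp_def] using h

section IsMin

variable {p : ℝ[X]} {t₀ : ℝ}

lemma eq_of_forall_eval_le (hcrit : ∀ t, (derivative p).eval t = 0 → t = t₀)
    {t : ℝ} (hmin : ∀ s, p.eval t ≤ p.eval s) : t = t₀ :=
  hcrit t (p.deriv ▸ IsLocalMin.deriv_eq_zero (Eventually.of_forall hmin))

lemma forall_eval_le_of_leadingCoeff_pos (heven : Even p.natDegree) (hp : p.natDegree ≠ 0)
    (hcrit : ∀ t, (derivative p).eval t = 0 → t = t₀) (hlc : 0 < p.leadingCoeff) :
    ∀ t, p.eval t₀ ≤ p.eval t := by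
  have hdeg : 0 < p.degree := natDegree_pos_iff_degree_pos.1 (Nat.pos_of_ne_zero hp)
  have hlim : Tendsto (fun x => p.eval x) (cocompact ℝ) atTop := by
    rw [cocompact_eq_atBot_atTop]
    exact tendsto_sup.2 ⟨tendsto_atBot_atTop_of_even hdeg heven hlc.le,
      p.tendsto_atTop_of_leadingCoeff_nonneg hdeg hlc.le⟩
  obtain ⟨x, hx⟩ := p.continuous.exists_forall_le hlim
  rwa [← eq_of_forall_eval_le hcrit hx]

lemma forall_eval_le_or_forall_le_eval (heven : Even p.natDegree) (hp : p.natDegree ≠ 0)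
    (hcrit : ∀ t, (derivative p).eval t = 0 → t = t₀) :
    (∀ t, p.eval t₀ ≤ p.eval t) ∨ (∀ t, p.eval t ≤ p.eval t₀) := by
  have hp0 : p ≠ 0 := fun h => hp (by simp [h])
  rcases (leadingCoeff_ne_zero.2 hp0).lt_or_gt with hlc | hlc
  · right
    have := forall_eval_le_of_leadingCoeff_pos (p := -p) (t₀ := t₀) (by simpa using heven)
      (by simpa using hp) (by simpa using hcrit) (by simpa using hlc)
    simpa using this
  · exact .inl (forall_eval_le_of_leadingCoeff_pos heven hp hcrit hlc)

lemma eval_lt_eval_of_ne (hcrit : ∀ t, (derivative p).eval t = 0 → t = t₀)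
    (hmin : ∀ t, p.eval t₀ ≤ p.eval t) {t : ℝ} (ht : t ≠ t₀) : p.eval t₀ < p.eval t :=
  (hmin t).lt_of_ne fun h => ht (eq_of_forall_eval_le hcrit fun s => h ▸ hmin s)

lemma exists_eval_sub_eq_pow_polyMult_mul (hp : p.natDegree ≠ 0)
    (hcrit : ∀ t, (derivative p).eval t = 0 → t = t₀) (hmin : ∀ t, p.eval t₀ ≤ p.eval t) :
    ∃ U : ℝ[X], (∀ t, p.eval t - p.eval t₀ = (t - t₀) ^ polyMult p t₀ * U.eval t) ∧
      (∀ t, 0 < U.eval t) ∧ U.natDegree = p.natDegree - polyMult p t₀ := by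
  obtain ⟨U, hU, hUt₀, hUdeg⟩ :=
    exists_eval_eq_pow_rootMultiplicity_mul (sub_C_ne_zero hp (p.eval t₀)) t₀
  rw [← polyMult_eq_rootMultiplicity hp] at hU hUdeg
  simp only [eval_sub, eval_C, natDegree_sub_C] at hU hUdeg
  refine ⟨U, hU, forall_pos_of_forall_ne_zero U.continuous (fun t hUt => ?_) (a := t₀ + 1) ?_,
    hUdeg⟩
  · by_cases ht : t = t₀
    · exact hUt₀ (ht ▸ hUt)
    · have := sub_pos.2 (eval_lt_eval_of_ne hcrit hmin ht)
      rw [hU, hUt, mul_zero] at this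
      exact lt_irrefl _ this
  · have := sub_pos.2 (eval_lt_eval_of_ne hcrit hmin (t := t₀ + 1) (by linarith))
    rwa [hU, add_sub_cancel_left, one_pow, one_mul] at this

lemma even_polyMult_of_forall_le (hp : p.natDegree ≠ 0)
    (hcrit : ∀ t, (derivative p).eval t = 0 → t = t₀) (hmin : ∀ t, p.eval t₀ ≤ p.eval t) :
    Even (polyMult p t₀) := by
  obtain ⟨U, hU, hUpos, -⟩ := exists_eval_sub_eq_pow_polyMult_mul hp hcrit hmin
  by_contra hodd
  have := sub_pos.2 (eval_lt_eval_of_ne hcrit hmin (t := t₀ - 1) (by linarith))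
  rw [hU, sub_sub_cancel_left, (Nat.not_even_iff_odd.1 hodd).neg_pow, one_pow] at this
  linarith [hUpos (t₀ - 1)]

lemma exists_eval_derivative_eq_pow_mul (hp : p.natDegree ≠ 0)
    (hcrit : ∀ t, (derivative p).eval t = 0 → t = t₀) (hmin : ∀ t, p.eval t₀ ≤ p.eval t) :
    ∃ W : ℝ[X], (∀ t, (derivative p).eval t = (t - t₀) ^ (polyMult p t₀ - 1) * W.eval t) ∧
      (∀ t, 0 < W.eval t) ∧ W.natDegree = p.natDegree - polyMult p t₀ := by
  have hd : derivative p ≠ 0 := fun h => hp (derivative_eq_zero.1 h)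
  have hmult : (derivative p).rootMultiplicity t₀ = polyMult p t₀ - 1 := by
    rw [polyMult_eq_rootMultiplicity hp, ← derivative_rootMultiplicity_of_root (by simp)]
    simp
  obtain ⟨W, hW, hWt₀, hWdeg⟩ := exists_eval_eq_pow_rootMultiplicity_mul hd t₀
  rw [hmult] at hW hWdeg
  refine ⟨W, hW, ?_, by rw [hWdeg, natDegree_derivative]; have := polyMult_pos hp t₀; omega⟩
  obtain ⟨ξ, hξ, hslope⟩ := exists_hasDerivAt_eq_slope (fun x => p.eval x)
    (fun x => (derivative p).eval x) (lt_add_one t₀) p.continuousOn fun x _ => p.hasDerivAt x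
  refine forall_pos_of_forall_ne_zero W.continuous (fun t hWt => ?_) (a := ξ) ?_
  · by_cases ht : t = t₀
    · exact hWt₀ (ht ▸ hWt)
    · exact ht (hcrit t (by rw [hW, hWt, mul_zero]))
  · have h1 : 0 < (derivative p).eval ξ := by
      rw [hslope]
      exact div_pos (sub_pos.2 (eval_lt_eval_of_ne hcrit hmin (by linarith))) (by linarith)
    rw [hW] at h1
    exact pos_of_mul_pos_right h1 (pow_pos (sub_pos.2 hξ.1) _).le

lemma strictMonoOn_Ici_of_forall_le (hp : p.natDegree ≠ 0)
    (hcrit : ∀ t, (derivative p).eval t = 0 → t = t₀) (hmin : ∀ t, p.eval t₀ ≤ p.eval t) :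
    StrictMonoOn p.eval (Ici t₀) := by
  obtain ⟨W, hW, hWpos, -⟩ := exists_eval_derivative_eq_pow_mul hp hcrit hmin
  refine strictMonoOn_of_deriv_pos (convex_Ici t₀) p.continuousOn fun x hx => ?_
  rw [interior_Ici] at hx
  rw [p.deriv, hW]
  exact mul_pos (pow_pos (sub_pos.2 hx) _) (hWpos x)

lemma strictAntiOn_Iic_of_forall_le (hp : p.natDegree ≠ 0)
    (hcrit : ∀ t, (derivative p).eval t = 0 → t = t₀) (hmin : ∀ t, p.eval t₀ ≤ p.eval t) :
    StrictAntiOn p.eval (Iic t₀) := by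
  have hk := even_polyMult_of_forall_le hp hcrit hmin
  obtain ⟨W, hW, hWpos, -⟩ := exists_eval_derivative_eq_pow_mul hp hcrit hmin
  have hodd : Odd (polyMult p t₀ - 1) := Nat.Even.sub_odd (polyMult_pos hp t₀) hk odd_one
  refine strictAntiOn_of_deriv_neg (convex_Iic t₀) p.continuousOn fun x hx => ?_
  rw [interior_Iic] at hx
  rw [p.deriv, hW]
  exact mul_neg_of_neg_of_pos (hodd.pow_neg (sub_neg.2 hx)) (hWpos x)

lemma tendsto_atTop_of_forall_le (hp : p.natDegree ≠ 0) (hmin : ∀ t, p.eval t₀ ≤ p.eval t) :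
    Tendsto p.eval atTop atTop :=
  tendsto_atTop_of_tendsto_abs
    (p.abs_tendsto_atTop (natDegree_pos_iff_degree_pos.1 (Nat.pos_of_ne_zero hp))) hmin

lemma tendsto_atBot_of_forall_le (hp : p.natDegree ≠ 0) (hmin : ∀ t, p.eval t₀ ≤ p.eval t) :
    Tendsto p.eval atBot atTop :=
  tendsto_atTop_of_tendsto_abs
    (p.abs_tendsto_atBot (natDegree_pos_iff_degree_pos.1 (Nat.pos_of_ne_zero hp))) hmin

lemma image_Ici_of_forall_le (hp : p.natDegree ≠ 0) (hmin : ∀ t, p.eval t₀ ≤ p.eval t) :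
    p.eval '' Ici t₀ = Ici (p.eval t₀) :=
  (image_subset_iff.2 fun t _ => hmin t).antisymm
    (intermediate_value_Ici p.continuousOn (tendsto_atTop_of_forall_le hp hmin))

lemma image_Iic_of_forall_le (hp : p.natDegree ≠ 0) (hmin : ∀ t, p.eval t₀ ≤ p.eval t) :
    p.eval '' Iic t₀ = Ici (p.eval t₀) :=
  (image_subset_iff.2 fun t _ => hmin t).antisymm
    (intermediate_value_Iic' p.continuousOn (tendsto_atBot_of_forall_le hp hmin))

end IsMin

lemma exists_strictMono_comp_eq_of_forall_le {p q : ℝ[X]} {t₀ s₀ c : ℝ} (hc : 0 < c)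
    (hcv : c * p.eval t₀ = q.eval s₀) (hp : p.natDegree ≠ 0) (hq : q.natDegree ≠ 0)
    (hpcrit : ∀ t, (derivative p).eval t = 0 → t = t₀)
    (hqcrit : ∀ s, (derivative q).eval s = 0 → s = s₀)
    (hpmin : ∀ t, p.eval t₀ ≤ p.eval t) (hqmin : ∀ s, q.eval s₀ ≤ q.eval s) :
    ∃ φ : ℝ → ℝ, StrictMono φ ∧ Function.Surjective φ ∧ φ t₀ = s₀ ∧
      ∀ t, q.eval (φ t) = c * p.eval t := by
  have hmul := strictMono_mul_left_of_pos hc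
  refine exists_strictMono_surjective_comp_eq
    (hmul.comp_strictAntiOn (strictAntiOn_Iic_of_forall_le hp hpcrit hpmin))
    (hmul.comp_strictMonoOn (strictMonoOn_Ici_of_forall_le hp hpcrit hpmin))
    (strictAntiOn_Iic_of_forall_le hq hqcrit hqmin) (strictMonoOn_Ici_of_forall_le hq hqcrit hqmin)
    ?_ ?_
  · rw [image_Iic_of_forall_le hq hqmin, ← hcv, ← image_mul_left_Ici hc,
      ← image_Iic_of_forall_le hp hpmin, image_image]
    rfl
  · rw [image_Ici_of_forall_le hq hqmin, ← hcv, ← image_mul_left_Ici hc,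
      ← image_Ici_of_forall_le hp hpmin, image_image]
    rfl

lemma exists_div_sub_mem_Icc_of_pow_mul_eq {φ : ℝ → ℝ} {Up Uq : ℝ[X]} {k : ℕ} {t₀ s₀ c : ℝ}
    (hk : k ≠ 0) (hkeven : Even k) (hc : 0 < c) (hUp : ∀ t, 0 < Up.eval t)
    (hUq : ∀ s, 0 < Uq.eval s) (hdeg : Uq.natDegree = Up.natDegree) (heven : Even Up.natDegree)
    (hmono : StrictMono φ) (hφt₀ : φ t₀ = s₀)
    (hrel : ∀ t, (φ t - s₀) ^ k * Uq.eval (φ t) = c * ((t - t₀) ^ k * Up.eval t)) :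
    ∃ M₁ M₂, 0 < M₂ ∧ ∀ t ≠ t₀, (φ t - s₀) / (t - t₀) ∈ Icc M₂⁻¹ M₁ := by
  obtain ⟨e, he⟩ := heven
  obtain ⟨C₁, hC₁, hCp⟩ := exists_comparable_sq_add_one_pow hUp (by omega : _ = 2 * e) t₀
  obtain ⟨C₂, hC₂, hCq⟩ := exists_comparable_sq_add_one_pow hUq (by omega : _ = 2 * e) s₀
  refine ⟨max 1 (C₂ * c * C₁), max 1 (C₁ * c⁻¹ * C₂), by positivity, fun t ht => ?_⟩
  have hpos : 0 < (φ t - s₀) / (t - t₀) := by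
    rcases ht.lt_or_gt with h | h
    · exact div_pos_of_neg_of_neg (sub_neg.2 (hφt₀ ▸ hmono h)) (sub_neg.2 h)
    · exact div_pos (sub_pos.2 (hφt₀ ▸ hmono h)) (sub_pos.2 h)
  rw [← abs_of_pos hpos, abs_div]
  refine div_mem_Icc_of_le_mul (abs_pos.2 (sub_ne_zero.2 ht)) (by positivity)
    (abs_le_mul_abs_of_pow_mul_eq hk hkeven hc.le hC₂.le (hCp t).1 (hCq (φ t)).2 (hrel t))
    (abs_le_mul_abs_of_pow_mul_eq hk hkeven (inv_nonneg.2 hc.le) hC₁.le (hCq (φ t)).1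
      (hCp t).2 ?_)
  rw [hrel, inv_mul_cancel_left₀ hc.ne']

theorem lipEquivPoly_of_forall_le {p q : ℝ[X]} {t₀ s₀ c : ℝ} (hc : 0 < c)
    (hcv : c * p.eval t₀ = q.eval s₀) (hp : p.natDegree ≠ 0) (heven : Even p.natDegree)
    (hdeg : q.natDegree = p.natDegree) (hk : polyMult q s₀ = polyMult p t₀)
    (hpcrit : ∀ t, (derivative p).eval t = 0 → t = t₀)
    (hqcrit : ∀ s, (derivative q).eval s = 0 → s = s₀)
    (hpmin : ∀ t, p.eval t₀ ≤ p.eval t) (hqmin : ∀ s, q.eval s₀ ≤ q.eval s) :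
    LipEquivPoly p q := by
  have hq : q.natDegree ≠ 0 := by rwa [hdeg]
  obtain ⟨φ, hmono, hsurj, hφt₀, hφ⟩ :=
    exists_strictMono_comp_eq_of_forall_le hc hcv hp hq hpcrit hqcrit hpmin hqmin
  have hcont : Continuous φ := hmono.monotone.continuous_of_surjective hsurj
  have hkeven := even_polyMult_of_forall_le hp hpcrit hpmin
  obtain ⟨Up, hUp, hUp_pos, hUp_deg⟩ := exists_eval_sub_eq_pow_polyMult_mul hp hpcrit hpmin
  obtain ⟨Uq, hUq, hUq_pos, hUq_deg⟩ := exists_eval_sub_eq_pow_polyMult_mul hq hqcrit hqmin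
  obtain ⟨Wp, hWp, hWp_pos, hWp_deg⟩ := exists_eval_derivative_eq_pow_mul hp hpcrit hpmin
  obtain ⟨Wq, hWq, hWq_pos, hWq_deg⟩ := exists_eval_derivative_eq_pow_mul hq hqcrit hqmin
  rw [hk, hdeg] at hUq_deg hWq_deg
  rw [hk] at hUq hWq
  set k := polyMult p t₀
  have hk0 : k ≠ 0 := (polyMult_pos hp t₀).ne'
  have hrel : ∀ t, (φ t - s₀) ^ k * Uq.eval (φ t) = c * ((t - t₀) ^ k * Up.eval t) := fun t => by
    rw [← hUq, ← hUp, hφ, ← hcv]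
    ring
  obtain ⟨M₁, M₂, hM₂, hσ⟩ := exists_div_sub_mem_Icc_of_pow_mul_eq hk0 hkeven hc hUp_pos hUq_pos
    (hUq_deg.trans hUp_deg.symm) (hUp_deg ▸ heven.tsub hkeven) hmono hφt₀ hrel
  obtain ⟨C₃, hC₃, hWUp⟩ := exists_comparable hWp_pos hUp_pos (hWp_deg.trans hUp_deg.symm)
  obtain ⟨C₄, hC₄, hWUq⟩ := exists_comparable hWq_pos hUq_pos (hWq_deg.trans hUq_deg.symm)
  have hder : ∀ t ≠ t₀,
      HasDerivAt φ (c * (derivative p).eval t / (derivative q).eval (φ t)) t := fun t ht =>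
    hasDerivAt_of_comp_eq hcont.continuousAt ((p.hasDerivAt t).const_mul c)
      (q.hasStrictDerivAt (φ t)) (fun h0 => ht (hmono.injective ((hqcrit _ h0).trans hφt₀.symm)))
      hφ
  refine ⟨φ, biLipschitz_of_hasDerivAt (A := M₂⁻¹ * C₄⁻¹ * C₃⁻¹) (B := M₁ * C₄ * C₃)
    (by positivity) ⟨hmono.injective, hsurj⟩ hcont hder fun t ht => ?_, c, hc, hφ⟩
  have hx : t - t₀ ≠ 0 := sub_ne_zero.2 ht
  have hy : φ t - s₀ ≠ 0 := sub_ne_zero.2 (hφt₀ ▸ hmono.injective.ne ht)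
  rw [hWp, hWq, mul_div_eq_of_pow_mul_eq hk0 hx hy (hUp_pos t).ne' (hWq_pos _).ne' (hrel t)]
  exact mul_mem_Icc_mul (by positivity) (by positivity)
    (mul_mem_Icc_mul (by positivity) (by positivity) (hσ t ht)
      (div_mem_Icc_of_le_mul (hWq_pos (φ t)) hC₄ (hWUq (φ t)).2 (hWUq (φ t)).1))
    (div_mem_Icc_of_le_mul (hUp_pos t) hC₃ (hWUp t).1 (hWUp t).2)

end Polynomial

lemma LipEquivPoly.bddAbove_range_iff {p q : ℝ[X]} (h : LipEquivPoly p q) :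
    BddAbove (range p.eval) ↔ BddAbove (range q.eval) := by
  obtain ⟨φ, ⟨⟨-, hsurj⟩, -⟩, c, hc, hφ⟩ := h
  constructor
  · rintro ⟨M, hM⟩
    refine ⟨c * M, forall_mem_range.2 fun s => ?_⟩
    obtain ⟨t, rfl⟩ := hsurj s
    rw [hφ]
    exact mul_le_mul_of_nonneg_left (hM (mem_range_self t)) hc.le
  · rintro ⟨M, hM⟩
    refine ⟨M / c, forall_mem_range.2 fun t => ?_⟩
    rw [le_div_iff₀ hc, mul_comm, ← hφ]
    exact hM (mem_range_self _)

lemma LipEquivPoly.of_neg {p q : ℝ[X]} (h : LipEquivPoly (-p) (-q)) : LipEquivPoly p q := by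
  obtain ⟨φ, hφ, c, hc, h⟩ := h
  exact ⟨φ, hφ, c, hc, fun t => by simpa using h t⟩

lemma exists_pos_mul_eq {a b : ℝ} (h : (0 < a ↔ 0 < b) ∧ (a = 0 ↔ b = 0)) :
    ∃ c, 0 < c ∧ c * a = b := by
  rcases lt_trichotomy a 0 with ha | ha | ha
  · have hb : b < 0 := lt_of_le_of_ne (not_lt.1 (mt h.1.2 ha.not_gt)) (mt h.2.2 ha.ne)
    exact ⟨b / a, div_pos_of_neg_of_neg hb ha, div_mul_cancel₀ _ ha.ne⟩
  · exact ⟨1, one_pos, by rw [ha, h.2.1 ha, mul_zero]⟩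
  · exact ⟨b / a, div_pos (h.1.1 ha) ha, div_mul_cancel₀ _ ha.ne'⟩

/-- Polynomial functions of the same even degree d ≥ 2, each with a unique critical
point of the same multiplicity k and critical values of the same sign, are Lipschitz
equivalent iff the critical points are both absolute minima or both absolute maxima. -/
theorem stmt8 (d : ℕ) (hd : 2 ≤ d) (heven : Even d) (p q : Polynomial ℝ)
    (hpd : p.natDegree = d) (hqd : q.natDegree = d)
    (t₀ s₀ : ℝ) (k : ℕ)
    (hpt : {t : ℝ | (Polynomial.derivative p).eval t = 0} = {t₀})
    (hqs : {t : ℝ | (Polynomial.derivative q).eval t = 0} = {s₀})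
    (hpk : polyMult p t₀ = k) (hqk : polyMult q s₀ = k)
    (hsign : (0 < p.eval t₀ ↔ 0 < q.eval s₀) ∧ (p.eval t₀ = 0 ↔ q.eval s₀ = 0)) :
    LipEquivPoly p q ↔
      ((∀ t : ℝ, p.eval t₀ ≤ p.eval t) ∧ (∀ t : ℝ, q.eval s₀ ≤ q.eval t)) ∨
      ((∀ t : ℝ, p.eval t ≤ p.eval t₀) ∧ (∀ t : ℝ, q.eval t ≤ q.eval s₀)) := by
  have hpcrit : ∀ t, (derivative p).eval t = 0 → t = t₀ := fun t => (Set.ext_iff.1 hpt t).1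
  have hqcrit : ∀ s, (derivative q).eval s = 0 → s = s₀ := fun s => (Set.ext_iff.1 hqs s).1
  have hp : p.natDegree ≠ 0 := by omega
  have hq : q.natDegree ≠ 0 := by omega
  have hpeven : Even p.natDegree := hpd ▸ heven
  have hdeg : q.natDegree = p.natDegree := hqd.trans hpd.symm
  obtain ⟨c, hc, hcv⟩ := exists_pos_mul_eq hsign
  constructor
  · intro h
    rcases forall_eval_le_or_forall_le_eval hpeven hp hpcrit with hpmin | hpmax <;>
      rcases forall_eval_le_or_forall_le_eval (hdeg ▸ hpeven) hq hqcrit with hqmin | hqmax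
    · exact .inl ⟨hpmin, hqmin⟩
    · exact absurd (h.bddAbove_range_iff.2 ⟨q.eval s₀, forall_mem_range.2 hqmax⟩)
        (not_bddAbove_of_tendsto_atTop (tendsto_atTop_of_forall_le hp hpmin))
    · exact absurd (h.bddAbove_range_iff.1 ⟨p.eval t₀, forall_mem_range.2 hpmax⟩)
        (not_bddAbove_of_tendsto_atTop (tendsto_atTop_of_forall_le hq hqmin))
    · exact .inr ⟨hpmax, hqmax⟩
  · rintro (⟨hpmin, hqmin⟩ | ⟨hpmax, hqmax⟩)
    · exact lipEquivPoly_of_forall_le hc hcv hp hpeven hdeg (hqk.trans hpk.symm) hpcrit hqcrit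
        hpmin hqmin
    · exact LipEquivPoly.of_neg (lipEquivPoly_of_forall_le (t₀ := t₀) (s₀ := s₀) hc
        (by simp [hcv]) (by simpa) (by simpa) (by simpa) (by simp [polyMult_neg, hpk, hqk])
        (by simpa using hpcrit) (by simpa using hqcrit) (by simpa using hpmax)
        (by simpa using hqmax))
end

section
/- Let φ : ℝ → ℝ be a bi-Lipschitz homeomorphism satisfying g ∘ φ = c·f for nonconstant polynomial functions f, g of the same degree and a constant c > 0. Then the limits of φ(t)/t as t → +∞ and as t → −∞ exist, are equal, and are a nonzero real number λ. -/
open Filter Bornology Topology Polynomial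

-- `p(x) = x ^ deg p * (reverse p)(x⁻¹)`, and `(reverse p)(0)` is the leading coefficient.
theorem Polynomial.tendsto_eval_div_pow_natDegree_cobounded {𝕜 : Type*} [NormedField 𝕜]
    (p : 𝕜[X]) :
    Tendsto (fun x => p.eval x / x ^ p.natDegree) (cobounded 𝕜) (𝓝 p.leadingCoeff) := by
  have hrev : Tendsto (fun x : 𝕜 => p.reverse.eval x⁻¹) (cobounded 𝕜) (𝓝 p.leadingCoeff) := by
    rw [← coeff_zero_reverse, coeff_zero_eq_eval_zero]
    exact (p.reverse.continuous.tendsto 0).comp tendsto_inv₀_cobounded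
  refine hrev.congr' ?_
  filter_upwards [eventually_ne_cobounded 0] with x hx
  let := invertibleOfNonzero hx
  rw [eq_div_iff (pow_ne_zero _ hx), eval, eval, ← invOf_eq_inv]
  exact eval₂_reverse_mul_pow _ _ _

theorem tendsto_rpow_inv_of_tendsto_pow {α : Type*} {l : Filter α} {f : α → ℝ} {μ : ℝ} {n : ℕ}
    (hn : n ≠ 0) (hf : ∀ᶠ a in l, 0 ≤ f a) (h : Tendsto (fun a => f a ^ n) l (𝓝 μ)) :
    Tendsto f l (𝓝 (μ ^ (n⁻¹ : ℝ))) := by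
  refine ((Real.continuousAt_rpow_const μ _ (.inr (by positivity))).tendsto.comp h).congr' ?_
  filter_upwards [hf] with a ha
  exact Real.pow_rpow_inv_natCast ha hn

theorem Monotone.le_sub_div_self {φ : ℝ → ℝ} (hφ : Monotone φ) {A : ℝ}
    (hexp : ∀ s t, A * |s - t| ≤ |φ s - φ t|) {t : ℝ} (ht : t ≠ 0) :
    A ≤ (φ t - φ 0) / t := by
  have h := hexp t 0
  rw [sub_zero] at h
  rcases ht.lt_or_gt with ht | ht
  · rw [abs_of_neg ht, abs_of_nonpos (sub_nonpos.2 (hφ ht.le))] at h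
    rw [le_div_iff_of_neg ht]
    linarith
  · rw [abs_of_pos ht, abs_of_nonneg (sub_nonneg.2 (hφ ht.le))] at h
    rw [le_div_iff₀ ht]
    linarith

theorem Monotone.eventually_le_div_self_cobounded {φ : ℝ → ℝ} (hφ : Monotone φ) {A : ℝ}
    (hA : 0 < A) (hexp : ∀ s t, A * |s - t| ≤ |φ s - φ t|) :
    ∀ᶠ t in cobounded ℝ, A / 2 ≤ φ t / t := by
  have hsmall : Tendsto (fun t => φ 0 * t⁻¹) (cobounded ℝ) (𝓝 0) := by
    simpa only [mul_zero] using tendsto_inv₀_cobounded.const_mul (φ 0)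
  filter_upwards [eventually_ne_cobounded 0,
    hsmall.eventually (eventually_ge_nhds (by linarith : -(A / 2) < 0))] with t ht hφ0
  have := hφ.le_sub_div_self hexp ht
  rw [sub_div, div_eq_mul_inv (φ 0)] at this
  linarith

theorem tendsto_cobounded_of_expanding {φ : ℝ → ℝ} {A : ℝ} (hA : 0 < A)
    (hexp : ∀ s t, A * |s - t| ≤ |φ s - φ t|) :
    Tendsto φ (cobounded ℝ) (cobounded ℝ) := by
  rw [← tendsto_norm_atTop_iff_cobounded]
  have hlin : Tendsto (fun t : ℝ => A * ‖t‖ - |φ 0|) (cobounded ℝ) atTop :=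
    tendsto_atTop_add_const_right _ _ (tendsto_norm_cobounded_atTop.const_mul_atTop hA)
  refine tendsto_atTop_mono (fun t => ?_) hlin
  have := hexp t 0
  rw [sub_zero] at this
  rw [Real.norm_eq_abs, Real.norm_eq_abs]
  linarith [abs_sub (φ t) (φ 0)]

theorem Monotone.exists_tendsto_div_self_of_eval_eq {p q : ℝ[X]} (hp : 0 < p.natDegree)
    (hdeg : p.natDegree = q.natDegree) {φ : ℝ → ℝ} (hφ : Monotone φ) {A : ℝ} (hA : 0 < A)
    (hexp : ∀ s t, A * |s - t| ≤ |φ s - φ t|) {c : ℝ} (h : ∀ t, q.eval (φ t) = c * p.eval t) :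
    ∃ l, 0 < l ∧ Tendsto (fun t => φ t / t) (cobounded ℝ) (𝓝 l) := by
  have hq : q ≠ 0 := by rintro rfl; rw [natDegree_zero] at hdeg; omega
  have hratio := hφ.eventually_le_div_self_cobounded hA hexp
  have hφ_cobounded := tendsto_cobounded_of_expanding hA hexp
  have hq_lim : Tendsto (fun t => q.eval (φ t) / φ t ^ p.natDegree) (cobounded ℝ)
      (𝓝 q.leadingCoeff) := by
    rw [hdeg]
    exact q.tendsto_eval_div_pow_natDegree_cobounded.comp hφ_cobounded
  have hquot := (p.tendsto_eval_div_pow_natDegree_cobounded.const_mul c).div hq_lim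
    (leadingCoeff_ne_zero.2 hq)
  have hpow : Tendsto (fun t => (φ t / t) ^ p.natDegree) (cobounded ℝ)
      (𝓝 (c * p.leadingCoeff / q.leadingCoeff)) := by
    refine hquot.congr' ?_
    filter_upwards [eventually_ne_cobounded 0, hq_lim.eventually_ne (leadingCoeff_ne_zero.2 hq)]
      with t ht hqt
    obtain ⟨hqt, hφt⟩ := div_ne_zero_iff.1 hqt
    rw [Pi.div_apply, div_pow, ← mul_div_assoc, ← h t]
    field_simp
  have hlim := tendsto_rpow_inv_of_tendsto_pow hp.ne' (hratio.mono fun t ht => by linarith) hpow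
  exact ⟨_, by linarith [_root_.ge_of_tendsto hlim hratio], hlim⟩

theorem BiLipschitz.strictMono_or_strictAnti {φ : ℝ → ℝ} (hφ : BiLipschitz φ) :
    StrictMono φ ∨ StrictAnti φ := by
  obtain ⟨⟨hinj, -⟩, _, B, -, -, hAB⟩ := hφ
  refine Continuous.strictMono_of_inj ?_ hinj
  refine (LipschitzWith.of_dist_le' (K := B) fun s t => ?_).continuous
  simpa only [Real.dist_eq] using (hAB s t).2

theorem stmt12_general (p q : Polynomial ℝ) (hp : 0 < p.natDegree)
    (hdeg : p.natDegree = q.natDegree)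
    (φ : ℝ → ℝ) (hφ : BiLipschitz φ) (c : ℝ)
    (h : ∀ t : ℝ, q.eval (φ t) = c * p.eval t) :
    ∃ l : ℝ, l ≠ 0 ∧
      Filter.Tendsto (fun t : ℝ => φ t / t) Filter.atTop (nhds l) ∧
      Filter.Tendsto (fun t : ℝ => φ t / t) Filter.atBot (nhds l) := by
  suffices ∃ l ≠ 0, Tendsto (fun t => φ t / t) (cobounded ℝ) (𝓝 l) by
    obtain ⟨l, hl, hlim⟩ := this
    exact ⟨l, hl, hlim.mono_left IsOrderBornology.atTop_le_cobounded,
      hlim.mono_left IsOrderBornology.atBot_le_cobounded⟩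
  obtain ⟨A, hA, hexp⟩ : ∃ A, 0 < A ∧ ∀ s t, A * |s - t| ≤ |φ s - φ t| := by
    obtain ⟨-, A, _, hA, -, hAB⟩ := hφ
    exact ⟨A, hA, fun s t => (hAB s t).1⟩
  rcases hφ.strictMono_or_strictAnti with hmono | hanti
  · obtain ⟨l, hl, hlim⟩ := hmono.monotone.exists_tendsto_div_self_of_eval_eq hp hdeg hA hexp h
    exact ⟨l, hl.ne', hlim⟩
  · have hdeg' : p.natDegree = (q.comp (-X)).natDegree := by simp [natDegree_comp, hdeg]
    obtain ⟨l, hl, hlim⟩ := hanti.antitone.neg.exists_tendsto_div_self_of_eval_eq hp hdeg' hA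
      (fun s t => by rw [neg_sub_neg, abs_sub_comm]; exact hexp t s) (by simpa using h)
    exact ⟨-l, neg_ne_zero.2 hl.ne', by simpa [neg_div] using hlim.neg⟩

/-- For a bi-Lipschitz homeomorphism φ with g ∘ φ = c·f for nonconstant polynomial
functions f, g of the same degree and c > 0, the limits of φ(t)/t at +∞ and −∞
exist, coincide, and are a nonzero real number. -/
theorem stmt12 (p q : Polynomial ℝ) (hp : 0 < p.natDegree) (hq : 0 < q.natDegree)
    (hdeg : p.natDegree = q.natDegree)
    (φ : ℝ → ℝ) (hφ : BiLipschitz φ) (c : ℝ) (hc : 0 < c)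
    (h : ∀ t : ℝ, q.eval (φ t) = c * p.eval t) :
    ∃ l : ℝ, l ≠ 0 ∧
      Filter.Tendsto (fun t : ℝ => φ t / t) Filter.atTop (nhds l) ∧
      Filter.Tendsto (fun t : ℝ => φ t / t) Filter.atBot (nhds l) :=
  stmt12_general p q hp hdeg φ hφ c h
end

section
/- Let φ : ℝ → ℝ be a bi-Lipschitz homeomorphism satisfying g ∘ φ = c·f for nonconstant polynomial functions f, g of the same degree and c > 0. Then there exist λ, k ∈ ℝ with λ ≠ 0 such that φ(t) = λt + k + α(t), where α : ℝ → ℝ is a Lipschitz analytic function with α(t) → 0 as |t| → ∞. -/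
/-!
Write `r := C c * p`, so that `q ∘ φ = r` with `deg q = deg r = n`. Choose `l > 0` and `k` so that
`q (l t + k)` and `r t` agree in their coefficients of degree `n` and `n - 1`; this is possible
because `φ → ∞` forces the leading coefficients of `q` and `r` to have the same sign. For `ε > 0`
the polynomials `± (q (l t + k ± ε) - r t)` have degree `n - 1` and positive leading coefficient
`n · lc q · lⁿ⁻¹ · ε`, so eventually `q (l t + k - ε) < q (φ t) < q (l t + k + ε)`, and since `q`
is increasing near infinity, `φ t` lies within `ε` of `l t + k`. The other end, and decreasing `φ`,
follow by the reflections `t ↦ -t` and `y ↦ -y`, which keep `l` and `k` (up to sign).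

For analyticity at `t₀`, factor `q y - q (φ t₀) = (y - φ t₀)ⁿ U y` and `r t - r t₀ = (t - t₀)ᵐ V t`
with `U (φ t₀) ≠ 0 ≠ V t₀`. Since `|φ t - φ t₀| ≍ |t - t₀|`, comparing orders of vanishing gives
`n = m`. Taking `m`-th roots, `G ∘ φ = H` for the analytic functions
`G y = (y - φ t₀) |U y|^(1/m)` and `H t = (t - t₀) |V t|^(1/m)` (the signs agree since `φ` is
monotone), and `G' (φ t₀) ≠ 0`, so `φ = G⁻¹ ∘ H` is analytic by the analytic inverse function
theorem.
-/

open Filter Polynomial Set Topology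

namespace Polynomial

theorem coeff_taylor_of_natDegree_eq_succ {R : Type*} [CommSemiring R] {P : R[X]} {m : ℕ}
    (hP : P.natDegree = m + 1) (h : R) :
    (taylor h P).coeff m = P.coeff m + (m + 1) * P.leadingCoeff * h := by
  have hdeg : (hasseDeriv m P).natDegree < 2 :=
    (natDegree_hasseDeriv_le P m).trans_lt (by omega)
  rw [taylor_coeff, eval_eq_sum_range' hdeg, Finset.sum_range_succ, Finset.sum_range_one,
    hasseDeriv_coeff, hasseDeriv_coeff, leadingCoeff, hP, add_comm 1 m, Nat.choose_succ_self_right]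
  simp

theorem natDegree_taylor_sub_le {R : Type*} [CommRing R] (P : R[X]) (h : R) :
    (taylor h P - P).natDegree ≤ P.natDegree - 1 := by
  refine natDegree_le_iff_coeff_eq_zero.2 fun N hN => ?_
  rw [coeff_sub]
  rcases (by omega : N = P.natDegree ∨ P.natDegree < N) with rfl | hN
  · rw [coeff_taylor_natDegree, leadingCoeff, sub_self]
  · rw [coeff_eq_zero_of_natDegree_lt hN, coeff_eq_zero_of_natDegree_lt (natDegree_taylor P h ▸ hN),
      sub_self]

theorem natDegree_comp_neg_X {R : Type*} [CommRing R] [IsDomain R] (P : R[X]) :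
    (P.comp (-X)).natDegree = P.natDegree := by
  simp [natDegree_comp]

theorem exists_eval_sub_eq_pow_mul {R : Type*} [CommRing R] [IsDomain R] {P : R[X]}
    (hP : 0 < P.natDegree) (x : R) :
    ∃ m, 0 < m ∧ ∃ V : R[X], V.eval x ≠ 0 ∧ ∀ y, P.eval y - P.eval x = (y - x) ^ m * V.eval y := by
  set P₀ := P - C (P.eval x)
  have hP₀ : P₀ ≠ 0 := fun h0 => by
    have := congrArg natDegree h0
    rw [natDegree_sub_C, natDegree_zero] at this
    omega
  refine ⟨rootMultiplicity x P₀, (rootMultiplicity_pos hP₀).2 (by simp [P₀]), _,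
    eval_divByMonic_pow_rootMultiplicity_ne_zero x hP₀, fun y => ?_⟩
  simpa [P₀] using (congrArg (eval y) (pow_mul_divByMonic_rootMultiplicity_eq P₀ x)).symm

theorem eventually_atTop_eval_pos {P : ℝ[X]} {m : ℕ} (hdeg : P.natDegree ≤ m)
    (hm : 0 < P.coeff m) : ∀ᶠ x in atTop, 0 < P.eval x := by
  have hnat : P.natDegree = m := hdeg.antisymm (le_natDegree_of_ne_zero hm.ne')
  have hlead : 0 < P.leadingCoeff := by rwa [leadingCoeff, hnat]
  rcases m.eq_zero_or_pos with rfl | hm₀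
  · refine Eventually.of_forall fun x => ?_
    rw [eq_C_of_natDegree_eq_zero hnat, eval_C]
    exact hm
  · exact (tendsto_atTop_of_leadingCoeff_nonneg P
      (natDegree_pos_iff_degree_pos.1 (hnat ▸ hm₀)) hlead.le).eventually_gt_atTop 0

theorem exists_strictMonoOn_Ici {P : ℝ[X]} (hdeg : 0 < P.natDegree) (hlead : 0 < P.leadingCoeff) :
    ∃ M, StrictMonoOn (fun x => P.eval x) (Ici M) := by
  have hcoeff : (derivative P).coeff (P.natDegree - 1) = P.leadingCoeff * P.natDegree := by
    rw [coeff_derivative, Nat.sub_add_cancel hdeg, leadingCoeff]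
    push_cast [Nat.cast_sub hdeg]
    ring
  obtain ⟨M, hM⟩ := (eventually_atTop_eval_pos (natDegree_derivative_le P)
    (hcoeff ▸ mul_pos hlead (Nat.cast_pos.2 hdeg))).exists_forall_of_atTop
  refine ⟨M, strictMonoOn_of_deriv_pos (convex_Ici M) P.continuous.continuousOn fun x hx => ?_⟩
  rw [interior_Ici] at hx
  rw [Polynomial.deriv]
  exact hM x (le_of_lt hx)

theorem exists_comp_affine_sub_degree_lt {q r : ℝ[X]} {m : ℕ} (hq : q.natDegree = m + 1)
    (hr : r.natDegree = m + 1) (hqr : 0 < r.leadingCoeff * q.leadingCoeff) :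
    ∃ l > 0, ∃ k, (q.comp (C l * X + C k) - r).degree < m := by
  have hb : q.leadingCoeff ≠ 0 := by rintro h0; simp [h0] at hqr
  have ha : r.leadingCoeff ≠ 0 := by rintro h0; simp [h0] at hqr
  set l := (r.leadingCoeff / q.leadingCoeff) ^ (((m + 1 : ℕ) : ℝ)⁻¹)
  have hratio : 0 < r.leadingCoeff / q.leadingCoeff := by
    rw [show r.leadingCoeff / q.leadingCoeff = r.leadingCoeff * q.leadingCoeff / q.leadingCoeff ^ 2
      by field_simp]
    positivity
  have hl : 0 < l := Real.rpow_pos_of_pos hratio _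
  have hlpow : l ^ (m + 1) = r.leadingCoeff / q.leadingCoeff :=
    Real.rpow_inv_natCast_pow hratio.le (Nat.succ_ne_zero m)
  set P := q.comp (C l * X)
  have hPdeg : P.natDegree = m + 1 := by simp [P, natDegree_comp, natDegree_C_mul_X _ hl.ne', hq]
  have hPlead : P.leadingCoeff = r.leadingCoeff := by
    rw [leadingCoeff_comp (by rw [natDegree_C_mul_X _ hl.ne']; simp), leadingCoeff_C_mul_X, hq,
      hlpow]
    field_simp
  set s := (r.coeff m - P.coeff m) / ((m + 1) * r.leadingCoeff)
  refine ⟨l, hl, l * s, ?_⟩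
  have hcomp : q.comp (C l * X + C (l * s)) = taylor s P := by
    rw [taylor_apply, comp_assoc]
    simp [mul_add]
  rw [hcomp, degree_lt_iff_coeff_zero]
  intro N hN
  rw [coeff_sub]
  rcases (by omega : N = m ∨ N = m + 1 ∨ m + 1 < N) with rfl | rfl | hN
  · rw [coeff_taylor_of_natDegree_eq_succ hPdeg, hPlead]
    simp only [s]
    field_simp
    ring
  · rw [← hPdeg, coeff_taylor_natDegree, hPdeg, ← hr, ← leadingCoeff, hPlead, sub_self]
  · rw [coeff_eq_zero_of_natDegree_lt (by rwa [natDegree_taylor, hPdeg]),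
      coeff_eq_zero_of_natDegree_lt (by rwa [hr]), sub_self]

theorem analyticAt {𝕜 : Type*} [NontriviallyNormedField 𝕜] (P : 𝕜[X]) (x : 𝕜) :
    AnalyticAt 𝕜 (fun y => P.eval y) x := by
  have := analyticAt_id.aeval_polynomial (𝕜 := 𝕜) (z := x) P
  simp only [coe_aeval_eq_eval, id] at this
  exact this

end Polynomial

theorem leadingCoeff_mul_pos_of_eval_comp_eq {q r : ℝ[X]} (hq : q ≠ 0) (hr : r ≠ 0) {ψ : ℝ → ℝ}
    (hψ : Tendsto ψ atTop atTop) (h : ∀ t, q.eval (ψ t) = r.eval t) :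
    0 < r.leadingCoeff * q.leadingCoeff := by
  set b := q.leadingCoeff
  have hb : b ≠ 0 := leadingCoeff_ne_zero.2 hq
  have hpos : ∀ᶠ t in atTop, 0 < b * r.eval t := by
    have := eventually_atTop_eval_pos (P := C b * q) le_rfl
      (by rw [← leadingCoeff, leadingCoeff_C_mul_of_isUnit hb.isUnit]; exact mul_self_pos.2 hb)
    filter_upwards [hψ.eventually this] with t ht
    simpa [h] using ht
  by_contra! hneg
  have hneg' : r.leadingCoeff * b < 0 :=
    hneg.lt_of_ne (mul_ne_zero (leadingCoeff_ne_zero.2 hr) hb)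
  have := eventually_atTop_eval_pos (P := -(C b * r)) le_rfl
    (by rw [← leadingCoeff, leadingCoeff_neg, leadingCoeff_C_mul_of_isUnit hb.isUnit]; linarith)
  obtain ⟨t, h1, h2⟩ := (hpos.and this).exists
  rw [eval_neg, eval_mul, eval_C, neg_pos] at h2
  linarith

theorem tendsto_sub_id_of_eval_comp_eq {P r : ℝ[X]} {m : ℕ} (hP : P.natDegree = m + 1)
    (hlead : 0 < P.leadingCoeff) (hPr : (P - r).degree < m) {ψ : ℝ → ℝ}
    (hψ : Tendsto ψ atTop atTop) (h : ∀ t, P.eval (ψ t) = r.eval t) :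
    Tendsto (fun t => ψ t - t) atTop (𝓝 0) := by
  obtain ⟨M, hM⟩ := exists_strictMonoOn_Ici (hP ▸ m.succ_pos) hlead
  have hshift : ∀ ε, (taylor ε P - r).natDegree ≤ m ∧
      (taylor ε P - r).coeff m = (m + 1) * P.leadingCoeff * ε := by
    intro ε
    have hsplit : taylor ε P - r = (taylor ε P - P) + (P - r) := by ring
    have hPr' : (P - r).natDegree ≤ m := natDegree_le_iff_degree_le.2 hPr.le
    refine ⟨hsplit ▸ (natDegree_add_le _ _).trans (max_le ?_ hPr'), ?_⟩
    · exact (natDegree_taylor_sub_le P ε).trans (by omega)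
    · rw [hsplit, coeff_add, coeff_sub, coeff_taylor_of_natDegree_eq_succ hP,
        (degree_lt_iff_coeff_zero _ _).1 hPr m le_rfl]
      ring
  refine tendsto_order.2 ⟨fun ε hε => ?_, fun ε hε => ?_⟩
  · have hbelow := eventually_atTop_eval_pos (P := -(taylor ε P - r))
      ((natDegree_neg _).trans_le (hshift ε).1)
      (by rw [coeff_neg, (hshift ε).2, neg_pos]; exact mul_neg_of_pos_of_neg (by positivity) hε)
    filter_upwards [hbelow, hψ.eventually_ge_atTop M, eventually_ge_atTop (M - ε)]
      with t h1 h2 h3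
    have hlt : P.eval (t + ε) < P.eval (ψ t) := by simpa [taylor_eval, h] using h1
    have := (hM.lt_iff_lt (show M ≤ t + ε by linarith) h2).1 hlt
    linarith
  · have habove := eventually_atTop_eval_pos (hshift ε).1
      (by rw [(hshift ε).2]; exact mul_pos (by positivity) hε)
    filter_upwards [habove, hψ.eventually_ge_atTop M, eventually_ge_atTop M] with t h1 h2 h3
    have hlt : P.eval (ψ t) < P.eval (t + ε) := by simpa [taylor_eval, h] using h1
    have := (hM.lt_iff_lt h2 (show M ≤ t + ε by linarith)).1 hlt
    linarith

theorem tendsto_sub_affine_atTop {q r : ℝ[X]} {m : ℕ} (hq : q.natDegree = m + 1) {l k : ℝ}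
    (hl : 0 < l) (hqr : (q.comp (C l * X + C k) - r).degree < m) {φ : ℝ → ℝ}
    (hφ : Tendsto φ atTop atTop) (h : ∀ t, q.eval (φ t) = r.eval t) :
    Tendsto (fun t => φ t - (l * t + k)) atTop (𝓝 0) := by
  wlog hlead : 0 < q.leadingCoeff generalizing q r
  · have hq0 : q.leadingCoeff ≠ 0 := leadingCoeff_ne_zero.2 (by rintro rfl; simp at hq)
    refine this (q := -q) (r := -r) (by rwa [natDegree_neg]) ?_ (by simpa using h) ?_
    · rwa [neg_comp, ← neg_sub', degree_neg]
    · rw [leadingCoeff_neg]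
      exact neg_pos.2 ((not_lt.1 hlead).lt_of_ne hq0)
  set P := q.comp (C l * X + C k)
  have hP : P.natDegree = m + 1 := by
    rw [natDegree_comp, natDegree_linear hl.ne', hq, mul_one]
  have hPlead : 0 < P.leadingCoeff := by
    rw [leadingCoeff_comp (by rw [natDegree_linear hl.ne']; simp), leadingCoeff_linear hl.ne']
    positivity
  have hψ : Tendsto (fun t => (φ t - k) / l) atTop atTop :=
    (tendsto_atTop_add_const_right _ (-k) hφ).atTop_div_const hl
  have hPψ : ∀ t, P.eval ((φ t - k) / l) = r.eval t := fun t => by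
    simp [P, mul_div_cancel₀ _ hl.ne', h]
  have := (tendsto_sub_id_of_eval_comp_eq hP hPlead hqr hψ hPψ).const_mul l
  rw [mul_zero] at this
  refine this.congr fun t => ?_
  field_simp
  ring

theorem exists_tendsto_sub_affine_of_strictMono {q r : ℝ[X]} {m : ℕ} (hq : q.natDegree = m + 1)
    (hr : r.natDegree = m + 1) {φ : ℝ → ℝ} (hmono : StrictMono φ) (hsurj : Function.Surjective φ)
    (h : ∀ t, q.eval (φ t) = r.eval t) :
    ∃ l > 0, ∃ k, Tendsto (fun t => φ t - (l * t + k)) atTop (𝓝 0) ∧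
      Tendsto (fun t => φ t - (l * t + k)) atBot (𝓝 0) := by
  have htop : ∀ {ψ : ℝ → ℝ}, StrictMono ψ → Function.Surjective ψ → Tendsto ψ atTop atTop :=
    fun hψ hs => hψ.monotone.tendsto_atTop_atTop fun b => (hs b).imp fun _ ha => ha.ge
  obtain ⟨l, hl, k, hlk⟩ := exists_comp_affine_sub_degree_lt hq hr
    (leadingCoeff_mul_pos_of_eval_comp_eq (ne_zero_of_natDegree_gt (n := m) (by omega))
      (ne_zero_of_natDegree_gt (n := m) (by omega)) (htop hmono hsurj) h)
  refine ⟨l, hl, k, tendsto_sub_affine_atTop hq hl hlk (htop hmono hsurj) h, ?_⟩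
  have hreflect := tendsto_sub_affine_atTop (q := q.comp (-X)) (r := r.comp (-X)) (k := -k)
    (by rwa [natDegree_comp_neg_X]) hl ?_ (φ := fun t => -φ (-t))
    (htop (fun s t hst => neg_lt_neg (hmono (neg_lt_neg hst)))
      (fun y => by obtain ⟨t, ht⟩ := hsurj (-y); exact ⟨-t, by simp [ht]⟩))
    (fun t => by simp [h])
  · refine ((hreflect.comp tendsto_neg_atBot_atTop).neg.congr fun t => ?_).trans (by rw [neg_zero])
    simp only [Function.comp_apply, neg_neg]
    ring
  · have hcomp : (q.comp (-X)).comp (C l * X + C (-k)) - r.comp (-X) =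
        (q.comp (C l * X + C k) - r).comp (-X) := by
      simp only [sub_comp, comp_assoc, neg_comp, X_comp, add_comp, mul_comp, C_comp, map_neg]
      ring_nf
    rwa [hcomp, degree_comp_neg_X]

theorem exists_tendsto_sub_affine {q r : ℝ[X]} {m : ℕ} (hq : q.natDegree = m + 1)
    (hr : r.natDegree = m + 1) {φ : ℝ → ℝ} (hbij : Function.Bijective φ) (hcont : Continuous φ)
    (h : ∀ t, q.eval (φ t) = r.eval t) :
    ∃ l ≠ 0, ∃ k, Tendsto (fun t => φ t - (l * t + k)) atTop (𝓝 0) ∧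
      Tendsto (fun t => φ t - (l * t + k)) atBot (𝓝 0) := by
  rcases hcont.strictMono_of_inj hbij.1 with hmono | hanti
  · obtain ⟨l, hl, k, htop, hbot⟩ := exists_tendsto_sub_affine_of_strictMono hq hr hmono hbij.2 h
    exact ⟨l, hl.ne', k, htop, hbot⟩
  · obtain ⟨l, hl, k, htop, hbot⟩ := exists_tendsto_sub_affine_of_strictMono (q := q.comp (-X))
      (by rwa [natDegree_comp_neg_X]) hr (φ := fun t => -φ t) hanti.neg
      (fun y => (hbij.2 (-y)).imp fun t ht => by simp [ht]) (fun t => by simp [h])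
    have hneg : ∀ t, φ t - (-l * t + -k) = -(-φ t - (l * t + k)) := fun t => by ring
    refine ⟨-l, neg_ne_zero.2 hl.ne', -k, ?_, ?_⟩
    · simpa only [hneg, neg_zero] using htop.neg
    · simpa only [hneg, neg_zero] using hbot.neg

theorem AnalyticAt.rpow_const {f : ℝ → ℝ} {x : ℝ} (hf : AnalyticAt ℝ f x) (hx : 0 < f x) (p : ℝ) :
    AnalyticAt ℝ (fun y => f y ^ p) x := by
  refine (AnalyticAt.rexp' (f := fun y => Real.log (f y) * p)
    ((hf.log hx).mul analyticAt_const)).congr ?_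
  filter_upwards [hf.continuousAt.eventually (lt_mem_nhds hx)] with y hy
  rw [Real.rpow_def_of_pos hy]

theorem AnalyticAt.abs {f : ℝ → ℝ} {x : ℝ} (hf : AnalyticAt ℝ f x) (hx : f x ≠ 0) :
    AnalyticAt ℝ (fun y => |f y|) x := by
  rcases hx.lt_or_gt with hneg | hpos
  · refine hf.neg.congr ?_
    filter_upwards [hf.continuousAt.eventually (gt_mem_nhds hneg)] with y hy
    exact (abs_of_neg hy).symm
  · refine hf.congr ?_
    filter_upwards [hf.continuousAt.eventually (lt_mem_nhds hpos)] with y hy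
    exact (abs_of_pos hy).symm

theorem analyticAt_sub_mul_abs_rpow {w : ℝ → ℝ} {x₀ : ℝ} (hw : AnalyticAt ℝ w x₀)
    (hw₀ : w x₀ ≠ 0) (p : ℝ) :
    AnalyticAt ℝ (fun x => (x - x₀) * |w x| ^ p) x₀ ∧
      deriv (fun x => (x - x₀) * |w x| ^ p) x₀ ≠ 0 := by
  have hroot := (hw.abs hw₀).rpow_const (abs_pos.2 hw₀) p
  refine ⟨(analyticAt_id.sub analyticAt_const).mul hroot, ?_⟩
  have hderiv : HasDerivAt (fun x => (x - x₀) * |w x| ^ p)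
      (1 * |w x₀| ^ p + (x₀ - x₀) * deriv (fun x => |w x| ^ p) x₀) x₀ :=
    ((hasDerivAt_id' x₀).sub_const x₀).mul hroot.differentiableAt.hasDerivAt
  rw [hderiv.deriv]
  simpa using (Real.rpow_pos_of_pos (abs_pos.2 hw₀) p).ne'

theorem analyticAt_of_comp_of_deriv_ne_zero {𝕜 : Type*} [NontriviallyNormedField 𝕜]
    [CompleteSpace 𝕜] [CharZero 𝕜] {G φ : 𝕜 → 𝕜} {x : 𝕜} (hG : AnalyticAt 𝕜 G (φ x))
    (hG' : deriv G (φ x) ≠ 0) (hφ : ContinuousAt φ x) (hGφ : AnalyticAt 𝕜 (G ∘ φ) x) :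
    AnalyticAt 𝕜 φ x := by
  refine ((hG.analyticAt_localInverse hG').comp (f := G ∘ φ) hGφ).congr ?_
  filter_upwards [hφ.eventually (hG.hasStrictDerivAt.eventually_left_inverse hG')] with t ht
  exact ht

theorem le_of_mul_pow_le {f g : ℝ → ℝ} {x₀ : ℝ} {i j : ℕ} (hf : ContinuousAt f x₀)
    (hf₀ : 0 < f x₀) (hg : ContinuousAt g x₀)
    (h : ∀ x ≠ x₀, f x * |x - x₀| ^ i ≤ g x * |x - x₀| ^ j) : j ≤ i := by
  by_contra! hij
  have hlim : Tendsto (fun x => g x * |x - x₀| ^ (j - i)) (𝓝[≠] x₀) (𝓝 0) := by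
    have hcont : ContinuousAt (fun x => g x * |x - x₀| ^ (j - i)) x₀ :=
      hg.mul (by fun_prop)
    simpa [zero_pow (Nat.sub_ne_zero_of_lt hij)] using hcont.tendsto.mono_left nhdsWithin_le_nhds
  have hle : ∀ᶠ x in 𝓝[≠] x₀, f x ≤ g x * |x - x₀| ^ (j - i) := by
    filter_upwards [self_mem_nhdsWithin] with x hx
    have hd : 0 < |x - x₀| ^ i := pow_pos (abs_pos.2 (sub_ne_zero.2 hx)) i
    refine le_of_mul_le_mul_right ?_ hd
    rw [mul_assoc, pow_sub_mul_pow _ hij.le]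
    exact h x hx
  have := le_of_tendsto_of_tendsto (hf.tendsto.mono_left nhdsWithin_le_nhds) hlim hle
  linarith

theorem eq_of_pow_mul_eq_pow_mul {φ U V : ℝ → ℝ} {t₀ A B : ℝ} {m n : ℕ} (hA : 0 < A)
    (hlow : ∀ t, A * |t - t₀| ≤ |φ t - φ t₀|) (hup : ∀ t, |φ t - φ t₀| ≤ B * |t - t₀|)
    (hφ : ContinuousAt φ t₀) (hU : ContinuousAt U (φ t₀)) (hU₀ : U (φ t₀) ≠ 0)
    (hV : ContinuousAt V t₀) (hV₀ : V t₀ ≠ 0)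
    (h : ∀ t, (φ t - φ t₀) ^ n * U (φ t) = (t - t₀) ^ m * V t) : n = m := by
  have habs : ∀ t, |φ t - φ t₀| ^ n * |U (φ t)| = |V t| * |t - t₀| ^ m := fun t => by
    simpa [abs_mul, abs_pow, mul_comm] using congrArg abs (h t)
  have hUφ : ContinuousAt (fun t => |U (φ t)|) t₀ := (hU.comp hφ).abs
  refine le_antisymm (le_of_mul_pow_le hV.abs (abs_pos.2 hV₀) (hUφ.const_mul (B ^ n))
    fun t _ => ?_) (le_of_mul_pow_le (hUφ.const_mul (A ^ n)) (by positivity) hV.abs fun t _ => ?_)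
  · calc |V t| * |t - t₀| ^ m = |φ t - φ t₀| ^ n * |U (φ t)| := (habs t).symm
      _ ≤ (B * |t - t₀|) ^ n * |U (φ t)| := by gcongr; exact hup t
      _ = B ^ n * |U (φ t)| * |t - t₀| ^ n := by ring
  · calc A ^ n * |U (φ t)| * |t - t₀| ^ n = (A * |t - t₀|) ^ n * |U (φ t)| := by ring
      _ ≤ |φ t - φ t₀| ^ n * |U (φ t)| := by gcongr; exact hlow t
      _ = |V t| * |t - t₀| ^ m := habs t

theorem StrictMono.sign_sub {φ : ℝ → ℝ} (hφ : StrictMono φ) (s t : ℝ) :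
    SignType.sign (φ s - φ t) = SignType.sign (s - t) := by
  rcases lt_trichotomy s t with hst | rfl | hst
  · rw [sign_neg (sub_neg.2 (hφ hst)), sign_neg (sub_neg.2 hst)]
  · simp
  · rw [sign_pos (sub_pos.2 (hφ hst)), sign_pos (sub_pos.2 hst)]

theorem analyticAt_of_eval_comp_eq_of_strictMono {q r : ℝ[X]} (hq : 0 < q.natDegree)
    (hr : 0 < r.natDegree) {φ : ℝ → ℝ} (hmono : StrictMono φ) (hcont : Continuous φ)
    {A B t₀ : ℝ} (hA : 0 < A) (hlow : ∀ t, A * |t - t₀| ≤ |φ t - φ t₀|)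
    (hup : ∀ t, |φ t - φ t₀| ≤ B * |t - t₀|) (h : ∀ t, q.eval (φ t) = r.eval t) :
    AnalyticAt ℝ φ t₀ := by
  obtain ⟨n, hn, U, hU₀, hU⟩ := exists_eval_sub_eq_pow_mul hq (φ t₀)
  obtain ⟨m, -, V, hV₀, hV⟩ := exists_eval_sub_eq_pow_mul hr t₀
  have hfac : ∀ t, (φ t - φ t₀) ^ n * U.eval (φ t) = (t - t₀) ^ m * V.eval t := fun t => by
    rw [← hU, ← hV, h, h]
  obtain rfl : n = m := eq_of_pow_mul_eq_pow_mul hA hlow hup hcont.continuousAt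
    U.continuous.continuousAt hU₀ V.continuous.continuousAt hV₀ hfac
  set G := fun y => (y - φ t₀) * |U.eval y| ^ (n⁻¹ : ℝ)
  set H := fun t => (t - t₀) * |V.eval t| ^ (n⁻¹ : ℝ)
  have hGH : G ∘ φ = H := funext fun t => by
    have habs : |φ t - φ t₀| * |U.eval (φ t)| ^ (n⁻¹ : ℝ) = |t - t₀| * |V.eval t| ^ (n⁻¹ : ℝ) := by
      rw [← pow_left_inj₀ (by positivity) (by positivity) hn.ne', mul_pow, mul_pow,
        Real.rpow_inv_natCast_pow (abs_nonneg _) hn.ne',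
        Real.rpow_inv_natCast_pow (abs_nonneg _) hn.ne', ← abs_pow, ← abs_pow, ← abs_mul,
        ← abs_mul, hfac]
    calc G (φ t) = SignType.sign (φ t - φ t₀) * (|φ t - φ t₀| * |U.eval (φ t)| ^ (n⁻¹ : ℝ)) := by
          rw [← mul_assoc, sign_mul_abs]
      _ = H t := by rw [habs, hmono.sign_sub, ← mul_assoc, sign_mul_abs]
  obtain ⟨hGan, hG'⟩ := analyticAt_sub_mul_abs_rpow (U.analyticAt _) hU₀ (n⁻¹ : ℝ)
  exact analyticAt_of_comp_of_deriv_ne_zero hGan hG' hcont.continuousAt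
    (hGH ▸ (analyticAt_sub_mul_abs_rpow (V.analyticAt _) hV₀ (n⁻¹ : ℝ)).1)

theorem analyticAt_of_eval_comp_eq {q r : ℝ[X]} (hq : 0 < q.natDegree) (hr : 0 < r.natDegree)
    {φ : ℝ → ℝ} (hinj : Function.Injective φ) (hcont : Continuous φ) {A B : ℝ} (hA : 0 < A)
    (hlow : ∀ s t, A * |s - t| ≤ |φ s - φ t|) (hup : ∀ s t, |φ s - φ t| ≤ B * |s - t|)
    (h : ∀ t, q.eval (φ t) = r.eval t) (t₀ : ℝ) : AnalyticAt ℝ φ t₀ := by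
  rcases hcont.strictMono_of_inj hinj with hmono | hanti
  · exact analyticAt_of_eval_comp_eq_of_strictMono hq hr hmono hcont hA (hlow · t₀) (hup · t₀) h
  · have hneg : ∀ t, |t - -t₀| = |-t - t₀| := fun t => by rw [← abs_neg]; ring_nf
    have hψ := analyticAt_of_eval_comp_eq_of_strictMono (r := r.comp (-X)) (φ := fun t => φ (-t))
      (t₀ := -t₀) hq (by rwa [natDegree_comp_neg_X]) (fun s t hst => hanti (neg_lt_neg hst))
      (hcont.comp continuous_neg) hA (fun t => by rw [hneg, neg_neg]; exact hlow (-t) t₀)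
      (fun t => by rw [hneg, neg_neg]; exact hup (-t) t₀) (fun t => by simp [h])
    simpa [Function.comp_def] using hψ.comp (f := fun t => -t) analyticAt_id.neg

theorem stmt14_general (p q : Polynomial ℝ) (hq : 0 < q.natDegree)
    (hdeg : p.natDegree = q.natDegree)
    (φ : ℝ → ℝ) (hφ : BiLipschitz φ) (c : ℝ) (hc : 0 < c)
    (h : ∀ t : ℝ, q.eval (φ t) = c * p.eval t) :
    ∃ (l k : ℝ) (α : ℝ → ℝ), l ≠ 0 ∧
      (∀ t : ℝ, φ t = l * t + k + α t) ∧
      (∃ K : NNReal, LipschitzWith K α) ∧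
      (∀ x : ℝ, AnalyticAt ℝ α x) ∧
      Filter.Tendsto α Filter.atTop (nhds 0) ∧
      Filter.Tendsto α Filter.atBot (nhds 0) := by
  obtain ⟨hbij, A, B, hA, hB, hAB⟩ := hφ
  have hlip : LipschitzWith ⟨B, hB.le⟩ φ :=
    LipschitzWith.of_dist_le_mul fun s t => by rw [Real.dist_eq, Real.dist_eq]; exact (hAB s t).2
  have hr : (C c * p).natDegree = q.natDegree := by rw [natDegree_C_mul hc.ne', hdeg]
  have hqr : ∀ t, q.eval (φ t) = (C c * p).eval t := by simp [h]
  obtain ⟨m, hm⟩ := Nat.exists_eq_add_one_of_ne_zero hq.ne'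
  obtain ⟨l, hl, k, htop, hbot⟩ :=
    exists_tendsto_sub_affine hm (hr.trans hm) hbij hlip.continuous hqr
  have haffine : LipschitzWith ‖l‖₊ fun t => l * t + k :=
    LipschitzWith.of_dist_le_mul fun s t => by simp [Real.dist_eq, ← mul_sub, abs_mul]
  refine ⟨l, k, fun t => φ t - (l * t + k), hl, fun t => by ring, ⟨_, hlip.sub haffine⟩,
    fun x => ?_, htop, hbot⟩
  exact (analyticAt_of_eval_comp_eq hq (hr ▸ hq) hbij.1 hlip.continuous hA (hAB · · |>.1)
    (hAB · · |>.2) hqr x).sub (analyticAt_const.mul analyticAt_id |>.add analyticAt_const)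

/-- A bi-Lipschitz homeomorphism φ with g ∘ φ = c·f for nonconstant polynomial
functions f, g of the same degree and c > 0 has the form φ(t) = λt + k + α(t) with
λ ≠ 0 and α a Lipschitz analytic function tending to 0 as |t| → ∞. -/
theorem stmt14 (p q : Polynomial ℝ) (hp : 0 < p.natDegree) (hq : 0 < q.natDegree)
    (hdeg : p.natDegree = q.natDegree)
    (φ : ℝ → ℝ) (hφ : BiLipschitz φ) (c : ℝ) (hc : 0 < c)
    (h : ∀ t : ℝ, q.eval (φ t) = c * p.eval t) :
    ∃ (l k : ℝ) (α : ℝ → ℝ), l ≠ 0 ∧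
      (∀ t : ℝ, φ t = l * t + k + α t) ∧
      (∃ K : NNReal, LipschitzWith K α) ∧
      (∀ x : ℝ, AnalyticAt ℝ α x) ∧
      Filter.Tendsto α Filter.atTop (nhds 0) ∧
      Filter.Tendsto α Filter.atBot (nhds 0) :=
  stmt14_general p q hq hdeg φ hφ c hc h
end

section
/- Let φ : ℝ → ℝ be a bi-Lipschitz function satisfying g ∘ φ = f for some nonconstant polynomials f, g, let λ ≠ 0 be real, and let β > 1 be rational. Define Φ on the open right half-plane by Φ(x, t·x^β) = (λx, |λ|^β·φ(t)·x^β) for x > 0, t ∈ ℝ. Then for every δ > 0, Φ is Lipschitz on the strip {(x, y) : 0 < x < δ}. -/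
open Finset Polynomial Filter

section Algebra

variable {R : Type*} [CommRing R]

def geomSum₂ (k : ℕ) (x y : R) : R := ∑ i ∈ range k, x ^ i * y ^ (k - 1 - i)

theorem geomSum₂_mul_sub (k : ℕ) (x y : R) : geomSum₂ k x y * (x - y) = x ^ k - y ^ k :=
  geom_sum₂_mul x y k

theorem geomSum₂_mul_mul (k : ℕ) (r x y : R) :
    geomSum₂ k (r * x) (r * y) = r ^ (k - 1) * geomSum₂ k x y := by
  rw [geomSum₂, geomSum₂, mul_sum]
  refine sum_congr rfl fun i hi => ?_
  have hik : i + (k - 1 - i) = k - 1 := by have := mem_range.1 hi; omega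
  rw [mul_pow, mul_pow, mul_mul_mul_comm, ← pow_add, hik]

-- A polynomial formula for `(P x - P y) / (x - y)`, hence meaningful also at `x = y`.
def divDiff (P : R[X]) (x y : R) : R := P.sum fun k a => a * geomSum₂ k x y

theorem eval_sub_eval_eq_divDiff_mul (P : R[X]) (x y : R) :
    P.eval x - P.eval y = divDiff P x y * (x - y) := by
  simp only [eval_eq_sum, divDiff, Polynomial.sum_def, ← sum_sub_distrib, sum_mul]
  exact sum_congr rfl fun k _ => by rw [mul_assoc, geomSum₂_mul_sub, mul_sub]

theorem divDiff_eq_divDiff_eraseLead_add (P : R[X]) (x y : R) :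
    divDiff P x y = divDiff P.eraseLead x y + P.leadingCoeff * geomSum₂ P.natDegree x y := by
  conv_lhs => rw [← eraseLead_add_monomial_natDegree_leadingCoeff P]
  rw [divDiff, sum_add_index _ _ _ (fun _ => zero_mul _) (fun _ _ _ => add_mul _ _ _),
    sum_monomial_index (n := P.natDegree) _ _ (zero_mul _), divDiff]

end Algebra

section GeomSumBounds

variable {k : ℕ} {x y x' y' r : ℝ}

theorem abs_geomSum₂_le (hx : |x| ≤ r) (hy : |y| ≤ r) : |geomSum₂ k x y| ≤ k * r ^ (k - 1) := by
  have hr : 0 ≤ r := (abs_nonneg x).trans hx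
  calc |geomSum₂ k x y| ≤ ∑ i ∈ range k, |x| ^ i * |y| ^ (k - 1 - i) := by
        simpa only [geomSum₂, abs_mul, abs_pow] using
          abs_sum_le_sum_abs (fun i => x ^ i * y ^ (k - 1 - i)) (range k)
    _ ≤ ∑ i ∈ range k, r ^ i * r ^ (k - 1 - i) := by gcongr
    _ = k * r ^ (k - 1) := geom_sum₂_self r k

theorem mul_abs_geomSum₂_le (hx : |x| ≤ r) (hy : |y| ≤ r) : r * |geomSum₂ k x y| ≤ k * r ^ k := by
  have hr : 0 ≤ r := (abs_nonneg x).trans hx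
  rcases k with _ | k
  · simp [geomSum₂]
  · calc r * |geomSum₂ (k + 1) x y| ≤ r * ((k + 1 : ℕ) * r ^ k) := by
          gcongr; exact abs_geomSum₂_le hx hy
      _ = (k + 1 : ℕ) * r ^ (k + 1) := by ring

theorem pow_max_le_geomSum₂ (hk : k ≠ 0) (hx : 0 ≤ x) (hy : 0 ≤ y) :
    max x y ^ (k - 1) ≤ geomSum₂ k x y := by
  have hterm : ∀ i ∈ range k, 0 ≤ x ^ i * y ^ (k - 1 - i) := fun i _ => by positivity
  rw [geomSum₂]
  rcases max_choice x y with hm | hm <;> rw [hm]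
  · simpa using single_le_sum hterm (mem_range.2 (Nat.sub_one_lt hk))
  · simpa using single_le_sum hterm (mem_range.2 (Nat.pos_of_ne_zero hk))

theorem pow_max_abs_le_abs_geomSum₂ (hk : k ≠ 0) (hxy : 0 < x * y) :
    max |x| |y| ^ (k - 1) ≤ |geomSum₂ k x y| := by
  rcases mul_pos_iff.1 hxy with ⟨hx, hy⟩ | ⟨hx, hy⟩
  · rw [abs_of_pos hx, abs_of_pos hy]
    exact (pow_max_le_geomSum₂ hk hx.le hy.le).trans (le_abs_self _)
  · have hneg := geomSum₂_mul_mul k (-1) (-x) (-y)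
    rw [neg_one_mul, neg_one_mul, neg_neg, neg_neg] at hneg
    rw [hneg, abs_mul, abs_pow, abs_neg, abs_one, one_pow, one_mul, abs_of_neg hx, abs_of_neg hy]
    exact (pow_max_le_geomSum₂ hk (neg_nonneg.2 hx.le) (neg_nonneg.2 hy.le)).trans (le_abs_self _)

theorem abs_sub_mul_pow_max_le (hk : k ≠ 0) (hxy : 0 < x * y) :
    |x - y| * max |x| |y| ^ (k - 1) ≤ |x ^ k - y ^ k| := by
  rw [← geomSum₂_mul_sub, abs_mul, mul_comm]
  gcongr
  exact pow_max_abs_le_abs_geomSum₂ hk hxy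

theorem abs_sub_le_of_abs_pow_sub_pow_le (hk : k ≠ 0) (hxy : 0 < x * y) (hr : 0 < r)
    (hry : r ≤ |y|) {C : ℝ} (h : |x ^ k - y ^ k| ≤ C * r ^ (k - 1)) : |x - y| ≤ C := by
  refine le_of_mul_le_mul_right ?_ (pow_pos hr (k - 1))
  calc |x - y| * r ^ (k - 1) ≤ |x - y| * max |x| |y| ^ (k - 1) := by
        gcongr; exact hry.trans (le_max_right _ _)
    _ ≤ C * r ^ (k - 1) := (abs_sub_mul_pow_max_le hk hxy).trans h

theorem mul_abs_pow_sub_pow_le (k : ℕ) (hx : |x| ≤ r) (hx' : |x'| ≤ r) :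
    r * |x ^ k - x' ^ k| ≤ k * r ^ k * |x - x'| := by
  have hr : 0 ≤ r := (abs_nonneg x).trans hx
  rcases k with _ | k
  · simp
  · calc r * |x ^ (k + 1) - x' ^ (k + 1)| ≤ r * (|x - x'| * (k + 1 : ℕ) * r ^ k) := by
          gcongr
          refine (abs_pow_sub_pow_le x x' (k + 1)).trans ?_
          simpa using mul_le_mul_of_nonneg_left
            (pow_le_pow_left₀ (le_max_of_le_left (abs_nonneg x)) (max_le hx hx') k)
            (by positivity : (0 : ℝ) ≤ |x - x'| * (k + 1 : ℕ))
      _ = (k + 1 : ℕ) * r ^ (k + 1) * |x - x'| := by ring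

theorem mul_abs_pow_mul_pow_sub_le (i j : ℕ) (hx : |x| ≤ r) (hy : |y| ≤ r) (hx' : |x'| ≤ r)
    (hy' : |y'| ≤ r) :
    r * |x ^ i * y ^ j - x' ^ i * y' ^ j| ≤ (i + j) * r ^ (i + j) * (|x - x'| + |y - y'|) := by
  have hr : 0 ≤ r := (abs_nonneg x).trans hx
  have hyj : |y| ^ j ≤ r ^ j := pow_le_pow_left₀ (abs_nonneg y) hy j
  have hxi : |x'| ^ i ≤ r ^ i := pow_le_pow_left₀ (abs_nonneg x') hx' i
  have hdx := mul_abs_pow_sub_pow_le i hx hx'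
  have hdy := mul_abs_pow_sub_pow_le j hy hy'
  calc r * |x ^ i * y ^ j - x' ^ i * y' ^ j|
      = r * |(x ^ i - x' ^ i) * y ^ j + x' ^ i * (y ^ j - y' ^ j)| := by ring_nf
    _ ≤ r * |x ^ i - x' ^ i| * |y| ^ j + |x'| ^ i * (r * |y ^ j - y' ^ j|) := by
        rw [← abs_pow, ← abs_pow, mul_assoc, ← abs_mul, mul_left_comm, ← abs_mul, ← mul_add]
        gcongr
        exact abs_add_le _ _
    _ ≤ i * r ^ i * |x - x'| * r ^ j + r ^ i * (j * r ^ j * |y - y'|) := by gcongr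
    _ = r ^ (i + j) * (i * |x - x'| + j * |y - y'|) := by ring
    _ ≤ r ^ (i + j) * ((i + j) * (|x - x'| + |y - y'|)) := by
        gcongr
        nlinarith [abs_nonneg (x - x'), abs_nonneg (y - y'), (Nat.cast_nonneg i : (0 : ℝ) ≤ i),
          (Nat.cast_nonneg j : (0 : ℝ) ≤ j)]
    _ = (i + j) * r ^ (i + j) * (|x - x'| + |y - y'|) := by ring

theorem mul_abs_geomSum₂_sub_le (hx : |x| ≤ r) (hy : |y| ≤ r) (hx' : |x'| ≤ r) (hy' : |y'| ≤ r) :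
    r * |geomSum₂ k x y - geomSum₂ k x' y'| ≤ k ^ 2 * r ^ (k - 1) * (|x - x'| + |y - y'|) := by
  calc r * |geomSum₂ k x y - geomSum₂ k x' y'|
      ≤ ∑ i ∈ range k, r * |x ^ i * y ^ (k - 1 - i) - x' ^ i * y' ^ (k - 1 - i)| := by
        rw [geomSum₂, geomSum₂, ← sum_sub_distrib, ← mul_sum]
        exact mul_le_mul_of_nonneg_left (abs_sum_le_sum_abs _ _) ((abs_nonneg x).trans hx)
    _ ≤ ∑ i ∈ range k, k * r ^ (k - 1) * (|x - x'| + |y - y'|) := by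
        refine sum_le_sum fun i hi => ?_
        have hik : i + (k - 1 - i) = k - 1 := by have := mem_range.1 hi; omega
        refine (mul_abs_pow_mul_pow_sub_le i (k - 1 - i) hx hy hx' hy').trans ?_
        rw [← Nat.cast_add, hik]
        have hr : 0 ≤ r := (abs_nonneg x).trans hx
        gcongr
        exact_mod_cast Nat.sub_le k 1
    _ = k ^ 2 * r ^ (k - 1) * (|x - x'| + |y - y'|) := by
        rw [sum_const, card_range, nsmul_eq_mul]; ring

end GeomSumBounds

theorem exists_abs_eval_le (P : ℝ[X]) {d : ℕ} (hd : P.natDegree ≤ d) :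
    ∃ C, 0 ≤ C ∧ ∀ r, 1 ≤ r → ∀ x, |x| ≤ r → |P.eval x| ≤ C * r ^ d := by
  refine ⟨P.sum fun _ a => |a|, sum_nonneg fun _ _ => abs_nonneg _, fun r hr x hx => ?_⟩
  rw [eval_eq_sum, Polynomial.sum_def, Polynomial.sum_def, sum_mul]
  refine (abs_sum_le_sum_abs _ _).trans (sum_le_sum fun k hk => ?_)
  rw [abs_mul, abs_pow]
  gcongr
  calc |x| ^ k ≤ r ^ k := pow_le_pow_left₀ (abs_nonneg x) hx k
    _ ≤ r ^ d := pow_le_pow_right₀ hr ((le_natDegree_of_mem_supp k hk).trans hd)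

theorem exists_abs_eval_sub_leadingCoeff_mul_le (P : ℝ[X]) :
    ∃ C, 0 ≤ C ∧ ∀ r, 1 ≤ r → ∀ x, |x| ≤ r →
      |P.eval x - P.leadingCoeff * x ^ P.natDegree| ≤ C * r ^ (P.natDegree - 1) := by
  obtain ⟨C, hC, hbound⟩ := exists_abs_eval_le P.eraseLead (eraseLead_natDegree_le P)
  refine ⟨C, hC, fun r hr x hx => ?_⟩
  have h := congrArg (eval x) (eraseLead_add_C_mul_X_pow P)
  rw [eval_add, eval_mul_X_pow, eval_C] at h
  rw [← h, add_sub_cancel_right]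
  exact hbound r hr x hx

-- The factor `r` on the left keeps the exponent at `d` instead of the truncated `d - 1`.
theorem exists_mul_abs_divDiff_le (P : ℝ[X]) {d : ℕ} (hd : P.natDegree ≤ d) :
    ∃ C, 0 ≤ C ∧ ∀ r, 1 ≤ r → ∀ x y, |x| ≤ r → |y| ≤ r → r * |divDiff P x y| ≤ C * r ^ d := by
  refine ⟨P.sum fun k a => |a| * k, sum_nonneg fun _ _ => by positivity,
    fun r hr x y hx hy => ?_⟩
  rw [divDiff, Polynomial.sum_def, Polynomial.sum_def, sum_mul]
  refine (mul_le_mul_of_nonneg_left (abs_sum_le_sum_abs _ _) (by linarith)).trans ?_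
  rw [mul_sum]
  refine sum_le_sum fun k hk => ?_
  rw [abs_mul, mul_left_comm, mul_assoc]
  refine mul_le_mul_of_nonneg_left ?_ (abs_nonneg _)
  calc r * |geomSum₂ k x y| ≤ k * r ^ k := mul_abs_geomSum₂_le hx hy
    _ ≤ k * r ^ d := mul_le_mul_of_nonneg_left
        (pow_le_pow_right₀ hr ((le_natDegree_of_mem_supp k hk).trans hd)) (Nat.cast_nonneg k)

theorem exists_le_mul_abs_divDiff (P : ℝ[X]) (hP : P.natDegree ≠ 0) {κ β : ℝ} (hκ : 0 < κ)
    (hβ : 1 ≤ β) : ∃ e, 0 < e ∧ ∃ T, ∀ M, T ≤ M → ∀ x y, 0 < x * y → κ * M ≤ max |x| |y| →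
      |x| ≤ β * M → |y| ≤ β * M → e * M ^ P.natDegree ≤ M * |divDiff P x y| := by
  set n := P.natDegree
  obtain ⟨C, -, hbound⟩ := exists_mul_abs_divDiff_le P.eraseLead (eraseLead_natDegree_le P)
  have hlead : 0 < |P.leadingCoeff| :=
    abs_pos.2 (leadingCoeff_ne_zero.2 fun h0 => hP (by simp [n, h0]))
  set e := |P.leadingCoeff| * κ ^ (n - 1) / 2
  have he : 0 < e := by positivity
  refine ⟨e, he, max 1 (C * β ^ (n - 1) / e), fun M hM x y hxy hmax hx hy => ?_⟩
  have hM1 : 1 ≤ M := le_of_max_le_left hM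
  have hMC : C * β ^ (n - 1) ≤ e * M := (div_le_iff₀' he).1 (le_of_max_le_right hM)
  have htail : M * |divDiff P.eraseLead x y| ≤ C * β ^ (n - 1) * M ^ (n - 1) :=
    calc M * |divDiff P.eraseLead x y| ≤ β * M * |divDiff P.eraseLead x y| := by
          gcongr; exact le_mul_of_one_le_left (by linarith) hβ
      _ ≤ C * (β * M) ^ (n - 1) :=
          hbound _ (one_le_mul_of_one_le_of_one_le hβ hM1) x y hx hy
      _ = C * β ^ (n - 1) * M ^ (n - 1) := by ring
  have htop : 2 * e * M ^ n ≤ M * |P.leadingCoeff * geomSum₂ n x y| :=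
    calc 2 * e * M ^ n = |P.leadingCoeff| * ((κ * M) ^ (n - 1) * M) := by
          rw [mul_pow, ← pow_sub_one_mul hP M]; ring
      _ ≤ |P.leadingCoeff| * (max |x| |y| ^ (n - 1) * M) := by gcongr
      _ ≤ |P.leadingCoeff| * (|geomSum₂ n x y| * M) := by
          gcongr; exact pow_max_abs_le_abs_geomSum₂ hP hxy
      _ = M * |P.leadingCoeff * geomSum₂ n x y| := by rw [abs_mul]; ring
  have htri := abs_sub_abs_le_abs_sub (P.leadingCoeff * geomSum₂ n x y) (-divDiff P.eraseLead x y)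
  rw [abs_neg, sub_neg_eq_add, add_comm, ← divDiff_eq_divDiff_eraseLead_add] at htri
  have hMn : e * M * M ^ (n - 1) = e * M ^ n := by rw [mul_assoc, mul_pow_sub_one hP]
  nlinarith [mul_le_mul_of_nonneg_right hMC (pow_nonneg (by linarith : (0 : ℝ) ≤ M) (n - 1))]

theorem exists_mul_abs_divDiff_sub_mul_divDiff_le (P Q : ℝ[X]) {c : ℝ}
    (hdeg : P.natDegree = Q.natDegree) (hlead : P.leadingCoeff = Q.leadingCoeff * c ^ Q.natDegree) :
    ∃ E, 0 ≤ E ∧ ∀ r, 1 ≤ r → ∀ a b x y, |a| ≤ r → |b| ≤ r → |x| ≤ r → |y| ≤ r → |c * a| ≤ r →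
      |c * b| ≤ r → r * |divDiff P a b - c * divDiff Q x y| ≤
        E * r ^ (Q.natDegree - 1) * (1 + |c * a - x| + |c * b - y|) := by
  set n := Q.natDegree
  have htop : ∀ a b, P.leadingCoeff * geomSum₂ P.natDegree a b =
      c * Q.leadingCoeff * geomSum₂ n (c * a) (c * b) := by
    intro a b
    rw [geomSum₂_mul_mul, hlead, hdeg]
    rcases eq_or_ne n 0 with h0 | hn
    · rw [h0]; simp [geomSum₂]
    · rw [← mul_pow_sub_one hn c]; ring
  obtain ⟨C₁, hC₁, h₁⟩ :=
    exists_mul_abs_divDiff_le P.eraseLead (d := n - 1) (hdeg ▸ eraseLead_natDegree_le P)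
  obtain ⟨C₂, hC₂, h₂⟩ := exists_mul_abs_divDiff_le Q.eraseLead (eraseLead_natDegree_le Q)
  refine ⟨C₁ + |c| * C₂ + |c| * |Q.leadingCoeff| * n ^ 2, by positivity,
    fun r hr a b x y ha hb hx hy hca hcb => ?_⟩
  have hsplit : divDiff P a b - c * divDiff Q x y = divDiff P.eraseLead a b
      - c * divDiff Q.eraseLead x y
      + c * Q.leadingCoeff * (geomSum₂ n (c * a) (c * b) - geomSum₂ n x y) := by
    rw [divDiff_eq_divDiff_eraseLead_add P, divDiff_eq_divDiff_eraseLead_add Q, htop a b]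
    ring
  have hr0 : 0 ≤ r := by linarith
  have htri : |divDiff P.eraseLead a b - c * divDiff Q.eraseLead x y
      + c * Q.leadingCoeff * (geomSum₂ n (c * a) (c * b) - geomSum₂ n x y)|
      ≤ |divDiff P.eraseLead a b| + |c| * |divDiff Q.eraseLead x y|
        + |c| * |Q.leadingCoeff| * |geomSum₂ n (c * a) (c * b) - geomSum₂ n x y| := by
    have := abs_add_three (divDiff P.eraseLead a b) (-(c * divDiff Q.eraseLead x y))
      (c * Q.leadingCoeff * (geomSum₂ n (c * a) (c * b) - geomSum₂ n x y))
    rwa [← sub_eq_add_neg, abs_neg, abs_mul, abs_mul, abs_mul] at this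
  have h₂' := mul_le_mul_of_nonneg_left (h₂ r hr x y hx hy) (abs_nonneg c)
  have h₃ := mul_le_mul_of_nonneg_left (mul_abs_geomSum₂_sub_le (k := n) hca hcb hx hy)
    (by positivity : 0 ≤ |c| * |Q.leadingCoeff|)
  have hrest : 0 ≤ (C₁ + |c| * C₂) * r ^ (n - 1) * (|c * a - x| + |c * b - y|)
      + |c| * |Q.leadingCoeff| * n ^ 2 * r ^ (n - 1) := by positivity
  rw [hsplit]
  linarith [h₁ r hr a b ha hb, mul_le_mul_of_nonneg_left htri hr0]

theorem nonpos_of_eventually_mul_pow_le {e D : ℝ} {N : ℕ} (hN : N ≠ 0)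
    (h : ∀ᶠ t in atTop, e * t ^ N ≤ D * t ^ (N - 1)) : e ≤ 0 := by
  by_contra! he
  obtain ⟨t, hle, ht1, htD⟩ :=
    (h.and ((eventually_ge_atTop 1).and (eventually_gt_atTop (D / e)))).exists
  rw [← mul_pow_sub_one hN t, ← mul_assoc] at hle
  have := le_of_mul_le_mul_right hle (pow_pos (by linarith) _)
  rw [div_lt_iff₀' he] at htD
  linarith

theorem half_mul_abs_le_abs_and_pos_of_abs_sub_mul_le {x t c K : ℝ} (h : |x - c * t| ≤ K)
    (hc : 0 < c) (ht : 2 * K < c * |t|) : c / 2 * |t| ≤ |x| ∧ 0 < x * t := by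
  have h₁ := abs_sub_abs_le_abs_sub (c * t) x
  rw [abs_sub_comm, abs_mul, abs_of_pos hc] at h₁
  refine ⟨by linarith, ?_⟩
  have h₂ := neg_abs_le ((x - c * t) * t)
  rw [abs_mul] at h₂
  have h₃ : x * t = c * |t| ^ 2 + (x - c * t) * t := by rw [sq_abs]; ring
  nlinarith [abs_nonneg t, abs_nonneg (x - c * t)]

theorem mul_abs_le_of_mul_eq_mul {X Y D N M e E : ℝ} {n : ℕ} (hn : n ≠ 0) (hM : 0 < M)
    (he : 0 < e) (hXY : X * D = Y * N) (hD : e * M ^ n ≤ M * |D|)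
    (hN : M * |N| ≤ E * M ^ (n - 1)) : M * |X| ≤ E / e * |Y| := by
  rw [div_mul_eq_mul_div, le_div_iff₀ he]
  refine le_of_mul_le_mul_right ?_ (pow_pos hM n)
  calc M * |X| * e * M ^ n = M * |X| * (e * M ^ n) := by ring
    _ ≤ M * |X| * (M * |D|) := by gcongr
    _ = M * |Y| * (M * |N|) := by
        rw [mul_mul_mul_comm, ← abs_mul, hXY, abs_mul]; ring
    _ ≤ M * |Y| * (E * M ^ (n - 1)) := by gcongr
    _ = E * |Y| * M ^ n := by rw [← mul_pow_sub_one hn M]; ring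

theorem min_mul_abs_sub_le_of_far {ζ : ℝ → ℝ} {K L T C : ℝ} (hK : ∀ t, |ζ t| ≤ K)
    (hL : ∀ a b, |ζ a - ζ b| ≤ L * |a - b|)
    (hfar : ∀ a b, T ≤ |a| → T ≤ |b| → 0 < a * b → max |a| |b| * |ζ a - ζ b| ≤ C * |a - b|)
    (a b : ℝ) : min |a| |b| * |ζ a - ζ b| ≤ max (T * L) (max (2 * K) C) * |a - b| := by
  have hmin : 0 ≤ min |a| |b| := le_min (abs_nonneg a) (abs_nonneg b)
  rcases lt_or_ge (min |a| |b|) T with hT | hT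
  · calc min |a| |b| * |ζ a - ζ b| ≤ T * (L * |a - b|) := by
          gcongr
          · linarith
          · exact hL a b
      _ ≤ max (T * L) (max (2 * K) C) * |a - b| := by
          rw [← mul_assoc]; gcongr; exact le_max_left _ _
  rcases le_or_gt (a * b) 0 with hab | hab
  · have hsep : min |a| |b| ≤ |a - b| :=
      (min_le_left _ _).trans (sq_le_sq.1 (by nlinarith [sq_nonneg b]))
    have hζ : |ζ a - ζ b| ≤ 2 * K := by linarith [abs_sub (ζ a) (ζ b), hK a, hK b]
    calc min |a| |b| * |ζ a - ζ b| ≤ |a - b| * (2 * K) := by gcongr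
      _ ≤ max (T * L) (max (2 * K) C) * |a - b| := by
          rw [mul_comm]; gcongr; exact (le_max_left _ _).trans (le_max_right _ _)
  · calc min |a| |b| * |ζ a - ζ b| ≤ max |a| |b| * |ζ a - ζ b| := by gcongr; exact min_le_max
      _ ≤ C * |a - b| := hfar a b ((le_min_iff.1 hT).1) ((le_min_iff.1 hT).2) hab
      _ ≤ max (T * L) (max (2 * K) C) * |a - b| := by
          gcongr; exact (le_max_right _ _).trans (le_max_right _ _)

theorem mul_abs_add_mul_abs_le (a b u v : ℝ) : a * |u| + b * |v| ≤ (|a| + |b|) * max |u| |v| := by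
  have := mul_le_mul (le_abs_self a) (le_max_left |u| |v|) (abs_nonneg u) (abs_nonneg a)
  have := mul_le_mul (le_abs_self b) (le_max_right |u| |v|) (abs_nonneg v) (abs_nonneg b)
  linarith

section Lipschitz

variable {φ : ℝ → ℝ} {A B : ℝ}

theorem abs_le_abs_mul_abs_add (hup : ∀ s t, |φ s - φ t| ≤ B * |s - t|) (t : ℝ) :
    |φ t| ≤ |B| * |t| + |φ 0| := by
  have h := hup t 0
  rw [sub_zero] at h
  have := abs_sub_abs_le_abs_sub (φ t) (φ 0)
  nlinarith [le_abs_self B, abs_nonneg t]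

theorem abs_sub_mul_sub_sub_mul_le (hup : ∀ s t, |φ s - φ t| ≤ B * |s - t|) (c a b : ℝ) :
    |(φ a - c * a) - (φ b - c * b)| ≤ (B + |c|) * |a - b| :=
  calc |(φ a - c * a) - (φ b - c * b)| = |(φ a - φ b) - c * (a - b)| := by ring_nf
    _ ≤ B * |a - b| + |c| * |a - b| := by
        refine (abs_sub _ _).trans ?_
        rw [abs_mul]
        linarith [hup a b]
    _ = (B + |c|) * |a - b| := by ring

theorem mul_sq_sub_le_mul_self (hmono : StrictMono φ) (hlow : ∀ s t, A * |s - t| ≤ |φ s - φ t|)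
    (t : ℝ) : A * t ^ 2 - |φ 0| * |t| ≤ φ t * t := by
  have hsign : 0 ≤ (φ t - φ 0) * t := by
    rcases le_total 0 t with ht | ht
    · exact mul_nonneg (sub_nonneg.2 (hmono.monotone ht)) ht
    · exact mul_nonneg_of_nonpos_of_nonpos (sub_nonpos.2 (hmono.monotone ht)) ht
  have h1 : A * t ^ 2 ≤ (φ t - φ 0) * t := by
    calc A * t ^ 2 = A * |t - 0| * |t| := by rw [sub_zero, mul_assoc, abs_mul_abs_self, sq]
      _ ≤ |φ t - φ 0| * |t| := by gcongr; exact hlow t 0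
      _ = (φ t - φ 0) * t := by rw [← abs_mul, abs_of_nonneg hsign]
  have h2 : -(|φ 0| * |t|) ≤ φ 0 * t := by rw [← abs_mul]; exact neg_abs_le _
  linarith

theorem eventually_half_mul_le_of_strictMono (hA : 0 < A) (hmono : StrictMono φ)
    (hlow : ∀ s t, A * |s - t| ≤ |φ s - φ t|) : ∀ᶠ t in atTop, A / 2 * t ≤ φ t := by
  filter_upwards [eventually_gt_atTop 0, eventually_ge_atTop (2 * |φ 0| / A)] with t ht htA
  have h := mul_sq_sub_le_mul_self hmono hlow t
  rw [abs_of_pos ht] at h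
  have : A * t - |φ 0| ≤ φ t := le_of_mul_le_mul_right (by linarith) ht
  rw [div_le_iff₀' hA] at htA
  linarith

theorem eventually_abs_le_mul (hup : ∀ s t, |φ s - φ t| ≤ B * |s - t|) :
    ∀ᶠ t in atTop, |φ t| ≤ (|B| + |φ 0|) * t := by
  filter_upwards [eventually_ge_atTop 1] with t ht
  have := abs_le_abs_mul_abs_add hup t
  rw [abs_of_pos (by linarith : (0 : ℝ) < t)] at this
  nlinarith [abs_nonneg (φ 0)]

end Lipschitz

section PolynomialConjugacy

variable {p q : ℝ[X]} {φ : ℝ → ℝ} {A B : ℝ}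

theorem exists_abs_leadingCoeff_mul_sub_le (h : ∀ t, q.eval (φ t) = p.eval t)
    (hup : ∀ s t, |φ s - φ t| ≤ B * |s - t|) :
    ∃ C, ∀ t, 1 ≤ |t| →
      |q.leadingCoeff * φ t ^ q.natDegree - p.leadingCoeff * t ^ p.natDegree| ≤
        C * |t| ^ (max q.natDegree p.natDegree - 1) := by
  obtain ⟨Cq, hCq, hqC⟩ := exists_abs_eval_sub_leadingCoeff_mul_le q
  obtain ⟨Cp, hCp, hpC⟩ := exists_abs_eval_sub_leadingCoeff_mul_le p
  set β := |B| + |φ 0| + 1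
  set N := max q.natDegree p.natDegree
  have hβ : 1 ≤ β := by have := abs_nonneg B; have := abs_nonneg (φ 0); linarith
  refine ⟨(Cq + Cp) * β ^ (N - 1), fun t ht => ?_⟩
  have hr : 1 ≤ β * |t| := one_le_mul_of_one_le_of_one_le hβ ht
  have hφ : |φ t| ≤ β * |t| := by
    nlinarith [abs_le_abs_mul_abs_add hup t, abs_nonneg B, abs_nonneg (φ 0)]
  have hqt := hqC _ hr _ hφ
  have hpt := hpC _ hr _ (le_mul_of_one_le_left (abs_nonneg t) hβ)
  rw [h t] at hqt
  have hpow : ∀ k ≤ N, (β * |t|) ^ (k - 1) ≤ (β * |t|) ^ (N - 1) :=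
    fun k hk => pow_le_pow_right₀ hr (by omega)
  calc |q.leadingCoeff * φ t ^ q.natDegree - p.leadingCoeff * t ^ p.natDegree|
      = |(p.eval t - p.leadingCoeff * t ^ p.natDegree)
          - (p.eval t - q.leadingCoeff * φ t ^ q.natDegree)| := by ring_nf
    _ ≤ Cp * (β * |t|) ^ (p.natDegree - 1) + Cq * (β * |t|) ^ (q.natDegree - 1) :=
        (abs_sub _ _).trans (add_le_add hpt hqt)
    _ ≤ Cp * (β * |t|) ^ (N - 1) + Cq * (β * |t|) ^ (N - 1) :=
        add_le_add (mul_le_mul_of_nonneg_left (hpow _ (le_max_right _ _)) hCp)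
          (mul_le_mul_of_nonneg_left (hpow _ (le_max_left _ _)) hCq)
    _ = (Cq + Cp) * β ^ (N - 1) * |t| ^ (N - 1) := by rw [mul_pow]; ring

theorem eventually_abs_leadingCoeff_mul_sub_le (h : ∀ t, q.eval (φ t) = p.eval t)
    (hup : ∀ s t, |φ s - φ t| ≤ B * |s - t|) : ∃ C, ∀ᶠ t in atTop,
      |q.leadingCoeff * φ t ^ q.natDegree - p.leadingCoeff * t ^ p.natDegree| ≤
        C * t ^ (max q.natDegree p.natDegree - 1) := by
  obtain ⟨C, hlead⟩ := exists_abs_leadingCoeff_mul_sub_le h hup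
  refine ⟨C, ?_⟩
  filter_upwards [eventually_ge_atTop 1] with t ht
  have ht' : |t| = t := abs_of_pos (by linarith)
  simpa only [ht'] using hlead t (ht'.symm ▸ ht)

theorem natDegree_eq_of_strictMono (hq : q.natDegree ≠ 0) (hA : 0 < A)
    (hlow : ∀ s t, A * |s - t| ≤ |φ s - φ t|) (hup : ∀ s t, |φ s - φ t| ≤ B * |s - t|)
    (hmono : StrictMono φ) (h : ∀ t, q.eval (φ t) = p.eval t) : p.natDegree = q.natDegree := by
  obtain ⟨C, hlead⟩ := eventually_abs_leadingCoeff_mul_sub_le h hup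
  set n := q.natDegree
  set m := p.natDegree
  have hq0 : 0 < |q.leadingCoeff| :=
    abs_pos.2 (leadingCoeff_ne_zero.2 fun h0 => hq (by simp [n, h0]))
  rcases lt_trichotomy m n with hlt | heq | hgt
  · refine absurd (nonpos_of_eventually_mul_pow_le (e := |q.leadingCoeff| * (A / 2) ^ n)
      (D := |p.leadingCoeff| + C) hq ?_) (not_le.2 (by positivity))
    filter_upwards [hlead, eventually_half_mul_le_of_strictMono hA hmono hlow,
      eventually_ge_atTop 1] with t hb hφ ht1
    rw [max_eq_left hlt.le] at hb
    have := abs_sub_abs_le_abs_sub (q.leadingCoeff * φ t ^ n) (p.leadingCoeff * t ^ m)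
    rw [abs_mul, abs_mul, abs_pow, abs_pow, abs_of_pos (by linarith : 0 < t)] at this
    have htm : t ^ m ≤ t ^ (n - 1) := pow_le_pow_right₀ ht1 (by omega)
    have hφ' : 0 ≤ A / 2 * t := by positivity
    calc |q.leadingCoeff| * (A / 2) ^ n * t ^ n = |q.leadingCoeff| * (A / 2 * t) ^ n := by ring
      _ ≤ |q.leadingCoeff| * |φ t| ^ n := by gcongr; exact hφ.trans (le_abs_self _)
      _ ≤ |p.leadingCoeff| * t ^ m + C * t ^ (n - 1) := by linarith
      _ ≤ (|p.leadingCoeff| + C) * t ^ (n - 1) := by nlinarith [abs_nonneg p.leadingCoeff]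
  · exact heq
  · have hp0 : p.leadingCoeff ≠ 0 := leadingCoeff_ne_zero.2 fun h0 => by simp [m, h0] at hgt
    refine absurd (nonpos_of_eventually_mul_pow_le (N := m)
      (D := |q.leadingCoeff| * (|B| + |φ 0|) ^ n + C) (by omega) ?_) (not_le.2 (abs_pos.2 hp0))
    filter_upwards [hlead, eventually_abs_le_mul hup, eventually_ge_atTop 1] with t hb hφ ht1
    rw [max_eq_right hgt.le, abs_sub_comm] at hb
    have := abs_sub_abs_le_abs_sub (p.leadingCoeff * t ^ m) (q.leadingCoeff * φ t ^ n)
    rw [abs_mul, abs_mul, abs_pow, abs_pow, abs_of_pos (by linarith : 0 < t)] at this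
    have htn : t ^ n ≤ t ^ (m - 1) := pow_le_pow_right₀ ht1 (by omega)
    calc |p.leadingCoeff| * t ^ m ≤ |q.leadingCoeff| * |φ t| ^ n + C * t ^ (m - 1) := by linarith
      _ ≤ |q.leadingCoeff| * ((|B| + |φ 0|) * t) ^ n + C * t ^ (m - 1) := by gcongr
      _ = |q.leadingCoeff| * (|B| + |φ 0|) ^ n * t ^ n + C * t ^ (m - 1) := by
          rw [mul_pow]; ring
      _ ≤ (|q.leadingCoeff| * (|B| + |φ 0|) ^ n + C) * t ^ (m - 1) := by
          nlinarith [mul_le_mul_of_nonneg_left htn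
            (by positivity : 0 ≤ |q.leadingCoeff| * (|B| + |φ 0|) ^ n)]

theorem exists_pos_leadingCoeff_eq_of_strictMono (hq : q.natDegree ≠ 0) (hA : 0 < A)
    (hlow : ∀ s t, A * |s - t| ≤ |φ s - φ t|) (hup : ∀ s t, |φ s - φ t| ≤ B * |s - t|)
    (hmono : StrictMono φ) (h : ∀ t, q.eval (φ t) = p.eval t)
    (hdeg : p.natDegree = q.natDegree) :
    ∃ c, 0 < c ∧ p.leadingCoeff = q.leadingCoeff * c ^ q.natDegree := by
  obtain ⟨C, hlead⟩ := eventually_abs_leadingCoeff_mul_sub_le h hup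
  set n := q.natDegree
  rw [hdeg, max_self] at hlead
  have hq0 : q.leadingCoeff ≠ 0 := leadingCoeff_ne_zero.2 fun h0 => hq (by simp [n, h0])
  set γ := p.leadingCoeff / q.leadingCoeff
  have hpγ : p.leadingCoeff = q.leadingCoeff * γ := (mul_div_cancel₀ _ hq0).symm
  have hγ : 0 < γ := by
    by_contra! hγ
    refine absurd (nonpos_of_eventually_mul_pow_le (e := |q.leadingCoeff| * (A / 2) ^ n)
      (D := C) hq ?_) (not_le.2 (by positivity))
    filter_upwards [hlead, eventually_half_mul_le_of_strictMono hA hmono hlow,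
      eventually_gt_atTop 0] with t hb hφ ht0
    have hφn : (A / 2 * t) ^ n ≤ φ t ^ n := pow_le_pow_left₀ (by positivity) hφ n
    have hγt : 0 ≤ -γ * t ^ n := mul_nonneg (by linarith) (by positivity)
    have hpos : 0 ≤ φ t ^ n - γ * t ^ n := by
      have : 0 ≤ (A / 2 * t) ^ n := by positivity
      linarith
    rw [hpγ, mul_assoc, ← mul_sub, abs_mul, abs_of_nonneg hpos] at hb
    calc |q.leadingCoeff| * (A / 2) ^ n * t ^ n = |q.leadingCoeff| * (A / 2 * t) ^ n := by ring
      _ ≤ |q.leadingCoeff| * (φ t ^ n - γ * t ^ n) := by gcongr; linarith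
      _ ≤ C * t ^ (n - 1) := hb
  refine ⟨γ ^ (n⁻¹ : ℝ), Real.rpow_pos_of_pos hγ _, ?_⟩
  rw [Real.rpow_inv_natCast_pow hγ.le hq, hpγ]

theorem exists_abs_sub_mul_le_of_strictMono (hq : q.natDegree ≠ 0) (hA : 0 < A)
    (hlow : ∀ s t, A * |s - t| ≤ |φ s - φ t|) (hup : ∀ s t, |φ s - φ t| ≤ B * |s - t|)
    (hmono : StrictMono φ) (h : ∀ t, q.eval (φ t) = p.eval t)
    (hdeg : p.natDegree = q.natDegree) {c : ℝ} (hc : 0 < c)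
    (hlead : p.leadingCoeff = q.leadingCoeff * c ^ q.natDegree) : ∃ K, ∀ t, |φ t - c * t| ≤ K := by
  obtain ⟨C, hb⟩ := exists_abs_leadingCoeff_mul_sub_le h hup
  set n := q.natDegree
  rw [hdeg, max_self] at hb
  have hq0 : 0 < |q.leadingCoeff| :=
    abs_pos.2 (leadingCoeff_ne_zero.2 fun h0 => hq (by simp [n, h0]))
  set T := max 1 (|φ 0| / A + 1)
  refine ⟨max (C / (|q.leadingCoeff| * c ^ (n - 1))) ((|B| + c) * T + |φ 0|), fun t => ?_⟩
  rcases lt_or_ge |t| T with ht | ht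
  · refine le_trans ?_ (le_max_right _ _)
    have := abs_le_abs_mul_abs_add hup t
    calc |φ t - c * t| ≤ |φ t| + c * |t| :=
          (abs_sub (φ t) (c * t)).trans_eq (by rw [abs_mul, abs_of_pos hc])
      _ ≤ (|B| + c) * T + |φ 0| := by nlinarith [abs_nonneg B]
  · refine le_trans ?_ (le_max_left _ _)
    have ht1 : 1 ≤ |t| := le_of_max_le_left ht
    have htA : |φ 0| < A * |t| := by
      have := (div_lt_iff₀' hA).1 (lt_of_lt_of_le (lt_add_one _) (le_of_max_le_right ht))
      linarith
    have hpos : 0 < φ t * (c * t) := by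
      have := mul_sq_sub_le_mul_self hmono hlow t
      rw [← sq_abs t] at this
      have : 0 < |t| * (A * |t| - |φ 0|) := mul_pos (by linarith) (by linarith)
      rw [mul_left_comm]
      exact mul_pos hc (by nlinarith)
    have hsub : q.leadingCoeff * φ t ^ n - p.leadingCoeff * t ^ n
        = q.leadingCoeff * (φ t ^ n - (c * t) ^ n) := by rw [hlead, mul_pow]; ring
    have hbt := hb t ht1
    rw [hsub, abs_mul, ← le_div_iff₀' hq0] at hbt
    refine abs_sub_le_of_abs_pow_sub_pow_le hq hpos (r := c * |t|) (by positivity)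
      (by rw [abs_mul, abs_of_pos hc]) (hbt.trans_eq ?_)
    field_simp
    ring

theorem sub_mul_divDiff_eq (h : ∀ t, q.eval (φ t) = p.eval t) (c a b : ℝ) :
    ((φ a - c * a) - (φ b - c * b)) * divDiff q (φ a) (φ b) =
      (a - b) * (divDiff p a b - c * divDiff q (φ a) (φ b)) := by
  have hq := eval_sub_eval_eq_divDiff_mul q (φ a) (φ b)
  have hp := eval_sub_eval_eq_divDiff_mul p a b
  rw [h, h] at hq
  linear_combination hp - hq

theorem exists_max_mul_abs_sub_le (h : ∀ t, q.eval (φ t) = p.eval t) (hq : q.natDegree ≠ 0)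
    (hdeg : p.natDegree = q.natDegree) {c K : ℝ} (hc : 0 < c)
    (hlead : p.leadingCoeff = q.leadingCoeff * c ^ q.natDegree) (hK : ∀ t, |φ t - c * t| ≤ K) :
    ∃ T C, ∀ a b, T ≤ |a| → T ≤ |b| → 0 < a * b →
      max |a| |b| * |(φ a - c * a) - (φ b - c * b)| ≤ C * |a - b| := by
  have hK0 : 0 ≤ K := (abs_nonneg _).trans (hK 0)
  set β := c + K + 1
  have hβ : 1 ≤ β := by linarith
  obtain ⟨e, he, T₁, hlower⟩ := exists_le_mul_abs_divDiff q hq (half_pos hc) hβ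
  obtain ⟨E, hE, hupper⟩ := exists_mul_abs_divDiff_sub_mul_divDiff_le p q hdeg hlead
  refine ⟨max (max 1 T₁) (2 * K / c + 1), E * β ^ (q.natDegree - 1) * (1 + 2 * K) / e,
    fun a b ha hb hab => ?_⟩
  set M := max |a| |b|
  have hM : max (max 1 T₁) (2 * K / c + 1) ≤ M := ha.trans (le_max_left _ _)
  have hM1 : 1 ≤ M := (le_max_left _ _).trans ((le_max_left _ _).trans hM)
  have hfar : ∀ t, |t| ≤ M → max (max 1 T₁) (2 * K / c + 1) ≤ |t| →
      (c / 2 * |t| ≤ |φ t| ∧ 0 < φ t * t) ∧ |φ t| ≤ β * M ∧ |c * t| ≤ β * M := by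
    intro t htM ht
    have htK : 2 * K < c * |t| :=
      (div_lt_iff₀' hc).1 (lt_of_lt_of_le (lt_add_one _) ((le_max_right _ _).trans ht))
    have hφt := abs_sub_abs_le_abs_sub (φ t) (c * t)
    rw [abs_mul, abs_of_pos hc] at hφt ⊢
    refine ⟨half_mul_abs_le_abs_and_pos_of_abs_sub_mul_le (hK t) hc htK, ?_, ?_⟩ <;>
      nlinarith [hK t, abs_nonneg t]
  obtain ⟨⟨hφa, hφa₀⟩, hφa', hca⟩ := hfar a (le_max_left _ _) ha
  obtain ⟨⟨hφb, hφb₀⟩, hφb', hcb⟩ := hfar b (le_max_right _ _) hb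
  have hMβ : M ≤ β * M := le_mul_of_one_le_left (by linarith) hβ
  have hlow := hlower M (((le_max_right _ _).trans (le_max_left _ _)).trans hM) (φ a) (φ b)
    (by nlinarith [mul_pos hφa₀ hφb₀])
    ((mul_max_of_nonneg _ _ (by positivity)).trans_le (max_le_max hφa hφb)) hφa' hφb'
  have hup : M * |divDiff p a b - c * divDiff q (φ a) (φ b)| ≤
      E * β ^ (q.natDegree - 1) * (1 + 2 * K) * M ^ (q.natDegree - 1) := by
    have hbound := hupper _ (one_le_mul_of_one_le_of_one_le hβ hM1) a b (φ a) (φ b)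
      ((le_max_left _ _).trans hMβ) ((le_max_right _ _).trans hMβ) hφa' hφb' hca hcb
    rw [abs_sub_comm (c * a), abs_sub_comm (c * b)] at hbound
    calc M * |divDiff p a b - c * divDiff q (φ a) (φ b)|
        ≤ β * M * |divDiff p a b - c * divDiff q (φ a) (φ b)| := by gcongr
      _ ≤ E * (β * M) ^ (q.natDegree - 1) * (1 + |φ a - c * a| + |φ b - c * b|) := hbound
      _ ≤ E * (β * M) ^ (q.natDegree - 1) * (1 + K + K) := by gcongr <;> exact hK _
      _ = E * β ^ (q.natDegree - 1) * (1 + 2 * K) * M ^ (q.natDegree - 1) := by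
          rw [mul_pow]; ring
  exact mul_abs_le_of_mul_eq_mul hq (by linarith) he (sub_mul_divDiff_eq h c a b) hlow hup

theorem exists_abs_sub_mul_le_and_min_mul_le_of_strictMono (hq : q.natDegree ≠ 0) (hA : 0 < A)
    (hlow : ∀ s t, A * |s - t| ≤ |φ s - φ t|) (hup : ∀ s t, |φ s - φ t| ≤ B * |s - t|)
    (hmono : StrictMono φ) (h : ∀ t, q.eval (φ t) = p.eval t) :
    ∃ c K C, (∀ t, |φ t - c * t| ≤ K) ∧
      ∀ a b, min |a| |b| * |(φ a - c * a) - (φ b - c * b)| ≤ C * |a - b| := by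
  have hdeg := natDegree_eq_of_strictMono hq hA hlow hup hmono h
  obtain ⟨c, hc, hlead⟩ := exists_pos_leadingCoeff_eq_of_strictMono hq hA hlow hup hmono h hdeg
  obtain ⟨K, hK⟩ := exists_abs_sub_mul_le_of_strictMono hq hA hlow hup hmono h hdeg hc hlead
  obtain ⟨T, C, hfar⟩ := exists_max_mul_abs_sub_le h hq hdeg hc hlead hK
  exact ⟨c, K, _, hK, min_mul_abs_sub_le_of_far hK (abs_sub_mul_sub_sub_mul_le hup c) hfar⟩

theorem exists_abs_sub_mul_le_and_min_mul_le (hq : q.natDegree ≠ 0) (hA : 0 < A)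
    (hlow : ∀ s t, A * |s - t| ≤ |φ s - φ t|) (hup : ∀ s t, |φ s - φ t| ≤ B * |s - t|)
    (h : ∀ t, q.eval (φ t) = p.eval t) :
    ∃ c K C, (∀ t, |φ t - c * t| ≤ K) ∧
      ∀ a b, min |a| |b| * |(φ a - c * a) - (φ b - c * b)| ≤ C * |a - b| := by
  have hinj : Function.Injective φ := fun s t hst => by
    by_contra hne
    have := hlow s t
    rw [hst, sub_self, abs_zero] at this
    nlinarith [abs_pos.2 (sub_ne_zero.2 hne)]
  have hcont : Continuous φ := by
    refine (LipschitzWith.of_dist_le_mul (K := B.toNNReal) fun s t => ?_).continuous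
    rw [Real.dist_eq, Real.dist_eq, Real.coe_toNNReal']
    exact (hup s t).trans (by gcongr; exact le_max_left _ _)
  rcases hcont.strictMono_of_inj hinj with hmono | hanti
  · exact exists_abs_sub_mul_le_and_min_mul_le_of_strictMono hq hA hlow hup hmono h
  have hneg : ∀ s t, |-φ s - -φ t| = |φ s - φ t| := fun s t => by rw [← abs_neg]; ring_nf
  obtain ⟨c, K, C, hK, hC⟩ := exists_abs_sub_mul_le_and_min_mul_le_of_strictMono
    (p := p) (q := q.comp (-X)) (φ := fun t => -φ t)
    (by rwa [natDegree_comp, natDegree_neg, natDegree_X, mul_one]) hA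
    (fun s t => (hneg s t).symm ▸ hlow s t) (fun s t => (hneg s t).symm ▸ hup s t)
    (fun s t hst => neg_lt_neg (hanti hst)) (fun t => by simpa using h t)
  refine ⟨-c, K, C, fun t => ?_, fun a b => ?_⟩
  · rw [← abs_neg]; convert hK t using 2; ring
  · convert hC a b using 2; rw [← abs_neg]; ring_nf

end PolynomialConjugacy

section Perspective

variable {ζ : ℝ → ℝ} {K L C : ℝ}

theorem nonneg_of_forall_min_mul_le (hC : ∀ a b, min |a| |b| * |ζ a - ζ b| ≤ C * |a - b|) :
    0 ≤ C := by
  have := hC 1 2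
  norm_num at this
  exact (abs_nonneg _).trans this

theorem mul_abs_sub_le_of_min_mul_le (hC : ∀ a b, min |a| |b| * |ζ a - ζ b| ≤ C * |a - b|)
    {X X' : ℝ} (hX : 0 < X) (hXX : X ≤ X') (y : ℝ) :
    X * |ζ (y / X) - ζ (y / X')| ≤ C * (X' - X) := by
  have hX' : 0 < X' := hX.trans_le hXX
  rcases eq_or_ne y 0 with rfl | hy
  · simpa using mul_nonneg (nonneg_of_forall_min_mul_le hC) (sub_nonneg.2 hXX)
  have hmin : min |y / X| |y / X'| = |y| / X' := by
    rw [abs_div, abs_div, abs_of_pos hX, abs_of_pos hX']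
    exact min_eq_right (div_le_div_of_nonneg_left (abs_nonneg _) hX hXX)
  have hdiff : |y / X - y / X'| = |y| * (X' - X) / (X * X') := by
    rw [div_sub_div _ _ hX.ne' hX'.ne', abs_div, abs_of_pos (mul_pos hX hX'),
      show y * X' - X * y = y * (X' - X) by ring, abs_mul, abs_of_nonneg (sub_nonneg.2 hXX)]
  have := hC (y / X) (y / X')
  rw [hmin, hdiff] at this
  refine le_of_mul_le_mul_left ?_ (div_pos (abs_pos.2 hy) hX')
  calc |y| / X' * (X * |ζ (y / X) - ζ (y / X')|)
      = X * (|y| / X' * |ζ (y / X) - ζ (y / X')|) := by ring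
    _ ≤ X * (C * (|y| * (X' - X) / (X * X'))) := by gcongr
    _ = |y| / X' * (C * (X' - X)) := by field_simp

theorem abs_mul_sub_mul_le (hK : ∀ t, |ζ t| ≤ K) (hL : ∀ a b, |ζ a - ζ b| ≤ L * |a - b|)
    (hC : ∀ a b, min |a| |b| * |ζ a - ζ b| ≤ C * |a - b|) {X X' : ℝ} (hX : 0 < X) (hX' : 0 < X')
    (y y' : ℝ) : |X * ζ (y / X) - X' * ζ (y' / X')| ≤ L * |y - y'| + (C + K) * |X - X'| := by
  wlog hXX : X ≤ X' generalizing X X' y y'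
  · rw [abs_sub_comm, abs_sub_comm y, abs_sub_comm X]
    exact this hX' hX y' y (le_of_not_ge hXX)
  have hdecomp : X * ζ (y / X) - X' * ζ (y' / X') = X * (ζ (y / X) - ζ (y' / X))
      + X * (ζ (y' / X) - ζ (y' / X')) + (X - X') * ζ (y' / X') := by ring
  have h₁ : X * |ζ (y / X) - ζ (y' / X)| ≤ L * |y - y'| :=
    calc X * |ζ (y / X) - ζ (y' / X)| ≤ X * (L * |y / X - y' / X|) := by gcongr; exact hL _ _
      _ = L * |y - y'| := by rw [← sub_div, abs_div, abs_of_pos hX]; field_simp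
  have h₂ := mul_abs_sub_le_of_min_mul_le hC hX hXX y'
  have h₃ : |(X - X') * ζ (y' / X')| ≤ K * |X - X'| := by
    rw [abs_mul, mul_comm]; gcongr; exact hK _
  rw [abs_sub_comm X, abs_of_nonneg (sub_nonneg.2 hXX)] at h₃ ⊢
  rw [hdecomp]
  calc |X * (ζ (y / X) - ζ (y' / X)) + X * (ζ (y' / X) - ζ (y' / X'))
        + (X - X') * ζ (y' / X')|
      ≤ X * |ζ (y / X) - ζ (y' / X)| + X * |ζ (y' / X) - ζ (y' / X')|
        + |(X - X') * ζ (y' / X')| := by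
        refine (abs_add_three _ _ _).trans ?_
        rw [abs_mul X, abs_mul X, abs_of_pos hX]
    _ ≤ L * |y - y'| + (C + K) * (X' - X) := by linarith

end Perspective

theorem abs_rpow_sub_rpow_le {b δ : ℝ} (hb : 1 ≤ b) {x x' : ℝ} (hx : x ∈ Set.Ioc 0 δ)
    (hx' : x' ∈ Set.Ioc 0 δ) : |x ^ b - x' ^ b| ≤ b * δ ^ (b - 1) * |x - x'| := by
  have hderiv : ∀ u ∈ Set.Ioc 0 δ, HasDerivWithinAt (fun v : ℝ => v ^ b) (b * u ^ (b - 1))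
      (Set.Ioc 0 δ) u := fun u _ => (Real.hasDerivAt_rpow_const (Or.inr hb)).hasDerivWithinAt
  have hbound : ∀ u ∈ Set.Ioc 0 δ, ‖b * u ^ (b - 1)‖ ≤ b * δ ^ (b - 1) := fun u hu => by
    rw [Real.norm_eq_abs, abs_of_nonneg (by have := hu.1; positivity)]
    exact mul_le_mul_of_nonneg_left (Real.rpow_le_rpow hu.1.le hu.2 (by linarith)) (by linarith)
  simpa only [Real.norm_eq_abs] using
    (convex_Ioc 0 δ).norm_image_sub_le_of_norm_hasDerivWithin_le hderiv hbound hx' hx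

theorem abs_rpow_mul_sub_rpow_mul_le {φ : ℝ → ℝ} {c K L C b δ : ℝ}
    (hK : ∀ t, |φ t - c * t| ≤ K) (hL : ∀ s t, |(φ s - c * s) - (φ t - c * t)| ≤ L * |s - t|)
    (hC : ∀ s t, min |s| |t| * |(φ s - c * s) - (φ t - c * t)| ≤ C * |s - t|) (hb : 1 ≤ b)
    {x x' : ℝ} (hx : x ∈ Set.Ioc 0 δ) (hx' : x' ∈ Set.Ioc 0 δ) (y y' : ℝ) :
    |x ^ b * φ (y / x ^ b) - x' ^ b * φ (y' / x' ^ b)| ≤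
      (|c| + L) * |y - y'| + (C + K) * (b * δ ^ (b - 1)) * |x - x'| := by
  have hCK : 0 ≤ C + K := add_nonneg (nonneg_of_forall_min_mul_le (ζ := fun t => φ t - c * t) hC)
    ((abs_nonneg _).trans (hK 0))
  have hX := Real.rpow_pos_of_pos hx.1 b
  have hX' := Real.rpow_pos_of_pos hx'.1 b
  have hsplit : ∀ X : ℝ, 0 < X → ∀ y, X * φ (y / X) = c * y + X * (φ (y / X) - c * (y / X)) :=
    fun X hX y => by field_simp; ring
  rw [hsplit _ hX, hsplit _ hX', show ∀ u v : ℝ, c * y + u - (c * y' + v) = c * (y - y') + (u - v)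
    by intros; ring]
  refine (abs_add_le _ _).trans ?_
  have hpersp := abs_mul_sub_mul_le (ζ := fun t => φ t - c * t) hK hL hC hX hX' y y'
  have hpow := mul_le_mul_of_nonneg_left (abs_rpow_sub_rpow_le hb hx hx') hCK
  rw [abs_mul]
  linarith

theorem exists_dist_le_of_remainder {φ : ℝ → ℝ} {c K L C : ℝ} (hK : ∀ t, |φ t - c * t| ≤ K)
    (hL : ∀ s t, |(φ s - c * s) - (φ t - c * t)| ≤ L * |s - t|)
    (hC : ∀ s t, min |s| |t| * |(φ s - c * s) - (φ t - c * t)| ≤ C * |s - t|) (l : ℝ) {b : ℝ}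
    (hb : 1 ≤ b) (δ : ℝ) : ∃ D, 0 < D ∧ ∀ x y x' y', x ∈ Set.Ioc 0 δ → x' ∈ Set.Ioc 0 δ →
      dist ((l * x, |l| ^ b * (x ^ b * φ (y / x ^ b))) : ℝ × ℝ)
        (l * x', |l| ^ b * (x' ^ b * φ (y' / x' ^ b))) ≤ D * dist (x, y) (x', y') := by
  set E := |l| ^ b * ((C + K) * (b * δ ^ (b - 1)))
  set F := |l| ^ b * (|c| + L)
  refine ⟨|l| + 1 + (|E| + |F|), by positivity, fun x y x' y' hx hx' => ?_⟩
  have key := abs_rpow_mul_sub_rpow_mul_le hK hL hC hb hx hx' y y'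
  simp only [Prod.dist_eq, Real.dist_eq]
  set d := max |x - x'| |y - y'|
  have hd : (|l| + 1 + (|E| + |F|)) * d = |l| * d + (1 + |E| + |F|) * d := by ring
  have hrest : 0 ≤ (1 + |E| + |F|) * d := by positivity
  refine max_le ?_ ?_
  · rw [← mul_sub, abs_mul, hd]
    linarith [mul_le_mul_of_nonneg_left (le_max_left |x - x'| |y - y'|) (abs_nonneg l)]
  · rw [← mul_sub, abs_mul, abs_of_nonneg (by positivity : (0 : ℝ) ≤ |l| ^ b)]
    have hEF : |l| ^ b * ((|c| + L) * |y - y'| + (C + K) * (b * δ ^ (b - 1)) * |x - x'|)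
        = E * |x - x'| + F * |y - y'| := by simp only [E, F]; ring
    linarith [mul_le_mul_of_nonneg_left key (by positivity : (0 : ℝ) ≤ |l| ^ b),
      mul_abs_add_mul_abs_le E F (x - x') (y - y'), mul_nonneg (by positivity : (0 : ℝ) ≤ |l| + 1)
        (by positivity : 0 ≤ d)]

theorem stmt16_general (p q : Polynomial ℝ) (hq : 0 < q.natDegree)
    (φ : ℝ → ℝ) (hφ : BiLipschitz φ)
    (h : ∀ t : ℝ, q.eval (φ t) = p.eval t)
    (l : ℝ) (β : ℚ) (hβ : 1 < β)
    (Φ : ℝ × ℝ → ℝ × ℝ)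
    (hΦ : ∀ x t : ℝ, 0 < x →
      Φ (x, t * x ^ (β : ℝ)) = (l * x, |l| ^ (β : ℝ) * φ t * x ^ (β : ℝ))) :
    ∀ δ : ℝ, 0 < δ → ∃ C : ℝ, 0 < C ∧
      ∀ z w : ℝ × ℝ, 0 < z.1 → z.1 < δ → 0 < w.1 → w.1 < δ →
        dist (Φ z) (Φ w) ≤ C * dist z w := by
  intro δ _
  obtain ⟨-, A, B, hA, -, hAB⟩ := hφ
  have hup : ∀ s t, |φ s - φ t| ≤ B * |s - t| := fun s t => (hAB s t).2
  obtain ⟨c, K, C, hK, hC⟩ :=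
    exists_abs_sub_mul_le_and_min_mul_le hq.ne' hA (fun s t => (hAB s t).1) hup h
  have hform : ∀ x y, 0 < x →
      Φ (x, y) = (l * x, |l| ^ (β : ℝ) * (x ^ (β : ℝ) * φ (y / x ^ (β : ℝ)))) := by
    intro x y hx
    have := hΦ x (y / x ^ (β : ℝ)) hx
    rwa [div_mul_cancel₀ _ (Real.rpow_pos_of_pos hx _).ne', mul_assoc, mul_comm (φ _)] at this
  obtain ⟨D, hD, hdist⟩ := exists_dist_le_of_remainder hK (abs_sub_mul_sub_sub_mul_le hup c) hC l
    (b := β) (by exact_mod_cast hβ.le) δ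
  refine ⟨D, hD, fun ⟨x, y⟩ ⟨x', y'⟩ hx hxδ hx' hx'δ => ?_⟩
  rw [hform x y hx, hform x' y' hx']
  exact hdist x y x' y' ⟨hx, hxδ.le⟩ ⟨hx', hx'δ.le⟩

/-- Let φ be bi-Lipschitz with g ∘ φ = f for nonconstant polynomials f, g, λ ≠ 0 and
β > 1 rational. The map Φ(x, t·x^β) = (λx, |λ|^β·φ(t)·x^β), defined on the right
half-plane, is Lipschitz on every strip {0 < x < δ}. -/
theorem stmt16 (p q : Polynomial ℝ) (hp : 0 < p.natDegree) (hq : 0 < q.natDegree)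
    (φ : ℝ → ℝ) (hφ : BiLipschitz φ)
    (h : ∀ t : ℝ, q.eval (φ t) = p.eval t)
    (l : ℝ) (hl : l ≠ 0) (β : ℚ) (hβ : 1 < β)
    (Φ : ℝ × ℝ → ℝ × ℝ)
    (hΦ : ∀ x t : ℝ, 0 < x →
      Φ (x, t * x ^ (β : ℝ)) = (l * x, |l| ^ (β : ℝ) * φ t * x ^ (β : ℝ))) :
    ∀ δ : ℝ, 0 < δ → ∃ C : ℝ, 0 < C ∧
      ∀ z w : ℝ × ℝ, 0 < z.1 → z.1 < δ → 0 < w.1 → w.1 < δ →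
        dist (Φ z) (Φ w) ≤ C * dist z w :=
  stmt16_general p q hq φ hφ h l β hβ Φ hΦ
end

section
/- Let F(X,Y) = a·X^d and G(X,Y) = b·X^d with a, b nonzero reals and d ≥ 1 even. Then there exists a germ of semialgebraic bi-Lipschitz homeomorphism Φ : (ℝ²,0) → (ℝ²,0) with G ∘ Φ = F if and only if a and b have the same sign. If d is odd, such a Φ always exists. -/
/-- There is a germ of semialgebraic bi-Lipschitz homeomorphism Φ : (ℝ²,0) → (ℝ²,0)
with G ∘ Φ = F: a bi-Lipschitz bijection between neighborhoods of the origin,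
fixing the origin, with semialgebraic graph, satisfying G ∘ Φ = F near 0. -/
def SemialgBiLipGermEq (F G : ℝ × ℝ → ℝ) : Prop :=
  ∃ (U V : Set (ℝ × ℝ)) (Φ : ℝ × ℝ → ℝ × ℝ),
    U ∈ nhds (0 : ℝ × ℝ) ∧ V ∈ nhds (0 : ℝ × ℝ) ∧
    Φ 0 = 0 ∧ Set.BijOn Φ U V ∧
    (∃ A B : ℝ, 0 < A ∧ 0 < B ∧ ∀ z ∈ U, ∀ w ∈ U,
      A * dist z w ≤ dist (Φ z) (Φ w) ∧ dist (Φ z) (Φ w) ≤ B * dist z w) ∧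
    IsSemialgebraicSet
      {x : Fin 4 → ℝ | (x 0, x 1) ∈ U ∧ Φ (x 0, x 1) = (x 2, x 3)} ∧
    ∀ z ∈ U, G (Φ z) = F z

/-!
A linear automorphism of `ℝ²` is bi-Lipschitz and has a semialgebraic graph, so the
rescaling `(x, y) ↦ (c x, y)` with `b c^d = a` realises the equivalence whenever such a real
`c ≠ 0` exists: always for odd `d`, and when `a / b > 0` for even `d`. Conversely, for even `d`
the sign of `b X^d` is that of `b` off the zero set, while `a X^d` takes values of the sign of
`a` at points of every neighbourhood of `0`, so `G ∘ Φ = F` forces `a` and `b` to have the same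
sign.
-/

open Filter Topology MvPolynomial

theorem isSemialgebraicSet_graph_linearMap (f : ℝ × ℝ →ₗ[ℝ] ℝ × ℝ) :
    IsSemialgebraicSet
      {x : Fin 4 → ℝ | (x 0, x 1) ∈ (Set.univ : Set (ℝ × ℝ)) ∧ f (x 0, x 1) = (x 2, x 3)} := by
  have hf : ∀ s t : ℝ, f (s, t) = s • f (1, 0) + t • f (0, 1) := fun s t => by
    rw [← map_smul, ← map_smul, ← map_add]
    simp
  have hgraph :
      {x : Fin 4 → ℝ | (x 0, x 1) ∈ (Set.univ : Set (ℝ × ℝ)) ∧ f (x 0, x 1) = (x 2, x 3)} =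
        {x | eval x (C (f (1, 0)).1 * X 0 + C (f (0, 1)).1 * X 1 - X 2) = 0} ∩
          {x | eval x (C (f (1, 0)).2 * X 0 + C (f (0, 1)).2 * X 1 - X 3) = 0} := by
    ext x
    simp only [Set.mem_univ, true_and, Set.mem_ofPred_eq, Set.mem_inter_iff, hf (x 0) (x 1)]
    simp [Prod.ext_iff, sub_eq_zero, mul_comm]
  rw [hgraph]
  exact (IsSemialgebraicSet.zero_set _).inter (IsSemialgebraicSet.zero_set _)

theorem semialgBiLipGermEq_of_continuousLinearEquiv {F G : ℝ × ℝ → ℝ}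
    (e : (ℝ × ℝ) ≃L[ℝ] ℝ × ℝ) (h : ∀ z, G (e z) = F z) : SemialgBiLipGermEq F G := by
  refine ⟨Set.univ, Set.univ, e, univ_mem, univ_mem, map_zero e,
    e.bijective.bijOn_univ, ⟨‖(e.symm : (ℝ × ℝ) →L[ℝ] ℝ × ℝ)‖⁻¹,
      ‖(e : (ℝ × ℝ) →L[ℝ] ℝ × ℝ)‖, inv_pos.mpr e.symm.norm_pos, e.norm_pos,
      fun z _ w _ => ⟨?_, e.lipschitz.dist_le_mul z w⟩⟩,
    isSemialgebraicSet_graph_linearMap e.toLinearEquiv.toLinearMap, fun z _ => h z⟩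
  rw [inv_mul_le_iff₀ e.symm.norm_pos]
  exact e.antilipschitz.le_mul_dist z w

noncomputable def scaleFst (c : ℝ) (hc : c ≠ 0) : (ℝ × ℝ) ≃L[ℝ] ℝ × ℝ :=
  (ContinuousLinearEquiv.unitsEquivAut ℝ (Units.mk0 c hc)).prodCongr
    (ContinuousLinearEquiv.refl ℝ ℝ)

@[simp]
theorem scaleFst_apply (c : ℝ) (hc : c ≠ 0) (z : ℝ × ℝ) : scaleFst c hc z = (c * z.1, z.2) := by
  simp [scaleFst, mul_comm]

theorem semialgBiLipGermEq_monomial_of_mul_pow_eq {a b c : ℝ} (hc : c ≠ 0) {d : ℕ}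
    (h : b * c ^ d = a) :
    SemialgBiLipGermEq (fun z => a * z.1 ^ d) (fun z => b * z.1 ^ d) :=
  semialgBiLipGermEq_of_continuousLinearEquiv (scaleFst c hc) fun z => by
    simp [mul_pow, ← mul_assoc, h]

theorem exists_mem_fst_ne_zero {U : Set (ℝ × ℝ)} (hU : U ∈ 𝓝 0) : ∃ z ∈ U, z.1 ≠ 0 := by
  have hline : Tendsto (fun t : ℝ => (t, (0 : ℝ))) (𝓝[≠] 0) (𝓝 0) :=
    ((continuous_id.prodMk continuous_const).tendsto' 0 0 rfl).mono_left nhdsWithin_le_nhds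
  obtain ⟨t, htU, ht⟩ := ((hline.eventually hU).and self_mem_nhdsWithin).exists
  exact ⟨(t, 0), htU, ht⟩

theorem mul_pos_of_semialgBiLipGermEq_monomial {a b : ℝ} (ha : a ≠ 0) {d : ℕ} (hd : Even d)
    (h : SemialgBiLipGermEq (fun z => a * z.1 ^ d) (fun z => b * z.1 ^ d)) : 0 < a * b := by
  obtain ⟨U, -, Φ, hU, -, -, -, -, -, hΦ⟩ := h
  obtain ⟨z, hzU, hz⟩ := exists_mem_fst_ne_zero hU
  have hvalue : b * (Φ z).1 ^ d = a * z.1 ^ d := hΦ z hzU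
  have hpos : 0 < a * b * (Φ z).1 ^ d := by
    rw [mul_assoc, hvalue, ← mul_assoc]
    exact mul_pos (mul_self_pos.mpr ha) (hd.pow_pos hz)
  exact pos_of_mul_pos_left hpos (hd.pow_nonneg _)

theorem exists_ne_zero_pow_eq_of_pos {r : ℝ} (hr : 0 < r) {d : ℕ} (hd : d ≠ 0) :
    ∃ c : ℝ, c ≠ 0 ∧ c ^ d = r :=
  ⟨r ^ (d : ℝ)⁻¹, (Real.rpow_pos_of_pos hr _).ne', Real.rpow_inv_natCast_pow hr.le hd⟩

theorem Odd.exists_ne_zero_pow_eq {r : ℝ} (hr : r ≠ 0) {d : ℕ} (hd : Odd d) :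
    ∃ c : ℝ, c ≠ 0 ∧ c ^ d = r := by
  rcases hr.lt_or_gt with hneg | hpos
  · obtain ⟨c, hc, hcd⟩ := exists_ne_zero_pow_eq_of_pos (neg_pos.mpr hneg) hd.pos.ne'
    exact ⟨-c, neg_ne_zero.mpr hc, by rw [hd.neg_pow, hcd, neg_neg]⟩
  · exact exists_ne_zero_pow_eq_of_pos hpos hd.pos.ne'

/-- For F = a·X^d and G = b·X^d (a, b ≠ 0, d ≥ 1): if d is even, F and G are
ℛ-semialgebraically Lipschitz equivalent iff a and b have the same sign; if d is
odd, they always are. -/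
theorem stmt18 (a b : ℝ) (ha : a ≠ 0) (hb : b ≠ 0) (d : ℕ) (hd : 1 ≤ d) :
    (Even d →
      (SemialgBiLipGermEq (fun z => a * z.1 ^ d) (fun z => b * z.1 ^ d) ↔
        0 < a * b)) ∧
    (Odd d →
      SemialgBiLipGermEq (fun z => a * z.1 ^ d) (fun z => b * z.1 ^ d)) := by
  have of_pow_eq : ∀ c : ℝ, c ≠ 0 → c ^ d = a / b →
      SemialgBiLipGermEq (fun z => a * z.1 ^ d) (fun z => b * z.1 ^ d) :=
    fun c hc hcd => semialgBiLipGermEq_monomial_of_mul_pow_eq hc (by rw [hcd]; field_simp)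
  refine ⟨fun hev => ⟨mul_pos_of_semialgBiLipGermEq_monomial ha hev, fun hab => ?_⟩,
    fun hodd => ?_⟩
  · have hab' : 0 < a / b := by
      rw [← mul_div_mul_right a b hb]
      exact div_pos hab (mul_self_pos.mpr hb)
    obtain ⟨c, hc, hcd⟩ := exists_ne_zero_pow_eq_of_pos (d := d) hab' (by omega)
    exact of_pow_eq c hc hcd
  · obtain ⟨c, hc, hcd⟩ := hodd.exists_ne_zero_pow_eq (div_ne_zero ha hb)
    exact of_pow_eq c hc hcd
end

section
/- For real parameters λ, μ > 0, define f_λ(t) = t³ − 3λt + 1 and f_μ(t) = t³ − 3μt + 1. If f_λ and f_μ are Lipschitz equivalent, then λ = μ. -/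
lemma cubic_sq_eq_of_exactly_two_roots {a b v t₁ t₂ : ℝ} (hne : t₁ ≠ t₂)
    (hroots : ∀ t, t ^ 3 - 3 * a * t + b = v ↔ t = t₁ ∨ t = t₂) :
    (b - v) ^ 2 = 4 * a ^ 3 := by
  have h₁ := (hroots t₁).2 (Or.inl rfl)
  have h₂ := (hroots t₂).2 (Or.inr rfl)
  have hsum : t₁ ^ 2 + t₁ * t₂ + t₂ ^ 2 = 3 * a := by
    have hfac : (t₁ - t₂) * (t₁ ^ 2 + t₁ * t₂ + t₂ ^ 2 - 3 * a) = 0 := by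
      linear_combination h₁ - h₂
    linarith [(mul_eq_zero.1 hfac).resolve_left (sub_ne_zero.2 hne)]
  -- the three roots of `t³ - 3at + (b - v)` sum to zero, so `-(t₁ + t₂)` is a root too
  have hthird : (-(t₁ + t₂)) ^ 3 - 3 * a * (-(t₁ + t₂)) + b = v := by
    linear_combination h₁ - (2 * t₁ + t₂) * hsum
  rcases (hroots _).1 hthird with h | h
  · obtain rfl : t₂ = -2 * t₁ := by linarith
    have ha : a = t₁ ^ 2 := by linear_combination (-1 / 3 : ℝ) * hsum
    have hbv : b - v = 2 * t₁ ^ 3 := by linear_combination h₁ + 3 * t₁ * ha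
    rw [hbv, ha]; ring
  · obtain rfl : t₁ = -2 * t₂ := by linarith
    have ha : a = t₂ ^ 2 := by linear_combination (-1 / 3 : ℝ) * hsum
    have hbv : b - v = 2 * t₂ ^ 3 := by linear_combination h₂ + 3 * t₂ * ha
    rw [hbv, ha]; ring

lemma cubic_eq_critical_value_iff {a b m : ℝ} (hm : m ^ 2 = a) (x : ℝ) :
    x ^ 3 - 3 * a * x + b = b + 2 * m ^ 3 ↔ x = -m ∨ x = 2 * m := by
  subst hm
  have hfac : x ^ 3 - 3 * m ^ 2 * x + b - (b + 2 * m ^ 3) = (x + m) ^ 2 * (x - 2 * m) := by ring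
  rw [← sub_eq_zero, hfac, mul_eq_zero, sq_eq_zero_iff, add_eq_zero_iff_eq_neg, sub_eq_zero]

lemma exists_two_roots_of_comp_eq_mul {α β K : Type*} [Field K] {f : α → K} {g : β → K}
    {φ : α → β} (hφ : φ.Bijective) {c : K} (hc : c ≠ 0) (hfg : ∀ t, g (φ t) = c * f t)
    {w : K} {x₁ x₂ : β} (hne : x₁ ≠ x₂) (hroots : ∀ x, g x = w ↔ x = x₁ ∨ x = x₂) :
    ∃ t₁ t₂, t₁ ≠ t₂ ∧ ∀ t, f t = w / c ↔ t = t₁ ∨ t = t₂ := by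
  set e := Equiv.ofBijective φ hφ
  refine ⟨e.symm x₁, e.symm x₂, e.symm.injective.ne hne, fun t => ?_⟩
  rw [eq_div_iff hc, mul_comm, ← hfg, hroots, e.eq_symm_apply, e.eq_symm_apply]
  rfl

theorem stmt19_general (lam mu : ℝ) (hmu : 0 < mu)
    (φ : ℝ → ℝ) (hφ : BiLipschitz φ) (c : ℝ) (hc : 0 < c)
    (h : ∀ t : ℝ, (φ t) ^ 3 - 3 * mu * (φ t) + 1 = c * (t ^ 3 - 3 * lam * t + 1)) :
    lam = mu := by
  set m := √mu
  have hm : m ^ 2 = mu := Real.sq_sqrt hmu.le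
  have critical : ∀ k : ℝ, k ^ 2 = mu → k ≠ 0 →
      (1 - (1 + 2 * k ^ 3) / c) ^ 2 = 4 * lam ^ 3 := fun k hk hk0 => by
    obtain ⟨t₁, t₂, hne, hroots⟩ := exists_two_roots_of_comp_eq_mul hφ.1 hc.ne' h
      (by contrapose! hk0; linarith) (cubic_eq_critical_value_iff hk)
    exact cubic_sq_eq_of_exactly_two_roots hne hroots
  have hplus := critical m hm (by positivity)
  have hminus := critical (-m) (by rw [neg_sq, hm]) (neg_ne_zero.2 (by positivity))
  have hc1 : c = 1 := by
    have hdiff : 8 * m ^ 3 * (c - 1) = 0 := by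
      field_simp at hplus hminus
      linear_combination hminus - hplus
    linarith [(mul_eq_zero.1 hdiff).resolve_left (by positivity)]
  have hcube : lam ^ 3 = mu ^ 3 := by
    rw [hc1, div_one] at hplus
    linear_combination (-1 / 4 : ℝ) * hplus + (mu ^ 2 + mu * m ^ 2 + m ^ 4) * hm
  exact (Odd.pow_inj (by decide)).1 hcube

/-- For λ, μ > 0, if f_λ(t) = t³ − 3λt + 1 and f_μ(t) = t³ − 3μt + 1 are Lipschitz
equivalent, then λ = μ. -/
theorem stmt19 (lam mu : ℝ) (hlam : 0 < lam) (hmu : 0 < mu)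
    (φ : ℝ → ℝ) (hφ : BiLipschitz φ) (c : ℝ) (hc : 0 < c)
    (h : ∀ t : ℝ, (φ t) ^ 3 - 3 * mu * (φ t) + 1 = c * (t ^ 3 - 3 * lam * t + 1)) :
    lam = mu :=
  stmt19_general lam mu hmu φ hφ c hc h
end
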